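/- arXiv:2503.01432 — 11 statements merged into one kernel-verified Lean document; each statement's English description precedes it below -/
import Mathlib

section
/- Let E be a finite-dimensional real inner product space, C ⊆ E a convex set, f : E → ℝ convex and twice continuously differentiable on C, R : E → ℝ convex, F = f + R, and x* ∈ C a minimizer of F over C. Suppose there are 0 < α ≤ β such that α‖h‖² ≤ ⟨∇²f(u)h, h⟩ ≤ β‖h‖² for all u ∈ C and h ∈ E. Let x ∈ C, η > 0, C_A ≥ 0, and let v ∈ C satisfy φ_{x,η}(v) ≤ φ_{x,η}(x*) + η²·C_A·‖x − x*‖³. Then ‖v − x*‖ ≤ (β/α)(3 + 2/η)·‖x − x*‖ + (η·C_A/α)·‖x − x*‖². -/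
/-!
Write `d = v - x*` and `e = x - x*`. Expanding the model,
`φ v - φ x* ≥ ⟪∇f x, d⟫ + R v - R x* + (η/2)(α ‖d‖² - 2β ‖e‖ ‖d‖)`.
First-order optimality of `x*` gives `R v - R x* ≥ -⟪∇f x*, d⟫`, and integrating the Hessian
along `[x, x*]` gives `⟪∇f x* - ∇f x, d⟫ ≤ β ‖e‖ ‖d‖`. With the hypothesis on `v` this is a
quadratic inequality in `‖d‖`, solved by comparing `‖d‖` with `3 ‖e‖`.

Only `∇f` is known to be differentiable on `C`; `f` is differentiable wherever `∇f ≠ 0` (the junk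
value of `gradient` is `0`). The Hessian lower bound makes the zeros of `∇f` isolated, and away
from them the Hessian is symmetric, which suffices for both steps.
-/

open RealInnerProductSpace Set Filter Topology

theorem sub_le_mul_sub_of_hasDerivAt_le_of_ne {g g' : ℝ → ℝ} {a b c K : ℝ} (hab : a ≤ b)
    (hg : ∀ r ∈ Icc a b, HasDerivAt g (g' r) r) (hK : ∀ r ∈ Icc a b, r ≠ c → g' r ≤ K) :
    g b - g a ≤ K * (b - a) := by
  have piece : ∀ a' b', a ≤ a' → a' ≤ b' → b' ≤ b → (∀ r ∈ Ioo a' b', r ≠ c) →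
      g b' - g a' ≤ K * (b' - a') := by
    intro a' b' ha' hab' hb' hc
    have hsub : Icc a' b' ⊆ Icc a b := Icc_subset_Icc ha' hb'
    refine (convex_Icc a' b').image_sub_le_mul_sub_of_deriv_le
      (fun r hr => (hg r (hsub hr)).continuousAt.continuousWithinAt) (fun r hr => ?_)
      (fun r hr => ?_) a' (left_mem_Icc.2 hab') b' (right_mem_Icc.2 hab') hab' <;>
      rw [interior_Icc] at hr
    · exact (hg r (hsub (Ioo_subset_Icc_self hr))).differentiableAt.differentiableWithinAt
    · rw [(hg r (hsub (Ioo_subset_Icc_self hr))).deriv]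
      exact hK r (hsub (Ioo_subset_Icc_self hr)) (hc r hr)
  by_cases hc : c ∈ Ioo a b
  · have h₁ := piece a c le_rfl hc.1.le hc.2.le fun r hr => hr.2.ne
    have h₂ := piece c b hc.1.le hc.2.le le_rfl fun r hr => hr.1.ne'
    linarith
  · exact piece a b le_rfl hab le_rfl fun r hr hrc => hc (hrc ▸ hr)

theorem le_linear_add_quadratic_of_sq_le_cubic {α β η c B D : ℝ} (hα : 0 < α) (hαβ : α ≤ β)
    (hη : 0 < η) (hc : 0 ≤ c) (hB : 0 ≤ B)
    (h : η / 2 * (α * D ^ 2 - 2 * β * (B * D)) ≤ η ^ 2 * c * B ^ 3 + β * (B * D)) :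
    D ≤ β / α * (3 + 2 / η) * B + η * c / α * B ^ 2 := by
  have hβ : 0 < β := hα.trans_le hαβ
  suffices hαD : η * (α * D) ≤ η * (β * (3 + 2 / η) * B + η * c * B ^ 2) by
    rw [show β / α * (3 + 2 / η) * B + η * c / α * B ^ 2
      = (β * (3 + 2 / η) * B + η * c * B ^ 2) / α by ring, le_div_iff₀ hα]
    linarith [le_of_mul_le_mul_left hαD hη]
  have hexpand : η * (β * (3 + 2 / η) * B + η * c * B ^ 2)
      = 3 * η * β * B + 2 * β * B + η ^ 2 * c * B ^ 2 := by
    field_simp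
  rw [hexpand]
  rcases le_or_gt D (3 * B) with hD3 | hD3
  · nlinarith [mul_le_mul_of_nonneg_left hD3 (mul_nonneg hη.le hα.le),
      mul_nonneg (mul_nonneg hη.le hB) (sub_nonneg.2 hαβ), mul_nonneg hβ.le hB,
      mul_nonneg (sq_nonneg η) (mul_nonneg hc (sq_nonneg B))]
  · have hB3 : B ^ 3 ≤ B ^ 2 * D / 3 := by
      nlinarith [mul_le_mul_of_nonneg_left hD3.le (sq_nonneg B)]
    have hdiv : η / 2 * α * D ≤ η ^ 2 * c * B ^ 2 / 3 + (1 + η) * β * B := by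
      refine le_of_mul_le_mul_right ?_ (hB.trans_lt (by linarith) : 0 < D)
      nlinarith [mul_le_mul_of_nonneg_left hB3 (mul_nonneg (sq_nonneg η) hc)]
    nlinarith [mul_nonneg hη.le (mul_nonneg hβ.le hB),
      mul_nonneg (sq_nonneg η) (mul_nonneg hc (sq_nonneg B))]

section

variable {E : Type*} [NormedAddCommGroup E] [InnerProductSpace ℝ E]

theorem abs_inner_add_inner_le_of_inner_self_le (H : E →L[ℝ] E) {β : ℝ} (hβ : 0 ≤ β)
    (hH : ∀ h, 0 ≤ ⟪H h, h⟫ ∧ ⟪H h, h⟫ ≤ β * ‖h‖ ^ 2) (w z : E) :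
    |⟪H w, z⟫ + ⟪H z, w⟫| ≤ 2 * β * (‖w‖ * ‖z‖) := by
  -- `t ↦ ⟪H (w + t • z), w + t • z⟫` is a nonnegative quadratic polynomial.
  have hquad : ∀ t : ℝ, 0 ≤ ⟪H z, z⟫ * (t * t) + (⟪H w, z⟫ + ⟪H z, w⟫) * t + ⟪H w, w⟫ := by
    intro t
    have := (hH (w + t • z)).1
    simp only [map_add, map_smul, inner_add_left, inner_add_right, inner_smul_left,
      inner_smul_right, RCLike.conj_to_real] at this
    linarith
  have hdisc := discrim_le_zero hquad
  rw [discrim] at hdisc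
  obtain ⟨hw0, hwβ⟩ := hH w
  obtain ⟨hz0, hzβ⟩ := hH z
  apply abs_le_of_sq_le_sq _ (by positivity)
  calc (⟪H w, z⟫ + ⟪H z, w⟫) ^ 2 ≤ 4 * ⟪H z, z⟫ * ⟪H w, w⟫ := by linarith
    _ ≤ 4 * (β * ‖z‖ ^ 2) * (β * ‖w‖ ^ 2) := by gcongr
    _ = (2 * β * (‖w‖ * ‖z‖)) ^ 2 := by ring

theorem inner_add_quadratic_sub_ge (H : E →L[ℝ] E) {α β η : ℝ} (hα : 0 ≤ α) (hαβ : α ≤ β)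
    (hη : 0 ≤ η)
    (hH : ∀ h, α * ‖h‖ ^ 2 ≤ ⟪H h, h⟫ ∧ ⟪H h, h⟫ ≤ β * ‖h‖ ^ 2) (g x y z : E) :
    ⟪g, y - z⟫ + η / 2 * (α * ‖y - z‖ ^ 2 - 2 * β * (‖x - z‖ * ‖y - z‖))
      ≤ ⟪g, y - x⟫ + η / 2 * ⟪H (y - x), y - x⟫ - (⟪g, z - x⟫ + η / 2 * ⟪H (z - x), z - x⟫) := by
  have hyx : y - x = (y - z) + (z - x) := by abel
  have hcross := abs_inner_add_inner_le_of_inner_self_le H (hα.trans hαβ)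
    (fun h => ⟨(by positivity : 0 ≤ α * ‖h‖ ^ 2).trans (hH h).1, (hH h).2⟩) (y - z) (z - x)
  rw [norm_sub_rev z x] at hcross
  have hquad : ⟪H (y - x), y - x⟫ = ⟪H (y - z), y - z⟫
      + (⟪H (y - z), z - x⟫ + ⟪H (z - x), y - z⟫) + ⟪H (z - x), z - x⟫ := by
    rw [hyx]
    simp only [map_add, inner_add_left, inner_add_right]
    ring
  have hlin : ⟪g, y - x⟫ = ⟪g, y - z⟫ + ⟪g, z - x⟫ := by rw [hyx, inner_add_right]
  rw [hquad, hlin]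
  have h₁ := mul_le_mul_of_nonneg_left (hH (y - z)).1 (by positivity : (0 : ℝ) ≤ η / 2)
  have h₂ := mul_le_mul_of_nonneg_left (abs_le.1 hcross).1 (by positivity : (0 : ℝ) ≤ η / 2)
  linarith

theorem sub_le_of_isMinOn_add {f R : E → ℝ} {C : Set E} (hR : ConvexOn ℝ C R) {a v : E}
    (ha : a ∈ C) (hv : v ∈ C) (hmin : IsMinOn (f + R) C a) {D : ℝ}
    (hD : HasDerivWithinAt (fun r : ℝ => f (a + r • (v - a))) D (Ici 0) 0) :
    R a - R v ≤ D := by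
  set g := fun r : ℝ => f (a + r • (v - a)) + r * (R v - R a)
  have hg_min : IsMinOn g (Icc 0 1) 0 := by
    intro r hr
    have hRr := hR.2 ha hv (sub_nonneg.2 hr.2) hr.1 (sub_add_cancel 1 r)
    rw [show (1 - r) • a + r • v = a + r • (v - a) by module, smul_eq_mul, smul_eq_mul] at hRr
    have := isMinOn_iff.1 hmin _ (hR.1.add_smul_sub_mem ha hv hr)
    simp only [Pi.add_apply] at this
    show f (a + (0 : ℝ) • (v - a)) + 0 * (R v - R a) ≤ f (a + r • (v - a)) + r * (R v - R a)
    rw [zero_smul, add_zero, zero_mul, add_zero]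
    linarith
  have hlin : HasDerivWithinAt (fun r : ℝ => r * (R v - R a)) (R v - R a) (Icc 0 1) 0 := by
    simpa using ((hasDerivAt_id (0 : ℝ)).mul_const (R v - R a)).hasDerivWithinAt
  have hg : HasDerivWithinAt g (D + (R v - R a)) (Icc 0 1) 0 :=
    (hD.mono Icc_subset_Ici_self).add hlin
  have h1 : (1 : ℝ) ∈ posTangentConeAt (Icc 0 1) 0 :=
    mem_posTangentConeAt_of_segment_subset (by simp [segment_eq_Icc])
  have := hg_min.localize.hasFDerivWithinAt_nonneg hg.hasFDerivWithinAt h1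
  rw [ContinuousLinearMap.toSpanSingleton_apply, one_smul] at this
  linarith

variable [CompleteSpace E] {f : E → ℝ} {u : E}

theorem differentiableAt_of_gradient_ne_zero (h : gradient f u ≠ 0) : DifferentiableAt ℝ f u := by
  contrapose! h
  simp [gradient, fderiv_zero_of_not_differentiableAt h]

theorem inner_fderiv_gradient_comm (hG : DifferentiableAt ℝ (gradient f) u)
    (hne : gradient f u ≠ 0) (w z : E) :
    ⟪fderiv ℝ (gradient f) u w, z⟫ = ⟪fderiv ℝ (gradient f) u z, w⟫ := by
  have hf : ∀ᶠ y in 𝓝 u, HasFDerivAt f (InnerProductSpace.toDual ℝ E (gradient f y)) y := by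
    filter_upwards [hG.continuousAt.eventually_ne hne] with y hy
    exact (differentiableAt_of_gradient_ne_zero hy).hasGradientAt.hasFDerivAt
  let T : E →L[ℝ] E →L[ℝ] ℝ :=
    ((InnerProductSpace.toDual ℝ E).toContinuousLinearEquiv : E ≃L[ℝ] _).toContinuousLinearMap
  have hT : HasFDerivAt (fun y => InnerProductSpace.toDual ℝ E (gradient f y))
      (T.comp (fderiv ℝ (gradient f) u)) u :=
    T.hasFDerivAt.comp u hG.hasFDerivAt
  simpa [T] using second_derivative_symmetric_of_eventually hf hT w z

theorem differentiableAt_gradient_of_le_inner_fderiv [Nontrivial E] {α : ℝ} (hα : 0 < α)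
    (hH : ∀ h, α * ‖h‖ ^ 2 ≤ ⟪fderiv ℝ (gradient f) u h, h⟫) :
    DifferentiableAt ℝ (gradient f) u := by
  by_contra hG
  obtain ⟨h, hh⟩ := exists_ne (0 : E)
  have := hH h
  rw [fderiv_zero_of_not_differentiableAt hG] at this
  simp only [zero_apply, inner_zero_left] at this
  exact this.not_gt (by positivity)

theorem eventually_nhdsNE_gradient_ne_zero {α : ℝ} (hα : 0 < α)
    (hG : DifferentiableAt ℝ (gradient f) u)
    (hH : ∀ h, α * ‖h‖ ^ 2 ≤ ⟪fderiv ℝ (gradient f) u h, h⟫) :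
    ∀ᶠ y in 𝓝[≠] u, gradient f y ≠ 0 := by
  by_cases h0 : gradient f u = 0
  · have hanti := (fderiv ℝ (gradient f) u).antilipschitz_of_forall_le_inner_map
      (c := ⟨α, hα.le⟩) hα fun h => by
        change ‖h‖ ^ 2 * α ≤ _
        rw [mul_comm, Real.norm_eq_abs]
        exact (hH h).trans (le_abs_self _)
    exact hG.hasFDerivAt.eventually_ne ⟨_, hanti⟩
  · exact nhdsWithin_le_nhds (hG.continuousAt.eventually_ne h0)

theorem hasDerivWithinAt_Ici_inner_gradient {α : ℝ} (hα : 0 < α)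
    (hG : DifferentiableAt ℝ (gradient f) u)
    (hH : ∀ h, α * ‖h‖ ^ 2 ≤ ⟪fderiv ℝ (gradient f) u h, h⟫) {d : E} (hd : d ≠ 0)
    (hcont : ContinuousWithinAt (fun r : ℝ => f (u + r • d)) (Ioi 0) 0) :
    HasDerivWithinAt (fun r : ℝ => f (u + r • d)) ⟪gradient f u, d⟫ (Ici 0) 0 := by
  have hline : Continuous (fun r : ℝ => u + r • d) := by fun_prop
  have hline_ne : Tendsto (fun r : ℝ => u + r • d) (𝓝[>] 0) (𝓝[≠] u) := by
    refine tendsto_nhdsWithin_of_tendsto_nhds_of_eventually_within _ ?_ ?_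
    · simpa using (hline.tendsto 0).mono_left nhdsWithin_le_nhds
    · filter_upwards [self_mem_nhdsWithin] with r hr
      simpa [hd] using hr.ne'
  set s := {r : ℝ | 0 < r ∧ gradient f (u + r • d) ≠ 0}
  have hs : s ∈ 𝓝[>] 0 :=
    inter_mem self_mem_nhdsWithin
      (hline_ne.eventually (eventually_nhdsNE_gradient_ne_zero hα hG hH))
  have hderiv : ∀ r ∈ s,
      HasDerivAt (fun r : ℝ => f (u + r • d)) ⟪gradient f (u + r • d), d⟫ r := by
    intro r hr
    have hpath : HasDerivAt (fun r : ℝ => u + r • d) d r := by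
      simpa using ((hasDerivAt_id r).smul_const d).const_add u
    have := (differentiableAt_of_gradient_ne_zero hr.2).hasGradientAt.hasFDerivAt.comp_hasDerivAt
      r hpath
    rwa [InnerProductSpace.toDual_apply_apply] at this
  refine hasDerivWithinAt_Ici_of_tendsto_deriv
    (fun r hr => (hderiv r hr).differentiableAt.differentiableWithinAt)
    (hcont.mono fun r hr => hr.1) hs ?_
  have hlim : ContinuousAt (fun r : ℝ => ⟪gradient f (u + r • d), d⟫) 0 :=
    (hG.continuousAt.comp_of_eq hline.continuousAt (by simp)).inner continuousAt_const
  have hlim' := hlim.tendsto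
  simp only [zero_smul, add_zero] at hlim'
  refine (hlim'.mono_left nhdsWithin_le_nhds).congr' ?_
  filter_upwards [hs] with r hr using (hderiv r hr).deriv.symm

theorem inner_gradient_sub_gradient_le {C : Set E} (hC : Convex ℝ C) {α β : ℝ} (hα : 0 < α)
    (hαβ : α ≤ β) (hG : ∀ u ∈ C, DifferentiableAt ℝ (gradient f) u)
    (hHess : ∀ u ∈ C, ∀ h : E, α * ‖h‖ ^ 2 ≤ ⟪fderiv ℝ (gradient f) u h, h⟫ ∧
      ⟪fderiv ℝ (gradient f) u h, h⟫ ≤ β * ‖h‖ ^ 2)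
    {x y : E} (hx : x ∈ C) (hy : y ∈ C) (w : E) :
    ⟪gradient f y - gradient f x, w⟫ ≤ β * (‖y - x‖ * ‖w‖) := by
  rcases eq_or_ne y x with rfl | hyx
  · simp
  set c : ℝ → E := fun r => x + r • (y - x)
  have hc : ∀ r ∈ Icc (0 : ℝ) 1, c r ∈ C := fun r hr => hC.add_smul_sub_mem hx hy hr
  have hderiv : ∀ z : E, ∀ r ∈ Icc (0 : ℝ) 1, HasDerivAt (fun r => ⟪gradient f (c r), z⟫)
      ⟪fderiv ℝ (gradient f) (c r) (y - x), z⟫ r := by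
    intro z r hr
    have hpath : HasDerivAt c (y - x) r :=
      (((hasDerivAt_id' r).smul_const (y - x)).const_add x).congr_deriv (one_smul ℝ _)
    simpa using ((hG _ (hc r hr)).hasFDerivAt.comp_hasDerivAt r hpath).inner ℝ
      (hasDerivAt_const r z)
  -- `r ↦ ⟪∇f (c r), y - x⟫` is strictly increasing, so `∇f` vanishes at most once on the segment.
  have hmono : StrictMonoOn (fun r => ⟪gradient f (c r), y - x⟫) (Icc 0 1) := by
    refine strictMonoOn_of_deriv_pos (convex_Icc 0 1)
      (fun r hr => (hderiv _ r hr).continuousAt.continuousWithinAt) fun r hr => ?_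
    rw [interior_Icc] at hr
    rw [(hderiv _ r (Ioo_subset_Icc_self hr)).deriv]
    have : 0 < ‖y - x‖ := norm_pos_iff.2 (sub_ne_zero.2 hyx)
    exact lt_of_lt_of_le (by positivity) (hHess _ (hc r (Ioo_subset_Icc_self hr)) (y - x)).1
  obtain ⟨t₀, ht₀⟩ : ∃ t₀, ∀ r ∈ Icc (0 : ℝ) 1, gradient f (c r) = 0 → r = t₀ := by
    by_cases hz : ∃ t₀ ∈ Icc (0 : ℝ) 1, gradient f (c t₀) = 0
    · obtain ⟨t₀, ht₀, h₀⟩ := hz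
      exact ⟨t₀, fun r hr hr₀ => hmono.injOn hr ht₀ (by simp only [hr₀, h₀])⟩
    · exact ⟨0, fun r hr hr₀ => (hz ⟨r, hr, hr₀⟩).elim⟩
  have hbound : ∀ r ∈ Icc (0 : ℝ) 1, r ≠ t₀ →
      ⟪fderiv ℝ (gradient f) (c r) (y - x), w⟫ ≤ β * (‖y - x‖ * ‖w‖) := by
    intro r hr hrt
    have hsymm := inner_fderiv_gradient_comm (hG _ (hc r hr)) (fun h₀ => hrt (ht₀ r hr h₀))
      (y - x) w
    have hbil := abs_inner_add_inner_le_of_inner_self_le _ (hα.le.trans hαβ)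
      (fun h => ⟨(by positivity : 0 ≤ α * ‖h‖ ^ 2).trans (hHess _ (hc r hr) h).1,
        (hHess _ (hc r hr) h).2⟩) (y - x) w
    rw [← hsymm] at hbil
    linarith [le_abs_self (⟪fderiv ℝ (gradient f) (c r) (y - x), w⟫ +
      ⟪fderiv ℝ (gradient f) (c r) (y - x), w⟫)]
  simpa [c, inner_sub_left] using
    sub_le_mul_sub_of_hasDerivAt_le_of_ne zero_le_one (hderiv w) hbound

end

theorem stmt_1_general
    {E : Type*} [NormedAddCommGroup E] [InnerProductSpace ℝ E] [FiniteDimensional ℝ E]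
    (C : Set E) (hC : Convex ℝ C)
    (f R : E → ℝ)
    (hf2 : ContDiffOn ℝ 2 f C)
    (hR : ConvexOn ℝ Set.univ R)
    (F : E → ℝ) (hF : ∀ u, F u = f u + R u)
    (xs : E) (hxs : xs ∈ C) (hmin : ∀ u ∈ C, F xs ≤ F u)
    (α β : ℝ) (hα : 0 < α) (hαβ : α ≤ β)
    (hHess : ∀ u ∈ C, ∀ h : E,
      α * ‖h‖ ^ 2 ≤ ⟪(fderiv ℝ (gradient f) u) h, h⟫ ∧
      ⟪(fderiv ℝ (gradient f) u) h, h⟫ ≤ β * ‖h‖ ^ 2)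
    (x : E) (hx : x ∈ C) (η : ℝ) (hη : 0 < η) (CA : ℝ) (hCA : 0 ≤ CA)
    (φ : E → ℝ)
    (hφ : ∀ w, φ w =
      ⟪gradient f x, w - x⟫
        + (η / 2) * ⟪(fderiv ℝ (gradient f) x) (w - x), w - x⟫ + R w)
    (v : E) (hv : v ∈ C)
    (hvp : φ v ≤ φ xs + η ^ 2 * CA * ‖x - xs‖ ^ 3) :
    ‖v - xs‖ ≤ (β / α) * (3 + 2 / η) * ‖x - xs‖ + (η * CA / α) * ‖x - xs‖ ^ 2 := by
  rcases eq_or_ne v xs with rfl | hvxs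
  · simp only [sub_self, norm_zero]
    have : 0 ≤ β := hα.le.trans hαβ
    positivity
  have := nontrivial_of_ne v xs hvxs
  have hG : ∀ u ∈ C, DifferentiableAt ℝ (gradient f) u := fun u hu =>
    differentiableAt_gradient_of_le_inner_fderiv hα fun h => (hHess u hu h).1
  have hcont : ContinuousWithinAt (fun r : ℝ => f (xs + r • (v - xs))) (Ioi 0) 0 :=
    ((hf2.continuousOn.comp (by fun_prop : Continuous fun r : ℝ => xs + r • (v - xs)).continuousOn
      fun r hr => hC.add_smul_sub_mem hxs hv hr) 0 ⟨le_rfl, zero_le_one⟩).mono_of_mem_nhdsWithin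
      (Icc_mem_nhdsGT one_pos)
  have hopt : R xs - R v ≤ ⟪gradient f xs, v - xs⟫ :=
    sub_le_of_isMinOn_add (hR.subset (subset_univ C) hC) hxs hv
      (isMinOn_iff.2 fun u hu => by simpa only [Pi.add_apply, ← hF] using hmin u hu)
      (hasDerivWithinAt_Ici_inner_gradient hα (hG xs hxs) (fun h => (hHess xs hxs h).1)
        (sub_ne_zero.2 hvxs) hcont)
  have hlip := inner_gradient_sub_gradient_le hC hα hαβ hG hHess hx hxs (v - xs)
  rw [norm_sub_rev xs x, inner_sub_left] at hlip
  have hmodel := inner_add_quadratic_sub_ge _ hα.le hαβ hη.le (hHess x hx) (gradient f x) x v xs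
  rw [hφ, hφ] at hvp
  refine le_linear_add_quadratic_of_sq_le_cubic hα hαβ hη hCA (norm_nonneg _) ?_
  linarith

/-- Lemma bounding the distance of a WPNO output from `x*`:
if `φ_{x,η}(v) ≤ φ_{x,η}(x*) + η²·C_A·‖x − x*‖³`, then
`‖v − x*‖ ≤ (β/α)(3 + 2/η)·‖x − x*‖ + (η·C_A/α)·‖x − x*‖²`. -/
theorem stmt_1
    {E : Type*} [NormedAddCommGroup E] [InnerProductSpace ℝ E] [FiniteDimensional ℝ E]
    (C : Set E) (hC : Convex ℝ C)
    (f R : E → ℝ)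
    (hfconv : ConvexOn ℝ C f)
    (hf2 : ContDiffOn ℝ 2 f C)
    (hR : ConvexOn ℝ Set.univ R)
    (F : E → ℝ) (hF : ∀ u, F u = f u + R u)
    (xs : E) (hxs : xs ∈ C) (hmin : ∀ u ∈ C, F xs ≤ F u)
    (α β : ℝ) (hα : 0 < α) (hαβ : α ≤ β)
    (hHess : ∀ u ∈ C, ∀ h : E,
      α * ‖h‖ ^ 2 ≤ ⟪(fderiv ℝ (gradient f) u) h, h⟫ ∧
      ⟪(fderiv ℝ (gradient f) u) h, h⟫ ≤ β * ‖h‖ ^ 2)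
    (x : E) (hx : x ∈ C) (η : ℝ) (hη : 0 < η) (CA : ℝ) (hCA : 0 ≤ CA)
    (φ : E → ℝ)
    (hφ : ∀ w, φ w =
      ⟪gradient f x, w - x⟫
        + (η / 2) * ⟪(fderiv ℝ (gradient f) x) (w - x), w - x⟫ + R w)
    (v : E) (hv : v ∈ C)
    (hvp : φ v ≤ φ xs + η ^ 2 * CA * ‖x - xs‖ ^ 3) :
    ‖v - xs‖ ≤ (β / α) * (3 + 2 / η) * ‖x - xs‖ + (η * CA / α) * ‖x - xs‖ ^ 2 :=
  stmt_1_general C hC f R hf2 hR F hF xs hxs hmin α β hα hαβ hHess x hx η hη CA hCA φ hφ v hv hvp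
end

section
/- Let E be a finite-dimensional real inner product space, f : E → ℝ convex and twice continuously differentiable on E with β₂-Lipschitz Hessian, R : E → ℝ convex, F = f + R, and x* a minimizer of F with F* = F(x*). Suppose there are 0 < α ≤ β such that α‖h‖² ≤ ⟨∇²f(u)h, h⟩ ≤ β‖h‖² for all u ∈ {u : F(u) ≤ F(x₁)} and h ∈ E. Let C_A ≥ 0 and let (x_t)_{t≥1} be a sequence with x₁ ∈ E such that for every t ≥ 1 there exists v_t with φ_{x_t,1}(v_t) ≤ φ_{x_t,1}(x*) + C_A·‖x_t − x*‖³, and x_{t+1} = v_t if F(v_t) < F(x_t) while x_{t+1} = x_t otherwise. Then for all t ≥ 1: F(x_{t+1}) − F* ≤ (2√2/α^{3/2})·(5β₂/6 + C_A + 1000β₂β³/(3α³))·(F(x_t) − F*)^{3/2} + (64β₂C_A³/(3α⁶))·(F(x_t) − F*)³. -/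
/-!
The sublevel set `S = {F ≤ F x₀}` is convex and contains `x*` and every iterate, since an update
never increases `F`. On `S` the Hessian lies between `α` and `β`; together with the optimality
condition `R x* - ⟪∇f x*, w - x*⟫ ≤ R w` this gives quadratic growth
`α ‖x - x*‖² ≤ 2 (F x - F*)`, and `∇f` is `β`-Lipschitz on `S`.

Put `d = ‖x_t - x*‖` and `r = ‖v_t - x_t‖`. Comparing the model at `v_t` and at `x*`, using the
optimality condition at `v_t`, bounds the step: `α r² / 2 ≤ β d (d + r) + β d² / 2 + C_A d³`. The
model is the second-order Taylor expansion of `F` at `x_t`, with error at most `β₂ ‖·‖³ / 6`, so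
`F x_{t+1} - F* ≤ (β₂ / 6 + C_A) d³ + β₂ r³ / 6`. Eliminating `r`, then `d` by quadratic growth,
gives the rate.
-/

open RealInnerProductSpace InnerProductSpace Set

theorem sub_sub_le_of_deriv2_le {g g' g'' : ℝ → ℝ} {c L : ℝ}
    (hg : ∀ τ ∈ Icc (0 : ℝ) 1, HasDerivAt g (g' τ) τ)
    (hg' : ∀ τ ∈ Icc (0 : ℝ) 1, HasDerivAt g' (g'' τ) τ)
    (hg'' : ∀ τ ∈ Icc (0 : ℝ) 1, g'' τ ≤ c + L * τ) :
    g 1 - g 0 - g' 0 ≤ c / 2 + L / 6 := by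
  have antitone {u u' : ℝ → ℝ} (hu : ∀ τ ∈ Icc (0 : ℝ) 1, HasDerivAt u (u' τ) τ)
      (hu' : ∀ τ ∈ Icc (0 : ℝ) 1, u' τ ≤ 0) : AntitoneOn u (Icc 0 1) :=
    antitoneOn_of_hasDerivWithinAt_nonpos (convex_Icc 0 1)
      (fun τ hτ ↦ (hu τ hτ).continuousAt.continuousWithinAt)
      (fun τ hτ ↦ (hu τ (interior_subset hτ)).hasDerivWithinAt)
      (fun τ hτ ↦ hu' τ (interior_subset hτ))
  have h0 : (0 : ℝ) ∈ Icc (0 : ℝ) 1 := left_mem_Icc.2 zero_le_one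
  have slope : ∀ τ ∈ Icc (0 : ℝ) 1, g' τ - g' 0 - c * τ - L * τ ^ 2 / 2 ≤ 0 := by
    have hanti := antitone (u := fun τ ↦ g' τ - g' 0 - c * τ - L * τ ^ 2 / 2)
      (u' := fun τ ↦ g'' τ - c - L * τ)
      (fun τ hτ ↦ ((((hg' τ hτ).sub_const (g' 0)).sub ((hasDerivAt_id τ).const_mul c)).sub
        (((hasDerivAt_pow 2 τ).const_mul L).div_const 2)).congr_deriv (by push_cast; ring))
      (fun τ hτ ↦ by linarith [hg'' τ hτ])
    exact fun τ hτ ↦ (hanti h0 hτ hτ.1).trans_eq (by simp)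
  have hanti := antitone (u := fun τ ↦ g τ - g 0 - g' 0 * τ - c * τ ^ 2 / 2 - L * τ ^ 3 / 6)
    (u' := fun τ ↦ g' τ - g' 0 - c * τ - L * τ ^ 2 / 2)
    (fun τ hτ ↦ (((((hg τ hτ).sub_const (g 0)).sub ((hasDerivAt_id τ).const_mul (g' 0))).sub
      (((hasDerivAt_pow 2 τ).const_mul c).div_const 2)).sub
        (((hasDerivAt_pow 3 τ).const_mul L).div_const 6)).congr_deriv (by push_cast; ring))
    slope
  have := hanti h0 (right_mem_Icc.2 zero_le_one) zero_le_one
  beta_reduce at this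
  linarith

theorem abs_sub_sub_sub_le_of_deriv2_lipschitz {g g' g'' : ℝ → ℝ} {L : ℝ}
    (hg : ∀ τ ∈ Icc (0 : ℝ) 1, HasDerivAt g (g' τ) τ)
    (hg' : ∀ τ ∈ Icc (0 : ℝ) 1, HasDerivAt g' (g'' τ) τ)
    (hg'' : ∀ τ ∈ Icc (0 : ℝ) 1, |g'' τ - g'' 0| ≤ L * τ) :
    |g 1 - g 0 - g' 0 - g'' 0 / 2| ≤ L / 6 := by
  have upper := sub_sub_le_of_deriv2_le hg hg' (c := g'' 0) (L := L)
    fun τ hτ ↦ by linarith [(abs_le.1 (hg'' τ hτ)).2]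
  have lower := sub_sub_le_of_deriv2_le (g := -g) (g' := -g') (g'' := -g'')
    (fun τ hτ ↦ (hg τ hτ).neg) (fun τ hτ ↦ (hg' τ hτ).neg) (c := -g'' 0) (L := L)
    fun τ hτ ↦ by simp only [Pi.neg_apply]; linarith [(abs_le.1 (hg'' τ hτ)).1]
  simp only [Pi.neg_apply] at lower
  rw [abs_le]
  constructor <;> linarith

section

variable {E : Type*} [NormedAddCommGroup E] [InnerProductSpace ℝ E]

theorem hasDerivAt_add_smul (p q : E) (τ : ℝ) : HasDerivAt (fun s : ℝ ↦ p + s • q) q τ := by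
  simpa using ((hasDerivAt_id τ).smul_const q).const_add p

theorem norm_le_of_isSymmetric_of_abs_inner_le {T : E →L[ℝ] E}
    (hT : (T : E →ₗ[ℝ] E).IsSymmetric) {β : ℝ} (hβ : 0 ≤ β)
    (hTβ : ∀ h, |⟪T h, h⟫| ≤ β * ‖h‖ ^ 2) : ‖T‖ ≤ β := by
  rw [T.norm_eq_iSup_rayleighQuotient hT]
  refine ciSup_le fun h ↦ ?_
  rw [ContinuousLinearMap.rayleighQuotient, ContinuousLinearMap.reApplyInnerSelf, abs_div, abs_sq]
  exact div_le_of_le_mul₀ (by positivity) hβ (by simpa using hTβ h)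

variable [CompleteSpace E] {f : E → ℝ}

theorem hasFDerivAt_gradient (hf : ContDiff ℝ 2 f) (u : E) :
    HasFDerivAt (gradient f) (((toDual ℝ E).symm.toContinuousLinearEquiv :
      StrongDual ℝ E ≃L[ℝ] E).toContinuousLinearMap.comp (fderiv ℝ (fderiv ℝ f) u)) u := by
  have hD : HasFDerivAt (fderiv ℝ f) (fderiv ℝ (fderiv ℝ f) u) u :=
    ((hf.fderiv_right (m := 1) le_rfl).differentiable one_ne_zero u).hasFDerivAt
  exact ((toDual ℝ E).symm.toContinuousLinearEquiv :
      StrongDual ℝ E ≃L[ℝ] E).hasFDerivAt.comp u hD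

theorem inner_fderiv_gradient (hf : ContDiff ℝ 2 f) (u h k : E) :
    ⟪fderiv ℝ (gradient f) u h, k⟫ = fderiv ℝ (fderiv ℝ f) u h k := by
  rw [(hasFDerivAt_gradient hf u).fderiv]
  simp [toDual_symm_apply]

theorem isSymmetric_fderiv_gradient (hf : ContDiff ℝ 2 f) (u : E) :
    (fderiv ℝ (gradient f) u : E →ₗ[ℝ] E).IsSymmetric := by
  intro h k
  rw [ContinuousLinearMap.coe_coe, inner_fderiv_gradient hf, real_inner_comm,
    inner_fderiv_gradient hf]
  exact (hf.contDiffAt.isSymmSndFDerivAt (by simp)) h k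

theorem hasDerivAt_comp_add_smul {p q : E} {τ : ℝ} (hf : DifferentiableAt ℝ f (p + τ • q)) :
    HasDerivAt (fun s : ℝ ↦ f (p + s • q)) ⟪gradient f (p + τ • q), q⟫ τ := by
  rw [inner_gradient_left]
  exact hf.hasFDerivAt.comp_hasDerivAt τ (hasDerivAt_add_smul p q τ)

theorem hasDerivAt_inner_gradient_add_smul (hf : ContDiff ℝ 2 f) (p q z : E) (τ : ℝ) :
    HasDerivAt (fun s : ℝ ↦ ⟪gradient f (p + s • q), z⟫)
      ⟪fderiv ℝ (gradient f) (p + τ • q) q, z⟫ τ := by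
  have := ((hasFDerivAt_gradient hf _).comp_hasDerivAt τ (hasDerivAt_add_smul p q τ)).inner ℝ
    (hasDerivAt_const τ z)
  rw [(hasFDerivAt_gradient hf _).fderiv]
  simpa using this

theorem abs_sub_taylor_two_le (hf : ContDiff ℝ 2 f) {β₂ : ℝ}
    (hLip : ∀ u v : E, ‖fderiv ℝ (gradient f) u - fderiv ℝ (gradient f) v‖ ≤ β₂ * ‖u - v‖)
    (p q : E) :
    |f (p + q) - f p - ⟪gradient f p, q⟫ - ⟪fderiv ℝ (gradient f) p q, q⟫ / 2|
      ≤ β₂ * ‖q‖ ^ 3 / 6 := by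
  have hHess : ∀ τ ∈ Icc (0 : ℝ) 1, |⟪fderiv ℝ (gradient f) (p + τ • q) q, q⟫
      - ⟪fderiv ℝ (gradient f) (p + (0 : ℝ) • q) q, q⟫| ≤ β₂ * ‖q‖ ^ 3 * τ := by
    intro τ hτ
    rw [zero_smul, add_zero, ← inner_sub_left, ← sub_apply]
    calc _ ≤ ‖(fderiv ℝ (gradient f) (p + τ • q) - fderiv ℝ (gradient f) p) q‖ * ‖q‖ :=
          abs_real_inner_le_norm _ _
      _ ≤ β₂ * ‖(p + τ • q) - p‖ * ‖q‖ * ‖q‖ := by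
          gcongr
          exact ((fderiv ℝ (gradient f) (p + τ • q) - fderiv ℝ (gradient f) p).le_opNorm q).trans
            (by gcongr; exact hLip _ _)
      _ = β₂ * ‖q‖ ^ 3 * τ := by
          rw [add_sub_cancel_left, norm_smul, Real.norm_of_nonneg hτ.1]; ring
  simpa using abs_sub_sub_sub_le_of_deriv2_lipschitz
    (fun τ _ ↦ hasDerivAt_comp_add_smul (hf.differentiable two_ne_zero _))
    (fun τ _ ↦ hasDerivAt_inner_gradient_add_smul hf p q q τ) hHess

theorem add_inner_gradient_add_le (hf : ContDiff ℝ 2 f) {α : ℝ} (p q : E)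
    (hα : ∀ τ ∈ Icc (0 : ℝ) 1, α * ‖q‖ ^ 2 ≤ ⟪fderiv ℝ (gradient f) (p + τ • q) q, q⟫) :
    f p + ⟪gradient f p, q⟫ + α / 2 * ‖q‖ ^ 2 ≤ f (p + q) := by
  have := sub_sub_le_of_deriv2_le (g := fun τ ↦ -f (p + τ • q))
    (g' := fun τ ↦ -⟪gradient f (p + τ • q), q⟫)
    (g'' := fun τ ↦ -⟪fderiv ℝ (gradient f) (p + τ • q) q, q⟫) (c := -(α * ‖q‖ ^ 2)) (L := 0)
    (fun τ _ ↦ (hasDerivAt_comp_add_smul (hf.differentiable two_ne_zero _)).neg)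
    (fun τ _ ↦ (hasDerivAt_inner_gradient_add_smul hf p q q τ).neg)
    (fun τ hτ ↦ by linarith [hα τ hτ])
  simp only [zero_smul, add_zero, one_smul] at this
  linarith

theorem norm_gradient_sub_le (hf : ContDiff ℝ 2 f) {S : Set E} (hS : Convex ℝ S) {β : ℝ}
    (hβ : 0 ≤ β) (hH : ∀ u ∈ S, ∀ h, |⟪fderiv ℝ (gradient f) u h, h⟫| ≤ β * ‖h‖ ^ 2)
    {a b : E} (ha : a ∈ S) (hb : b ∈ S) :
    ‖gradient f a - gradient f b‖ ≤ β * ‖a - b‖ :=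
  hS.norm_image_sub_le_of_norm_fderiv_le
    (fun u _ ↦ (hasFDerivAt_gradient hf u).differentiableAt)
    (fun u hu ↦ norm_le_of_isSymmetric_of_abs_inner_le (isSymmetric_fderiv_gradient hf u) hβ
      (hH u hu)) hb ha

theorem sub_inner_gradient_le_of_forall_le {R : E → ℝ} (hR : ConvexOn ℝ univ R) {xs : E}
    (hmin : ∀ u, (f + R) xs ≤ (f + R) u) (hf : DifferentiableAt ℝ f xs) (w : E) :
    R xs - ⟪gradient f xs, w - xs⟫ ≤ R w := by
  set ψ : ℝ → ℝ := fun τ ↦ f (xs + τ • (w - xs)) + τ * (R w - R xs)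
  have hψ : HasDerivAt ψ (⟪gradient f xs, w - xs⟫ + (R w - R xs)) 0 := by
    have := (hasDerivAt_comp_add_smul (p := xs) (q := w - xs) (τ := 0) (by simpa using hf)).add
      ((hasDerivAt_id (0 : ℝ)).mul_const (R w - R xs))
    rwa [zero_smul, add_zero, one_mul] at this
  have hmin_ψ : IsMinOn ψ (Icc 0 1) 0 := by
    intro τ hτ
    have hconv := hR.2 (mem_univ xs) (mem_univ w) (by linarith [hτ.2] : 0 ≤ 1 - τ) hτ.1
      (by ring)
    have : (1 - τ) • xs + τ • w = xs + τ • (w - xs) := by module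
    simp only [smul_eq_mul, this] at hconv
    have := hmin (xs + τ • (w - xs))
    simp only [Pi.add_apply] at this
    simp only [mem_ofPred_eq, ψ, zero_smul, add_zero, zero_mul]
    linarith
  have := hmin_ψ.localize.hasFDerivWithinAt_nonneg hψ.hasFDerivAt.hasFDerivWithinAt
    (sub_mem_posTangentConeAt_of_segment_subset ((convex_Icc 0 1).segment_subset
      (left_mem_Icc.2 zero_le_one) (right_mem_Icc.2 zero_le_one)))
  simp only [sub_zero, ContinuousLinearMap.toSpanSingleton_apply, smul_eq_mul, one_mul] at this
  linarith

theorem mul_sq_norm_sub_le_of_forall_le (hf : ContDiff ℝ 2 f) {R : E → ℝ}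
    (hR : ConvexOn ℝ univ R) {xs : E} (hmin : ∀ u, (f + R) xs ≤ (f + R) u) {S : Set E}
    (hS : Convex ℝ S) (hxs : xs ∈ S) {α : ℝ}
    (hα : ∀ u ∈ S, ∀ h, α * ‖h‖ ^ 2 ≤ ⟪fderiv ℝ (gradient f) u h, h⟫) {w : E} (hw : w ∈ S) :
    α / 2 * ‖w - xs‖ ^ 2 ≤ (f + R) w - (f + R) xs := by
  have hquad := add_inner_gradient_add_le hf xs (w - xs)
    fun τ hτ ↦ hα _ (hS.add_smul_sub_mem hxs hw hτ) _
  have hsub := sub_inner_gradient_le_of_forall_le hR hmin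
    ((hf.differentiable two_ne_zero) xs) w
  rw [add_sub_cancel] at hquad
  simp only [Pi.add_apply]
  linarith

variable (f) in
noncomputable def proxNewtonModel (R : E → ℝ) (x w : E) : ℝ :=
  ⟪gradient f x, w - x⟫ + (1 / 2) * ⟪fderiv ℝ (gradient f) x (w - x), w - x⟫ + R w

theorem abs_add_sub_proxNewtonModel_le (hf : ContDiff ℝ 2 f) {β₂ : ℝ}
    (hLip : ∀ u v : E, ‖fderiv ℝ (gradient f) u - fderiv ℝ (gradient f) v‖ ≤ β₂ * ‖u - v‖)
    (R : E → ℝ) (x w : E) :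
    |(f + R) w - f x - proxNewtonModel f R x w| ≤ β₂ / 6 * ‖w - x‖ ^ 3 := by
  have := abs_sub_taylor_two_le hf hLip x (w - x)
  rw [add_sub_cancel] at this
  convert this using 2
  · simp only [Pi.add_apply, proxNewtonModel]; ring
  · ring

theorem sub_le_of_proxNewtonModel_le (hf : ContDiff ℝ 2 f) {β₂ : ℝ}
    (hLip : ∀ u v : E, ‖fderiv ℝ (gradient f) u - fderiv ℝ (gradient f) v‖ ≤ β₂ * ‖u - v‖)
    {R : E → ℝ} {x v xs : E} {CA : ℝ}
    (hv : proxNewtonModel f R x v ≤ proxNewtonModel f R x xs + CA * ‖x - xs‖ ^ 3) :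
    (f + R) v - (f + R) xs ≤ (β₂ / 6 + CA) * ‖x - xs‖ ^ 3 + β₂ / 6 * ‖v - x‖ ^ 3 := by
  have hv_err := (abs_le.1 (abs_add_sub_proxNewtonModel_le hf hLip R x v)).2
  have hxs_err := (abs_le.1 (abs_add_sub_proxNewtonModel_le hf hLip R x xs)).1
  rw [norm_sub_rev xs x] at hxs_err
  linarith

theorem mul_sq_norm_sub_le_of_proxNewtonModel_le {R : E → ℝ} (hR : ConvexOn ℝ univ R) {xs : E}
    (hmin : ∀ u, (f + R) xs ≤ (f + R) u) (hf : DifferentiableAt ℝ f xs) {x v : E}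
    {α β CA : ℝ}
    (hHess : ∀ h, α * ‖h‖ ^ 2 ≤ ⟪fderiv ℝ (gradient f) x h, h⟫ ∧
      ⟪fderiv ℝ (gradient f) x h, h⟫ ≤ β * ‖h‖ ^ 2)
    (hgrad : ‖gradient f x - gradient f xs‖ ≤ β * ‖x - xs‖)
    (hv : proxNewtonModel f R x v ≤ proxNewtonModel f R x xs + CA * ‖x - xs‖ ^ 3) :
    α / 2 * ‖v - x‖ ^ 2
      ≤ β * ‖x - xs‖ * (‖x - xs‖ + ‖v - x‖) + β / 2 * ‖x - xs‖ ^ 2 + CA * ‖x - xs‖ ^ 3 := by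
  have hsub := sub_inner_gradient_le_of_forall_le hR hmin hf v
  have hcross : ⟪gradient f x - gradient f xs, xs - v⟫
      ≤ β * ‖x - xs‖ * (‖x - xs‖ + ‖v - x‖) := by
    have hβ : 0 ≤ β * ‖x - xs‖ := (norm_nonneg _).trans hgrad
    calc _ ≤ ‖gradient f x - gradient f xs‖ * ‖xs - v‖ := real_inner_le_norm _ _
      _ ≤ β * ‖x - xs‖ * (‖x - xs‖ + ‖v - x‖) := by
        gcongr
        calc ‖xs - v‖ ≤ ‖xs - x‖ + ‖x - v‖ := norm_sub_le_norm_sub_add_norm_sub _ _ _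
          _ = ‖x - xs‖ + ‖v - x‖ := by rw [norm_sub_rev xs x, norm_sub_rev x v]
  have hlow := (hHess (v - x)).1
  have hup := (hHess (xs - x)).2
  rw [norm_sub_rev xs x] at hup
  simp only [proxNewtonModel] at hv
  have e1 : ⟪gradient f x, xs - x⟫ - ⟪gradient f x, v - x⟫ = ⟪gradient f x, xs - v⟫ := by
    rw [← inner_sub_right, sub_sub_sub_cancel_right]
  have e2 : ⟪gradient f xs, v - xs⟫ = -⟪gradient f xs, xs - v⟫ := by
    rw [← inner_neg_right, neg_sub]
  rw [inner_sub_left] at hcross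
  linarith

end

/-- Either `α r ≤ 6 β d`, or the term `CA d³` dominates the quadratic bound on `r` and AM-GM
finishes. -/
theorem cube_le_of_sq_le {α β CA d r : ℝ} (hα : 0 < α) (hαβ : α ≤ β) (hCA : 0 ≤ CA)
    (hd : 0 ≤ d) (hr : 0 ≤ r)
    (h : α / 2 * r ^ 2 ≤ β * d * (d + r) + β / 2 * d ^ 2 + CA * d ^ 3) :
    α ^ 3 * r ^ 3 ≤ (4 * α ^ 3 + 2000 * β ^ 3) * d ^ 3 + 16 * CA ^ 3 * d ^ 6 := by
  have hβ : 0 < β := hα.trans_le hαβ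
  set X := α * r
  have hX : 0 ≤ X := by positivity
  rw [show α ^ 3 * r ^ 3 = X ^ 3 by ring]
  rcases le_total X (6 * β * d) with hsmall | hlarge
  · have : X ^ 3 ≤ (6 * β * d) ^ 3 := pow_le_pow_left₀ hX hsmall 3
    nlinarith [pow_nonneg (mul_nonneg hβ.le hd) 3, pow_nonneg (mul_nonneg hα.le hd) 3,
      pow_nonneg (mul_nonneg hCA (sq_nonneg d)) 3]
  · have h1 : β * d * X ≤ X ^ 2 / 6 := by nlinarith [mul_le_mul_of_nonneg_right hlarge hX]
    have h2 : (β * d) ^ 2 ≤ X ^ 2 / 36 := by nlinarith [mul_nonneg hβ.le hd]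
    have h3 : α * β * d ^ 2 ≤ (β * d) ^ 2 := by nlinarith [mul_nonneg hβ.le (sq_nonneg d)]
    have hsq : X ^ 2 ≤ 24 / 7 * (α * CA * d ^ 3) := by
      have := mul_le_mul_of_nonneg_left h (by positivity : (0 : ℝ) ≤ 2 * α)
      nlinarith
    set A := 4 * α ^ 3 * d ^ 3
    set B := 16 * CA ^ 3 * d ^ 6
    have hcube : (X ^ 3) ^ 2 ≤ (A + B) ^ 2 := by
      have := pow_le_pow_left₀ (sq_nonneg X) hsq 3
      nlinarith [sq_nonneg (A - B), pow_nonneg (mul_nonneg (mul_nonneg hα.le hCA) hd) 3,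
        pow_nonneg hd 6]
    have := (pow_le_pow_iff_left₀ (by positivity) (by positivity) two_ne_zero).1 hcube
    nlinarith [pow_nonneg (mul_nonneg hβ.le hd) 3]

theorem pow_three_le_of_mul_sq_le {α δ d : ℝ} (hα : 0 < α) (hd : 0 ≤ d)
    (h : α * d ^ 2 ≤ 2 * δ) :
    d ^ 3 ≤ 2 * Real.sqrt 2 / α ^ ((3 : ℝ) / 2) * δ ^ ((3 : ℝ) / 2) := by
  have hδ : 0 ≤ δ := by nlinarith [sq_nonneg d]
  have hd2 : d ^ 2 ≤ 2 / α * δ := by rw [div_mul_eq_mul_div, le_div_iff₀ hα]; linarith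
  have h2 : (2 : ℝ) ^ ((3 : ℝ) / 2) = 2 * Real.sqrt 2 := by
    rw [show (3 : ℝ) / 2 = 1 + 1 / 2 by norm_num, Real.rpow_add two_pos, Real.rpow_one,
      Real.sqrt_eq_rpow]
  calc d ^ 3 = (d ^ 2) ^ ((3 : ℝ) / 2) := by
        rw [← Real.rpow_natCast d 2, ← Real.rpow_mul hd]; norm_num
    _ ≤ (2 / α * δ) ^ ((3 : ℝ) / 2) := by gcongr
    _ = 2 * Real.sqrt 2 / α ^ ((3 : ℝ) / 2) * δ ^ ((3 : ℝ) / 2) := by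
        rw [Real.mul_rpow (by positivity) hδ, Real.div_rpow zero_le_two hα.le, h2]

theorem le_rate_of_step_bounds {α β β₂ CA δ δ' d r : ℝ} (hα : 0 < α) (hαβ : α ≤ β)
    (hβ₂ : 0 ≤ β₂) (hCA : 0 ≤ CA) (hd : 0 ≤ d) (hr : 0 ≤ r)
    (hdist : α * d ^ 2 ≤ 2 * δ)
    (hstep : α / 2 * r ^ 2 ≤ β * d * (d + r) + β / 2 * d ^ 2 + CA * d ^ 3)
    (hdecr : δ' ≤ (β₂ / 6 + CA) * d ^ 3 + β₂ / 6 * r ^ 3) :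
    δ' ≤ 2 * Real.sqrt 2 / α ^ ((3 : ℝ) / 2)
          * (5 * β₂ / 6 + CA + 1000 * β₂ * β ^ 3 / (3 * α ^ 3)) * δ ^ ((3 : ℝ) / 2)
        + 64 * β₂ * CA ^ 3 / (3 * α ^ 6) * δ ^ 3 := by
  have hβ : 0 < β := hα.trans_le hαβ
  have hr3 : r ^ 3 ≤ (4 + 2000 * β ^ 3 / α ^ 3) * d ^ 3 + 16 * CA ^ 3 / α ^ 3 * d ^ 6 := by
    refine le_of_mul_le_mul_left ?_ (pow_pos hα 3)
    calc α ^ 3 * r ^ 3 ≤ (4 * α ^ 3 + 2000 * β ^ 3) * d ^ 3 + 16 * CA ^ 3 * d ^ 6 :=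
          cube_le_of_sq_le hα hαβ hCA hd hr hstep
      _ = _ := by field_simp
  have hd6 : d ^ 6 ≤ 8 / α ^ 3 * δ ^ 3 := by
    have := pow_le_pow_left₀ (by positivity) hdist 3
    rw [div_mul_eq_mul_div, le_div_iff₀ (by positivity)]
    linarith
  calc δ' ≤ (β₂ / 6 + CA) * d ^ 3 + β₂ / 6 * r ^ 3 := hdecr
    _ ≤ (β₂ / 6 + CA) * d ^ 3
          + β₂ / 6 * ((4 + 2000 * β ^ 3 / α ^ 3) * d ^ 3 + 16 * CA ^ 3 / α ^ 3 * d ^ 6) := by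
        gcongr
    _ = (5 * β₂ / 6 + CA + 1000 * β₂ * β ^ 3 / (3 * α ^ 3)) * d ^ 3
          + 8 * β₂ * CA ^ 3 / (3 * α ^ 3) * d ^ 6 := by ring
    _ ≤ (5 * β₂ / 6 + CA + 1000 * β₂ * β ^ 3 / (3 * α ^ 3))
          * (2 * Real.sqrt 2 / α ^ ((3 : ℝ) / 2) * δ ^ ((3 : ℝ) / 2))
          + 8 * β₂ * CA ^ 3 / (3 * α ^ 3) * (8 / α ^ 3 * δ ^ 3) := by
        gcongr
        exact pow_three_le_of_mul_sq_le hα hd hdist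
    _ = _ := by ring

theorem nonneg_of_forall_norm_sub_le {E F : Type*} [NormedAddCommGroup E] [Nontrivial E]
    [SeminormedAddCommGroup F] {g : E → F} {K : ℝ} (h : ∀ u v, ‖g u - g v‖ ≤ K * ‖u - v‖) :
    0 ≤ K := by
  obtain ⟨u, hu⟩ := exists_ne (0 : E)
  have := (norm_nonneg _).trans (h u 0)
  rw [sub_zero] at this
  exact nonneg_of_mul_nonneg_left this (norm_pos_iff.2 hu)

theorem apply_ite_lt_eq_min {ι : Type*} (F : ι → ℝ) (a b : ι) :
    F (if F b < F a then b else a) = min (F a) (F b) := by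
  split_ifs with h
  · exact (min_eq_right h.le).symm
  · exact (min_eq_left (not_lt.1 h)).symm

/-- Theorem: local super-linear convergence with an (unregularized) weak
proximal Newton oracle, under strong convexity/smoothness of the Hessian on the initial
level set. Sequences are indexed from `0` here (the paper indexes from `1`, so `x 0` is
the paper's `x₁`). -/
theorem stmt_3
    {E : Type*} [NormedAddCommGroup E] [InnerProductSpace ℝ E] [FiniteDimensional ℝ E]
    (f R : E → ℝ) (β₂ : ℝ)
    (hfconv : ConvexOn ℝ Set.univ f)
    (hf2 : ContDiff ℝ 2 f)
    (hHessLip : ∀ u v : E,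
      ‖fderiv ℝ (gradient f) u - fderiv ℝ (gradient f) v‖ ≤ β₂ * ‖u - v‖)
    (hR : ConvexOn ℝ Set.univ R)
    (F : E → ℝ) (hF : ∀ u, F u = f u + R u)
    (xs : E) (hmin : ∀ u, F xs ≤ F u)
    (α β : ℝ) (hα : 0 < α) (hαβ : α ≤ β)
    (x v : ℕ → E)
    (hHess : ∀ u : E, F u ≤ F (x 0) → ∀ h : E,
      α * ‖h‖ ^ 2 ≤ ⟪(fderiv ℝ (gradient f) u) h, h⟫ ∧
      ⟪(fderiv ℝ (gradient f) u) h, h⟫ ≤ β * ‖h‖ ^ 2)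
    (CA : ℝ) (hCA : 0 ≤ CA)
    (φ : E → E → ℝ)
    (hφ : ∀ x' w, φ x' w =
      ⟪gradient f x', w - x'⟫
        + (1 / 2) * ⟪(fderiv ℝ (gradient f) x') (w - x'), w - x'⟫ + R w)
    (hv : ∀ t, φ (x t) (v t) ≤ φ (x t) xs + CA * ‖x t - xs‖ ^ 3)
    (hupd : ∀ t, x (t + 1) = if F (v t) < F (x t) then v t else x t) :
    ∀ t, F (x (t + 1)) - F xs ≤
      (2 * Real.sqrt 2 / α ^ ((3 : ℝ) / 2))
          * (5 * β₂ / 6 + CA + 1000 * β₂ * β ^ 3 / (3 * α ^ 3))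
          * (F (x t) - F xs) ^ ((3 : ℝ) / 2)
        + (64 * β₂ * CA ^ 3 / (3 * α ^ 6)) * (F (x t) - F xs) ^ 3 := by
  obtain rfl : F = f + R := funext hF
  obtain rfl : φ = proxNewtonModel f R := funext₂ hφ
  intro t
  rcases subsingleton_or_nontrivial E with hE | hE
  · simp [Subsingleton.elim (x (t + 1)) xs, Subsingleton.elim (x t) xs]
  have hβ₂ : 0 ≤ β₂ := nonneg_of_forall_norm_sub_le hHessLip
  set S := {u | (f + R) u ≤ (f + R) (x 0)}
  have hS : Convex ℝ S := by
    simpa only [Set.sep_univ] using (hfconv.add hR).convex_le ((f + R) (x 0))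
  have hdecrease : ∀ n, (f + R) (x (n + 1)) ≤ min ((f + R) (x n)) ((f + R) (v n)) := fun n ↦ by
    rw [hupd, apply_ite_lt_eq_min (f + R)]
  have hxS : ∀ n, x n ∈ S := fun n ↦
    antitone_nat_of_succ_le (f := fun n ↦ (f + R) (x n))
      (fun n ↦ (hdecrease n).trans (min_le_left _ _)) n.zero_le
  have hxsS : xs ∈ S := hmin _
  have hHessAbs : ∀ u ∈ S, ∀ h, |⟪fderiv ℝ (gradient f) u h, h⟫| ≤ β * ‖h‖ ^ 2 :=
    fun u hu h ↦ abs_le.2 ⟨by nlinarith [(hHess u hu h).1], (hHess u hu h).2⟩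
  have hdist : α * ‖x t - xs‖ ^ 2 ≤ 2 * ((f + R) (x t) - (f + R) xs) := by
    linarith [mul_sq_norm_sub_le_of_forall_le hf2 hR hmin hS hxsS
      (fun u hu h ↦ (hHess u hu h).1) (hxS t)]
  have hgrad := norm_gradient_sub_le hf2 hS (hα.le.trans hαβ) hHessAbs (hxS t) hxsS
  have hstep := mul_sq_norm_sub_le_of_proxNewtonModel_le hR hmin
    (hf2.differentiable two_ne_zero xs) (hHess _ (hxS t)) hgrad (hv t)
  have hdecr := (sub_le_sub_right ((hdecrease t).trans (min_le_right _ _)) ((f + R) xs)).trans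
    (sub_le_of_proxNewtonModel_le hf2 hHessLip (hv t))
  exact le_rate_of_step_bounds hα hαβ hβ₂ hCA (norm_nonneg _) (norm_nonneg _) hdist hstep hdecr
end

section
/- Let E be a finite-dimensional real inner product space, f : E → ℝ convex and twice continuously differentiable with β₂-Lipschitz Hessian, R : E → ℝ convex, F = f + R, and x* a minimizer of F with F* = F(x*). Fix x̄ ∈ E and suppose 0 < α ≤ β̃ satisfy α‖h‖² ≤ ⟨∇²f(x̄)h, h⟩ ≤ β̃‖h‖² for all h ∈ E. Define Q(w) = ⟨∇f(x̄), w − x̄⟩ + (1/2)⟨∇²f(x̄)(w − x̄), w − x̄⟩, φ = Q + R, and for y ∈ E and λ > 0 define ψ_{y,λ}(u) = ⟨∇Q(y), u − y⟩ + (λβ̃/2)‖u − y‖² + R(u). Let λ = α/β̃ and let (y_i)_{i≥1} be a sequence with y₁ = x̄ such that for each i ≥ 1 there is w_i with ψ_{y_i,λ}(w_i) ≤ min{ψ_{y_i,λ}(x*), ψ_{y_i,λ}(y_i)} and y_{i+1} = (1 − λ)y_i + λ·w_i. Then for all i ≥ 1: φ(y_i) − φ(x*) ≤ (F(x̄) −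 F* + (β₂/6)·‖x̄ − x*‖³)·(1 − α/β̃)^{i−1}. -/
/-!
The quadratic model `Q` of `f` at `x̄` is `α`-strongly convex and `β̃`-smooth, so a weak proximal
step with `λ = α / β̃` contracts the gap: smoothness bounds `Q` at the averaged point, convexity
bounds `R` there, and strong convexity bounds `ψ(x*)` by `φ(x*) − Q(y_i)`. This gives
`φ(y_{i+1}) − φ(x*) ≤ (1 − λ)(φ(y_i) − φ(x*))`. Since `Q(x̄) = 0`, the initial gap is
`F(x̄) − F(x*) + (f(x*) − f(x̄) − Q(x*))`, and the Lipschitz Hessian bounds this Taylor remainder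
by `β₂/6 ‖x̄ − x*‖³`.
-/

open RealInnerProductSpace Set

section

variable {E : Type*} [NormedAddCommGroup E] [InnerProductSpace ℝ E]

section Hessian

variable [CompleteSpace E] {f : E → ℝ}

lemma inner_fderiv_gradient_apply (x u v : E) :
    ⟪fderiv ℝ (gradient f) x u, v⟫ = fderiv ℝ (fderiv ℝ f) x u v := by
  have hcomp : gradient f = (InnerProductSpace.toDual ℝ E).symm ∘ fderiv ℝ f := rfl
  rw [hcomp, LinearIsometryEquiv.comp_fderiv]
  exact InnerProductSpace.toDual_symm_apply

lemma inner_fderiv_gradient_comm_s6 {x : E} (hf : ContDiffAt ℝ 2 f x) (u v : E) :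
    ⟪fderiv ℝ (gradient f) x u, v⟫ = ⟪fderiv ℝ (gradient f) x v, u⟫ := by
  rw [inner_fderiv_gradient_apply, inner_fderiv_gradient_apply]
  exact hf.isSymmSndFDerivAt (by simp) u v

lemma ContDiff.differentiable_gradient (hf : ContDiff ℝ 2 f) : Differentiable ℝ (gradient f) :=
  (InnerProductSpace.toDual ℝ E).symm.differentiable.comp
    ((hf.fderiv_right le_rfl).differentiable one_ne_zero)

end Hessian

lemma norm_le_mul_pow_of_norm_deriv_le {F : Type*} [NormedAddCommGroup F] [NormedSpace ℝ F]
    {φ φ' : ℝ → F} {C : ℝ} {n : ℕ} (hφ : ∀ t, HasDerivAt φ (φ' t) t) (h0 : φ 0 = 0)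
    (hbound : ∀ t, 0 ≤ t → ‖φ' t‖ ≤ C * t ^ n) {t : ℝ} (ht : 0 ≤ t) :
    ‖φ t‖ ≤ C / (n + 1) * t ^ (n + 1) := by
  have hB : ∀ s : ℝ, HasDerivAt (fun s : ℝ => C / (n + 1) * s ^ (n + 1)) (C * s ^ n) s :=
    fun s => ((hasDerivAt_pow (n + 1) s).const_mul (C / (n + 1))).congr_deriv <| by
      push_cast
      field_simp
  refine image_norm_le_of_norm_deriv_right_le_deriv_boundary
    (fun s _ => (hφ s).continuousAt.continuousWithinAt) (fun s _ => (hφ s).hasDerivWithinAt)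
    (by simp [h0]) hB (fun s hs => hbound s hs.1) (right_mem_Icc.2 ht)

lemma hasDerivAt_add_smul_s6 (x d : E) (s : ℝ) : HasDerivAt (fun s : ℝ => x + s • d) d s := by
  simpa using ((hasDerivAt_id s).smul_const d).const_add x

noncomputable def quadraticModel (g : E) (H : E →L[ℝ] E) (x w : E) : ℝ :=
  ⟪g, w - x⟫ + (1 / 2) * ⟪H (w - x), w - x⟫

section Taylor

variable [CompleteSpace E] {f : E → ℝ} {β₂ : ℝ}

lemma norm_gradient_sub_taylor_le (hf : Differentiable ℝ (gradient f))
    (hLip : ∀ u v : E, ‖fderiv ℝ (gradient f) u - fderiv ℝ (gradient f) v‖ ≤ β₂ * ‖u - v‖)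
    (x d : E) {t : ℝ} (ht : 0 ≤ t) :
    ‖gradient f (x + t • d) - gradient f x - t • fderiv ℝ (gradient f) x d‖
      ≤ β₂ * ‖d‖ ^ 2 / 2 * t ^ 2 := by
  set H := fderiv ℝ (gradient f) x
  have hderiv : ∀ s : ℝ, HasDerivAt
      (fun s : ℝ => gradient f (x + s • d) - gradient f x - s • H d)
      (fderiv ℝ (gradient f) (x + s • d) d - H d) s := fun s => by
    have hcomp := (hf _).hasFDerivAt.comp_hasDerivAt s (hasDerivAt_add_smul_s6 x d s)
    simpa using (hcomp.sub_const _).fun_sub ((hasDerivAt_id s).smul_const (H d))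
  have hbound : ∀ s : ℝ, 0 ≤ s →
      ‖fderiv ℝ (gradient f) (x + s • d) d - H d‖ ≤ β₂ * ‖d‖ ^ 2 * s ^ 1 := fun s hs =>
    calc ‖fderiv ℝ (gradient f) (x + s • d) d - H d‖
        = ‖(fderiv ℝ (gradient f) (x + s • d) - H) d‖ := rfl
      _ ≤ β₂ * ‖x + s • d - x‖ * ‖d‖ := by
        grw [ContinuousLinearMap.le_opNorm, hLip]
      _ = β₂ * ‖d‖ ^ 2 * s ^ 1 := by
        rw [add_sub_cancel_left, norm_smul, Real.norm_of_nonneg hs]; ring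
  convert norm_le_mul_pow_of_norm_deriv_le hderiv (by simp) hbound ht using 1
  norm_num

lemma abs_sub_quadraticModel_le (hf : Differentiable ℝ f) (hgf : Differentiable ℝ (gradient f))
    (hLip : ∀ u v : E, ‖fderiv ℝ (gradient f) u - fderiv ℝ (gradient f) v‖ ≤ β₂ * ‖u - v‖)
    (x y : E) :
    |f y - f x - quadraticModel (gradient f x) (fderiv ℝ (gradient f) x) x y|
      ≤ β₂ / 6 * ‖y - x‖ ^ 3 := by
  set H := fderiv ℝ (gradient f) x
  obtain ⟨d, rfl⟩ : ∃ d, y = x + d := ⟨y - x, by abel⟩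
  have hderiv : ∀ s : ℝ, HasDerivAt
      (fun s : ℝ => f (x + s • d) - f x - s * ⟪gradient f x, d⟫ - s ^ 2 * (⟪H d, d⟫ / 2))
      ⟪gradient f (x + s • d) - gradient f x - s • H d, d⟫ s := fun s => by
    have hcomp := (hf _).hasFDerivAt.comp_hasDerivAt s (hasDerivAt_add_smul_s6 x d s)
    refine (((hcomp.sub_const _).sub ((hasDerivAt_id s).mul_const _)).sub
      ((hasDerivAt_pow 2 s).mul_const _)).congr_deriv ?_
    simp only [inner_gradient_left, one_mul, Nat.cast_ofNat, Nat.add_one_sub_one, pow_one,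
      inner_sub_left, real_inner_smul_left, sub_right_inj]
    ring
  have hbound : ∀ s : ℝ, 0 ≤ s →
      ‖⟪gradient f (x + s • d) - gradient f x - s • H d, d⟫‖ ≤ β₂ * ‖d‖ ^ 3 / 2 * s ^ 2 :=
    fun s hs => calc
      _ ≤ ‖gradient f (x + s • d) - gradient f x - s • H d‖ * ‖d‖ := norm_inner_le_norm _ _
      _ ≤ β₂ * ‖d‖ ^ 2 / 2 * s ^ 2 * ‖d‖ := by
        grw [norm_gradient_sub_taylor_le hgf hLip x d hs]
      _ = β₂ * ‖d‖ ^ 3 / 2 * s ^ 2 := by ring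
  have key := norm_le_mul_pow_of_norm_deriv_le hderiv (by simp) hbound zero_le_one
  rw [one_smul, Real.norm_eq_abs] at key
  calc _ = |f (x + d) - f x - 1 * ⟪gradient f x, d⟫ - 1 ^ 2 * (⟪H d, d⟫ / 2)| := by
        rw [quadraticModel, add_sub_cancel_left]; ring_nf
    _ ≤ β₂ * ‖d‖ ^ 3 / 2 / (((2 : ℕ) : ℝ) + 1) * 1 ^ (2 + 1) := key
    _ = β₂ / 6 * ‖x + d - x‖ ^ 3 := by rw [add_sub_cancel_left]; norm_num; ring

end Taylor

section QuadraticModel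

variable {g x : E} {H : E →L[ℝ] E}

lemma quadraticModel_eq (hH : ∀ u v, ⟪H u, v⟫ = ⟪H v, u⟫) (y u : E) :
    quadraticModel g H x u
      = quadraticModel g H x y + ⟪g + H (y - x), u - y⟫ + (1 / 2) * ⟪H (u - y), u - y⟫ := by
  have hsplit : u - x = (y - x) + (u - y) := by abel
  simp only [quadraticModel, hsplit, map_add, inner_add_left, inner_add_right, hH (u - y) (y - x)]
  ring

lemma hasGradientAt_quadraticModel [CompleteSpace E] (hH : ∀ u v, ⟪H u, v⟫ = ⟪H v, u⟫) (y : E) :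
    HasGradientAt (quadraticModel g H x) (g + H (y - x)) y := by
  rw [hasGradientAt_iff_isLittleO]
  refine Asymptotics.IsBigO.trans_isLittleO (g := fun u => ‖u - y‖ ^ 2) ?_
    (Asymptotics.isLittleO_pow_sub_sub y one_lt_two)
  refine Asymptotics.IsBigO.of_bound (‖H‖ / 2) (Filter.Eventually.of_forall fun u => ?_)
  rw [quadraticModel_eq hH y u, add_assoc, add_sub_cancel_left, add_sub_cancel_left,
    Real.norm_eq_abs, Real.norm_eq_abs, abs_mul, abs_of_pos one_half_pos]
  calc 1 / 2 * |⟪H (u - y), u - y⟫| ≤ 1 / 2 * (‖H‖ * ‖u - y‖ * ‖u - y‖) := by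
        grw [abs_real_inner_le_norm, H.le_opNorm]
    _ = ‖H‖ / 2 * |‖u - y‖ ^ 2| := by rw [abs_of_nonneg (by positivity)]; ring

lemma quadraticModel_le (hH : ∀ u v, ⟪H u, v⟫ = ⟪H v, u⟫) {β : ℝ}
    (hβ : ∀ h, ⟪H h, h⟫ ≤ β * ‖h‖ ^ 2) (y u : E) :
    quadraticModel g H x u
      ≤ quadraticModel g H x y + ⟪g + H (y - x), u - y⟫ + β / 2 * ‖u - y‖ ^ 2 := by
  rw [quadraticModel_eq hH y u]
  linarith [hβ (u - y)]

lemma le_quadraticModel (hH : ∀ u v, ⟪H u, v⟫ = ⟪H v, u⟫) {α : ℝ}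
    (hα : ∀ h, α * ‖h‖ ^ 2 ≤ ⟪H h, h⟫) (y u : E) :
    quadraticModel g H x y + ⟪g + H (y - x), u - y⟫ + α / 2 * ‖u - y‖ ^ 2
      ≤ quadraticModel g H x u := by
  rw [quadraticModel_eq hH y u]
  linarith [hα (u - y)]

end QuadraticModel

noncomputable def proxModel (g : E) (c : ℝ) (R : E → ℝ) (y u : E) : ℝ :=
  ⟪g, u - y⟫ + c / 2 * ‖u - y‖ ^ 2 + R u

lemma proxStep_sub_le {Q R : E → ℝ} (hR : ConvexOn ℝ univ R) {β lam : ℝ}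
    (hlam0 : 0 ≤ lam) (hlam1 : lam ≤ 1) {g x y w : E}
    (hupper : ∀ u, Q u ≤ Q y + ⟪g, u - y⟫ + β / 2 * ‖u - y‖ ^ 2)
    (hlower : Q y + ⟪g, x - y⟫ + lam * β / 2 * ‖x - y‖ ^ 2 ≤ Q x)
    (hw : proxModel g (lam * β) R y w ≤ proxModel g (lam * β) R y x) :
    Q ((1 - lam) • y + lam • w) + R ((1 - lam) • y + lam • w) - (Q x + R x)
      ≤ (1 - lam) * (Q y + R y - (Q x + R x)) := by
  have hstep : (1 - lam) • y + lam • w - y = lam • (w - y) := by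
    rw [smul_sub, sub_smul, one_smul]; abel
  have hQ := hupper ((1 - lam) • y + lam • w)
  rw [hstep, real_inner_smul_right, norm_smul, Real.norm_of_nonneg hlam0] at hQ
  have hRconv : R ((1 - lam) • y + lam • w) ≤ (1 - lam) * R y + lam * R w :=
    hR.2 (mem_univ _) (mem_univ _) (by linarith) hlam0 (by ring)
  have hprox := mul_le_mul_of_nonneg_left hw hlam0
  unfold proxModel at hprox
  linarith [mul_le_mul_of_nonneg_left hlower hlam0]

end

theorem stmt_6_general
    {E : Type*} [NormedAddCommGroup E] [InnerProductSpace ℝ E] [FiniteDimensional ℝ E]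
    (f R : E → ℝ) (β₂ : ℝ)
    (hf2 : ContDiff ℝ 2 f)
    (hHessLip : ∀ u v : E,
      ‖fderiv ℝ (gradient f) u - fderiv ℝ (gradient f) v‖ ≤ β₂ * ‖u - v‖)
    (hR : ConvexOn ℝ Set.univ R)
    (F : E → ℝ) (hF : ∀ u, F u = f u + R u)
    (xs : E)
    (xb : E) (α βt : ℝ) (hα : 0 < α) (hαβ : α ≤ βt)
    (hHess : ∀ h : E,
      α * ‖h‖ ^ 2 ≤ ⟪(fderiv ℝ (gradient f) xb) h, h⟫ ∧
      ⟪(fderiv ℝ (gradient f) xb) h, h⟫ ≤ βt * ‖h‖ ^ 2)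
    (Q φ : E → ℝ)
    (hQ : ∀ w, Q w =
      ⟪gradient f xb, w - xb⟫
        + (1 / 2) * ⟪(fderiv ℝ (gradient f) xb) (w - xb), w - xb⟫)
    (hφ : ∀ w, φ w = Q w + R w)
    (ψ : E → E → ℝ) (lam : ℝ) (hlam : lam = α / βt)
    (hψ : ∀ y u, ψ y u =
      ⟪gradient Q y, u - y⟫ + (lam * βt / 2) * ‖u - y‖ ^ 2 + R u)
    (y w : ℕ → E) (hy0 : y 0 = xb)
    (hw : ∀ i, ψ (y i) (w i) ≤ min (ψ (y i) xs) (ψ (y i) (y i)))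
    (hyupd : ∀ i, y (i + 1) = (1 - lam) • y i + lam • w i) :
    ∀ i, φ (y i) - φ xs ≤
      (F xb - F xs + (β₂ / 6) * ‖xb - xs‖ ^ 3) * (1 - α / βt) ^ i := by
  set H := fderiv ℝ (gradient f) xb
  obtain rfl : Q = quadraticModel (gradient f xb) H xb := funext hQ
  have hH : ∀ u v, ⟪H u, v⟫ = ⟪H v, u⟫ := inner_fderiv_gradient_comm_s6 hf2.contDiffAt
  have hgradQ : ∀ z,
      gradient (quadraticModel (gradient f xb) H xb) z = gradient f xb + H (z - xb) :=
    fun z => (hasGradientAt_quadraticModel hH z).gradient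
  have hlam0 : 0 ≤ lam := hlam ▸ div_nonneg hα.le (hα.le.trans hαβ)
  have hlam1 : lam ≤ 1 := hlam ▸ div_le_one_of_le₀ hαβ (hα.le.trans hαβ)
  have hlamβ : lam * βt = α := by rw [hlam, div_mul_cancel₀ _ (hα.trans_le hαβ).ne']
  have hcontract : ∀ i, φ (y (i + 1)) - φ xs ≤ (1 - lam) * (φ (y i) - φ xs) := fun i => by
    rw [hφ, hφ, hφ, hyupd]
    refine proxStep_sub_le hR hlam0 hlam1 (quadraticModel_le hH (fun h => (hHess h).2) (y i))
      (hlamβ ▸ le_quadraticModel hH (fun h => (hHess h).1) (y i) xs) ?_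
    simpa only [proxModel, hψ, hgradQ] using (hw i).trans (min_le_left _ _)
  have hstart : φ xb - φ xs ≤ F xb - F xs + β₂ / 6 * ‖xb - xs‖ ^ 3 := by
    have htaylor := abs_le.1 (abs_sub_quadraticModel_le (hf2.differentiable two_ne_zero)
      hf2.differentiable_gradient hHessLip xb xs)
    rw [hφ, hφ, hF, hF, ← norm_neg, neg_sub]
    simp only [quadraticModel, sub_self, inner_zero_right, map_zero, mul_zero, add_zero]
      at htaylor ⊢
    linarith [htaylor.2]
  intro i
  calc φ (y i) - φ xs ≤ (1 - lam) ^ i * (φ (y 0) - φ xs) :=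
        le_geom (u := fun k => φ (y k) - φ xs) (sub_nonneg.2 hlam1) i fun k _ => hcontract k
    _ ≤ _ := by
      rw [mul_comm, hy0, ← hlam]
      exact mul_le_mul_of_nonneg_right hstart (pow_nonneg (sub_nonneg.2 hlam1) i)

/-- Theorem: linear convergence of the first-order weak proximal oracle
scheme for the unregularized quadratic model, under strong convexity:
`φ(y_i) − φ(x*) ≤ (F(x̄) − F* + (β₂/6)·‖x̄ − x*‖³)·(1 − α/β̃)^{i−1}`.
Sequences are indexed from `0` here (the paper's `y₁` is `y 0`). -/
theorem stmt_6
    {E : Type*} [NormedAddCommGroup E] [InnerProductSpace ℝ E] [FiniteDimensional ℝ E]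
    (f R : E → ℝ) (β₂ : ℝ)
    (hfconv : ConvexOn ℝ Set.univ f)
    (hf2 : ContDiff ℝ 2 f)
    (hHessLip : ∀ u v : E,
      ‖fderiv ℝ (gradient f) u - fderiv ℝ (gradient f) v‖ ≤ β₂ * ‖u - v‖)
    (hR : ConvexOn ℝ Set.univ R)
    (F : E → ℝ) (hF : ∀ u, F u = f u + R u)
    (xs : E) (hmin : ∀ u, F xs ≤ F u)
    (xb : E) (α βt : ℝ) (hα : 0 < α) (hαβ : α ≤ βt)
    (hHess : ∀ h : E,
      α * ‖h‖ ^ 2 ≤ ⟪(fderiv ℝ (gradient f) xb) h, h⟫ ∧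
      ⟪(fderiv ℝ (gradient f) xb) h, h⟫ ≤ βt * ‖h‖ ^ 2)
    (Q φ : E → ℝ)
    (hQ : ∀ w, Q w =
      ⟪gradient f xb, w - xb⟫
        + (1 / 2) * ⟪(fderiv ℝ (gradient f) xb) (w - xb), w - xb⟫)
    (hφ : ∀ w, φ w = Q w + R w)
    (ψ : E → E → ℝ) (lam : ℝ) (hlam : lam = α / βt)
    (hψ : ∀ y u, ψ y u =
      ⟪gradient Q y, u - y⟫ + (lam * βt / 2) * ‖u - y‖ ^ 2 + R u)
    (y w : ℕ → E) (hy0 : y 0 = xb)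
    (hw : ∀ i, ψ (y i) (w i) ≤ min (ψ (y i) xs) (ψ (y i) (y i)))
    (hyupd : ∀ i, y (i + 1) = (1 - lam) • y i + lam • w i) :
    ∀ i, φ (y i) - φ xs ≤
      (F xb - F xs + (β₂ / 6) * ‖xb - xs‖ ^ 3) * (1 - α / βt) ^ i :=
  stmt_6_general f R β₂ hf2 hHessLip hR F hF xs xb α βt hα hαβ hHess Q φ hQ hφ ψ lam hlam hψ y w hy0
    hw hyupd
end

section
/- Let E be a real inner product space, Q : E → ℝ differentiable satisfying the smoothness inequality Q(b) ≤ Q(a) + ⟨∇Q(a), b − a⟩ + (β̃/2)‖b − a‖² for all a, b ∈ E with β̃ > 0, and R : E → ℝ convex. For y ∈ E and λ ∈ [0,1] define ψ_{y,λ}(u) = ⟨∇Q(y), u − y⟩ + (λβ̃/2)‖u − y‖² + R(u) and φ = Q + R. Then for all y, w ∈ E and λ ∈ [0,1]: φ((1 − λ)y + λw) ≤ φ(y) − λ·R(y) + λ·ψ_{y,λ}(w). In particular, if ψ_{y,λ}(w) ≤ ψ_{y,λ}(y) = R(y), then φ((1 − λ)y + λw) ≤ φ(y). -/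
open RealInnerProductSpace

/-- descent-type inequality for the first-order weak proximal oracle step:
for a `β̃`-smooth `Q` and convex `R`, with `φ = Q + R` and
`ψ_{y,λ}(u) = ⟨∇Q(y), u − y⟩ + (λβ̃/2)‖u − y‖² + R(u)`,
one has `φ((1 − λ)y + λw) ≤ φ(y) − λR(y) + λψ_{y,λ}(w)`; in particular `ψ_{y,λ}(y) = R(y)`,
and if `ψ_{y,λ}(w) ≤ ψ_{y,λ}(y)` then `φ((1 − λ)y + λw) ≤ φ(y)`. -/
theorem stmt_8
    {E : Type*} [NormedAddCommGroup E] [InnerProductSpace ℝ E]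
    (Q R : E → ℝ) (βt : ℝ) (hβt : 0 < βt)
    (hQdiff : Differentiable ℝ Q)
    (hsmooth : ∀ a b : E, Q b ≤ Q a + fderiv ℝ Q a (b - a) + (βt / 2) * ‖b - a‖ ^ 2)
    (hR : ConvexOn ℝ Set.univ R)
    (φ : E → ℝ) (hφ : ∀ u, φ u = Q u + R u)
    (ψ : E → ℝ → E → ℝ)
    (hψ : ∀ y lam u, ψ y lam u =
      fderiv ℝ Q y (u - y) + (lam * βt / 2) * ‖u - y‖ ^ 2 + R u) :
    ∀ (y w : E) (lam : ℝ), lam ∈ Set.Icc (0 : ℝ) 1 →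
      (φ ((1 - lam) • y + lam • w) ≤ φ y - lam * R y + lam * ψ y lam w) ∧
      ψ y lam y = R y ∧
      (ψ y lam w ≤ ψ y lam y → φ ((1 - lam) • y + lam • w) ≤ φ y) := by
  intro y w lam hlam
  obtain ⟨h0, h1⟩ := hlam
  set x := (1 - lam) • y + lam • w with hx
  have hxy : x - y = lam • (w - y) := by
    simp [hx, smul_sub, sub_smul]; abel
  have hQx : Q x ≤ Q y + lam * fderiv ℝ Q y (w - y) + (lam * βt / 2) * (lam * ‖w - y‖ ^ 2) := by
    have := hsmooth y x
    rw [hxy] at this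
    simp only [map_smul, norm_smul, smul_eq_mul] at this
    calc Q x ≤ Q y + lam * fderiv ℝ Q y (w - y) + βt / 2 * (‖lam‖ * ‖w - y‖) ^ 2 := this
      _ ≤ _ := by
          rw [Real.norm_eq_abs, abs_of_nonneg h0]
          have : βt / 2 * (lam * ‖w - y‖) ^ 2 = lam * βt / 2 * (lam * ‖w - y‖ ^ 2) := by ring
          rw [this]
  have hRx : R x ≤ (1 - lam) * R y + lam * R w := by
    have := hR.2 (Set.mem_univ y) (Set.mem_univ w) (by linarith : (0:ℝ) ≤ 1 - lam) h0 (by ring)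
    simpa [smul_eq_mul] using this
  have key : φ x ≤ φ y - lam * R y + lam * ψ y lam w := by
    rw [hφ, hφ, hψ]
    have hl2 : lam * βt / 2 * (lam * ‖w - y‖ ^ 2) ≤ lam * (lam * βt / 2 * ‖w - y‖ ^ 2) :=
      le_of_eq (by ring)
    nlinarith [hQx, hRx]
  have hpsiy : ψ y lam y = R y := by
    simp [hψ]
  refine ⟨key, hpsiy, fun h => ?_⟩
  rw [hpsiy] at h
  nlinarith [mul_le_mul_of_nonneg_left h h0]
end

section
/- Let E be a real inner product space, Q : E → ℝ differentiable satisfying, for all a, b ∈ E, both the smoothness inequality Q(b) ≤ Q(a) + ⟨∇Q(a), b − a⟩ + (β̃/2)‖b − a‖² and the strong convexity inequality Q(b) ≥ Q(a) + ⟨∇Q(a), b − a⟩ + (α/2)‖b − a‖², where 0 < α ≤ β̃. Let R : E → ℝ be convex, φ = Q + R, and fix x* ∈ E. Let λ = α/β̃, and suppose w ∈ E satisfies ψ_{y,λ}(w) ≤ ψ_{y,λ}(x*), where ψ_{y,λ}(u) = ⟨∇Q(y), u − y⟩ + (λβ̃/2)‖u − y‖² + R(u). Then φ((1 − λ)y +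 λw) − φ(x*) ≤ (1 − α/β̃)·(φ(y) − φ(x*)). -/
open RealInnerProductSpace

/-- contraction step for the first-order weak proximal oracle under
strong convexity: if `Q` is `α`-strongly convex and `β̃`-smooth, `λ = α/β̃`, and
`ψ_{y,λ}(w) ≤ ψ_{y,λ}(x*)`, then
`φ((1 − λ)y + λw) − φ(x*) ≤ (1 − α/β̃)·(φ(y) − φ(x*))`. -/
theorem stmt_9
    {E : Type*} [NormedAddCommGroup E] [InnerProductSpace ℝ E]
    (Q R : E → ℝ) (α βt : ℝ) (hα : 0 < α) (hαβ : α ≤ βt)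
    (hQdiff : Differentiable ℝ Q)
    (hsmooth : ∀ a b : E, Q b ≤ Q a + fderiv ℝ Q a (b - a) + (βt / 2) * ‖b - a‖ ^ 2)
    (hsc : ∀ a b : E, Q a + fderiv ℝ Q a (b - a) + (α / 2) * ‖b - a‖ ^ 2 ≤ Q b)
    (hR : ConvexOn ℝ Set.univ R)
    (φ : E → ℝ) (hφ : ∀ u, φ u = Q u + R u)
    (xs : E)
    (ψ : E → E → ℝ) (lam : ℝ) (hlam : lam = α / βt)
    (hψ : ∀ y u, ψ y u =
      fderiv ℝ Q y (u - y) + (lam * βt / 2) * ‖u - y‖ ^ 2 + R u)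
    (y w : E) (hw : ψ y w ≤ ψ y xs) :
    φ ((1 - lam) • y + lam • w) - φ xs ≤ (1 - α / βt) * (φ y - φ xs) := by
  have hβ : 0 < βt := lt_of_lt_of_le hα hαβ
  have hlam0 : 0 ≤ lam := by rw [hlam]; positivity
  have hlam1 : lam ≤ 1 := by rw [hlam]; exact div_le_one_of_le₀ hαβ hβ.le
  have hlamβ : lam * βt = α := by rw [hlam]; field_simp
  set xp := (1 - lam) • y + lam • w with hxp
  have hdiff : xp - y = lam • (w - y) := by
    rw [hxp]; module
  have hfl : fderiv ℝ Q y (xp - y) = lam * fderiv ℝ Q y (w - y) := by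
    rw [hdiff, map_smul]; rfl
  have hnorm : ‖xp - y‖ ^ 2 = lam ^ 2 * ‖w - y‖ ^ 2 := by
    rw [hdiff, norm_smul, Real.norm_eq_abs, mul_pow, sq_abs]
  have hRconv : R xp ≤ (1 - lam) * R y + lam * R w := by
    have := hR.2 (Set.mem_univ y) (Set.mem_univ w) (show (0:ℝ) ≤ 1 - lam by linarith) hlam0 (by ring)
    simpa [hxp, smul_eq_mul] using this
  have h1 := hsmooth y xp
  rw [hfl, hnorm] at h1
  have h1b : Q xp ≤ Q y + lam * fderiv ℝ Q y (w - y) + (α * lam / 2) * ‖w - y‖ ^ 2 := by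
    have he : βt / 2 * (lam ^ 2 * ‖w - y‖ ^ 2) = (α * lam / 2) * ‖w - y‖ ^ 2 := by
      rw [← hlamβ]; ring
    linarith [h1, he.le, he.ge]
  have hpsi := hw
  rw [hψ y w, hψ y xs, hlamβ] at hpsi
  have hA := mul_le_mul_of_nonneg_left hpsi hlam0
  have h2 := hsc y xs
  have hB := mul_le_mul_of_nonneg_left h2 hlam0
  rw [hφ xp, hφ y, hφ xs, ← hlam]
  nlinarith [h1b, hA, hB, hRconv]
end

section
/- Let K ⊆ ℝⁿ be a closed convex set that is contained in the nonnegative orthant and is invariant under coordinate permutations (for every permutation σ of {1,…,n} and x ∈ K, the vector (x_{σ(1)},…,x_{σ(n)}) ∈ K). Let x* ∈ K have at most s nonzero entries. Let z ∈ ℝⁿ and let T ⊆ {1,…,n} with |T| = s be a set of s largest (signed) entries of z, i.e. z_i ≥ z_j for all i ∈ T and j ∉ T. Let z' be a minimizer of ‖w − z‖ over the set {w ∈ K : w_j = 0 for all j ∉ T}. Then ‖z' − z‖ ≤ ‖x* − z‖; consequently, for any y, g ∈ ℝⁿ and ρ > 0 with z = y − g/ρ, we have ⟨g, z' − y⟩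 + (ρ/2)‖z' − y‖² ≤ ⟨g, x* − y⟩ + (ρ/2)‖x* − y‖². -/
open RealInnerProductSpace

private lemma sq_norm_euc {n : ℕ} (v : EuclideanSpace ℝ (Fin n)) :
    ‖v‖ ^ 2 = ∑ i, (v i) ^ 2 := by
  rw [EuclideanSpace.norm_eq, Real.sq_sqrt (by positivity)]
  simp [sq_abs]

private lemma prox_expand {n : ℕ} (g y u : EuclideanSpace ℝ (Fin n)) (ρ : ℝ) (hρ : 0 < ρ) :
    ⟪g, u - y⟫ + (ρ / 2) * ‖u - y‖ ^ 2
      = (ρ / 2) * ‖u - (y - ρ⁻¹ • g)‖ ^ 2 - (ρ / 2) * ‖ρ⁻¹ • g‖ ^ 2 := by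
  have h : u - (y - ρ⁻¹ • g) = (u - y) + ρ⁻¹ • g := by abel
  rw [h, norm_add_sq_real]
  rw [real_inner_smul_right, real_inner_comm]
  field_simp
  ring

/-- greedy projection onto sparse vectors in a nonnegative,
permutation-invariant set, Lemma `wpoVecImp`, nonnegative case: the restricted projection
`z'` onto the `s` largest entries of `z` is at least as close to `z` as the `s`-sparse point
`x* ∈ K`; consequently, `z'` beats `x*` in the quadratic prox model built from `z = y − g/ρ`. -/
theorem stmt_13
    (n s : ℕ) (K : Set (EuclideanSpace ℝ (Fin n)))
    (hKclosed : IsClosed K) (hKconv : Convex ℝ K)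
    (hKpos : ∀ x ∈ K, ∀ i, 0 ≤ x i)
    (hKperm : ∀ σ : Equiv.Perm (Fin n), ∀ x ∈ K, WithLp.toLp 2 (fun i => x (σ i)) ∈ K)
    (xs : EuclideanSpace ℝ (Fin n)) (hxs : xs ∈ K)
    (hnnz : Set.ncard {i | xs i ≠ 0} ≤ s)
    (z : EuclideanSpace ℝ (Fin n))
    (T : Finset (Fin n)) (hTcard : T.card = s)
    (hTtop : ∀ i ∈ T, ∀ j ∉ T, z j ≤ z i)
    (z' : EuclideanSpace ℝ (Fin n))
    (hz'K : z' ∈ K) (hz'supp : ∀ j ∉ T, z' j = 0)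
    (hz'min : ∀ w ∈ K, (∀ j ∉ T, w j = 0) → ‖z' - z‖ ≤ ‖w - z‖) :
    ‖z' - z‖ ≤ ‖xs - z‖ ∧
      ∀ (g y : EuclideanSpace ℝ (Fin n)) (ρ : ℝ), 0 < ρ → z = y - ρ⁻¹ • g →
        ⟪g, z' - y⟫ + (ρ / 2) * ‖z' - y‖ ^ 2 ≤ ⟪g, xs - y⟫ + (ρ / 2) * ‖xs - y‖ ^ 2 := by
  classical
  -- the support finset
  set S : Finset (Fin n) := Finset.univ.filter (fun i => xs i ≠ 0) with hSdef
  have hS_mem : ∀ i, i ∈ S ↔ xs i ≠ 0 := by intro i; simp [hSdef]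
  have hScard : S.card ≤ s := by
    have hset : {i | xs i ≠ 0} = ↑S := by ext i; simp [hSdef]
    rwa [hset, Set.ncard_coe_finset] at hnnz
  set A : Finset (Fin n) := S \ T with hAdef
  have hA_le : A.card ≤ (T \ S).card := by
    have h1 : A.card + (S ∩ T).card = S.card := Finset.card_sdiff_add_card_inter S T
    have h2 : (T \ S).card + (T ∩ S).card = T.card := Finset.card_sdiff_add_card_inter T S
    have h3 : (S ∩ T).card = (T ∩ S).card := by rw [Finset.inter_comm]
    have h4 : S.card ≤ T.card := by rw [hTcard]; exact hScard
    omega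
  obtain ⟨B, hBsub, hBcard⟩ := Finset.exists_subset_card_eq (s := T \ S) (n := A.card) hA_le
  have e : (A : Finset (Fin n)) ≃ (B : Finset (Fin n)) :=
    Finset.equivOfCardEq hBcard.symm
  have hAB : ∀ i, i ∈ A → i ∉ B := by
    intro i hiA hiB
    exact (Finset.mem_sdiff.1 (hBsub hiB)).2 (Finset.mem_sdiff.1 hiA).1
  -- the involution
  set f : Fin n → Fin n := fun i =>
    if h : i ∈ A then (e ⟨i, h⟩ : Fin n)
    else if h : i ∈ B then (e.symm ⟨i, h⟩ : Fin n) else i with hfdef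
  have hfA : ∀ i (h : i ∈ A), f i = (e ⟨i, h⟩ : Fin n) := by
    intro i h; simp [hfdef, h]
  have hfB : ∀ i (h : i ∈ B), f i = (e.symm ⟨i, h⟩ : Fin n) := by
    intro i h; simp [hfdef, h, fun hA' => hAB i hA' h]
    intro h'; exact absurd h' (fun hA' => hAB i hA' h)
  have hfother : ∀ i, i ∉ A → i ∉ B → f i = i := by
    intro i h1 h2; simp [hfdef, h1, h2]
  have hinv : Function.Involutive f := by
    intro i
    by_cases hiA : i ∈ A
    · rw [hfA i hiA]
      have hmB : (e ⟨i, hiA⟩ : Fin n) ∈ B := (e ⟨i, hiA⟩).2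
      have hmA : (e ⟨i, hiA⟩ : Fin n) ∉ A := fun h => hAB _ h hmB
      rw [hfdef]
      simp only [hmA, dif_neg, not_false_iff, hmB, dif_pos]
      rw [show (⟨(e ⟨i, hiA⟩ : Fin n), hmB⟩ : {x // x ∈ B}) = e ⟨i, hiA⟩ from Subtype.ext rfl]
      simp
    · by_cases hiB : i ∈ B
      · rw [hfB i hiB]
        have hmA : (e.symm ⟨i, hiB⟩ : Fin n) ∈ A := (e.symm ⟨i, hiB⟩).2
        rw [hfdef]
        simp only [hmA, dif_pos]
        rw [show (⟨(e.symm ⟨i, hiB⟩ : Fin n), hmA⟩ : {x // x ∈ A}) = e.symm ⟨i, hiB⟩ from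
          Subtype.ext rfl]
        simp
      · rw [hfother i hiA hiB, hfother i hiA hiB]
  set σ : Equiv.Perm (Fin n) := hinv.toPerm with hσdef
  have hσapp : ∀ i, σ i = f i := fun i => rfl
  -- the candidate w
  set w : EuclideanSpace ℝ (Fin n) := WithLp.toLp 2 (fun i => xs (σ i)) with hwdef
  have hwK : w ∈ K := hKperm σ xs hxs
  -- w supported on T
  have hwsupp : ∀ j ∉ T, w j = 0 := by
    intro j hjT
    by_contra hne
    have hσS : σ j ∈ S := (hS_mem _).2 hne
    by_cases hjA : j ∈ A
    · have : f j ∈ B := by rw [hfA j hjA]; exact (e ⟨j, hjA⟩).2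
      have : σ j ∉ S := (Finset.mem_sdiff.1 (hBsub this)).2
      exact this hσS
    · by_cases hjB : j ∈ B
      · exact hjT (Finset.mem_sdiff.1 (hBsub hjB)).1
      · have : σ j = j := hfother j hjA hjB
        rw [this] at hσS
        exact hjA (Finset.mem_sdiff.2 ⟨hσS, hjT⟩)
  -- key norm inequality
  have hwz : ‖w - z‖ ≤ ‖xs - z‖ := by
    have hsq : ‖w - z‖ ^ 2 ≤ ‖xs - z‖ ^ 2 := by
      rw [sq_norm_euc, sq_norm_euc]
      have hsub : ∀ (v : EuclideanSpace ℝ (Fin n)) i, (v - z) i = v i - z i := by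
        intro v i; simp
      simp only [hsub]
      have expand : ∀ a b : ℝ, (a - b) ^ 2 = a ^ 2 - 2 * (a * b) + b ^ 2 := by intros; ring
      simp only [expand, hwdef, PiLp.toLp_apply]
      rw [Finset.sum_add_distrib, Finset.sum_add_distrib, Finset.sum_sub_distrib,
        Finset.sum_sub_distrib]
      have h1 : ∑ i, xs (σ i) ^ 2 = ∑ i, xs i ^ 2 := Equiv.sum_comp σ (fun i => xs i ^ 2)
      have h2 : ∑ i, xs i * z i ≤ ∑ i, xs (σ i) * z i := by
        have hre : ∑ i, xs (σ i) * z i = ∑ i, xs i * z (σ i) := by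
          apply Fintype.sum_equiv σ
          intro i
          have : z i = z (σ (σ i)) := by
            rw [hσapp, hσapp]; exact (congrArg z (hinv i)).symm
          rw [← this]
        rw [hre]
        apply Finset.sum_le_sum
        intro j _
        by_cases hjA : j ∈ A
        · have hjS : j ∈ S := (Finset.mem_sdiff.1 hjA).1
          have hjT : j ∉ T := (Finset.mem_sdiff.1 hjA).2
          have hσB : σ j ∈ B := by rw [hσapp, hfA j hjA]; exact (e ⟨j, hjA⟩).2
          have hσT : σ j ∈ T := (Finset.mem_sdiff.1 (hBsub hσB)).1
          exact mul_le_mul_of_nonneg_left (hTtop _ hσT _ hjT) (hKpos xs hxs j)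
        · by_cases hjB : j ∈ B
          · have : xs j = 0 := by
              by_contra hne
              exact (Finset.mem_sdiff.1 (hBsub hjB)).2 ((hS_mem _).2 hne)
            simp [this]
          · rw [hσapp, hfother j hjA hjB]
      have h2' : ∑ i, 2 * (xs i * z i) ≤ ∑ i, 2 * (xs (σ i) * z i) := by
        rw [← Finset.mul_sum, ← Finset.mul_sum]
        linarith
      linarith
    have h0 : (0:ℝ) ≤ ‖xs - z‖ := norm_nonneg _
    nlinarith [norm_nonneg (w - z)]
  have main : ‖z' - z‖ ≤ ‖xs - z‖ := le_trans (hz'min w hwK hwsupp) hwz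
  refine ⟨main, ?_⟩
  intro g y ρ hρ hz
  rw [prox_expand g y z' ρ hρ, prox_expand g y xs ρ hρ, ← hz]
  have hsq : ‖z' - z‖ ^ 2 ≤ ‖xs - z‖ ^ 2 := by
    nlinarith [norm_nonneg (z' - z), norm_nonneg (xs - z)]
  nlinarith
end

section
/- Let K ⊆ ℝⁿ be a closed convex set that is invariant under coordinate permutations and under coordinate-wise sign flips (for every ε ∈ {−1,1}ⁿ and x ∈ K, the vector (ε₁x₁,…,εₙxₙ) ∈ K). Let x* ∈ K have at most s nonzero entries. Let z ∈ ℝⁿ and let T ⊆ {1,…,n} with |T| = s be a set of s largest-in-absolute-value entries of z, i.e. |z_i| ≥ |z_j| for all i ∈ T and j ∉ T. Let z' be a minimizer of ‖w − z‖ over the set {w ∈ K : w_j = 0 for all j ∉ T}. Then ‖z' − z‖ ≤ ‖x* − z‖. -/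
/-! Let `S` be the support of `x*`. As `|S| ≤ |T|`, some permutation `τ` fixes `S ∩ T` and moves
`S \ T` into `T \ S`. Permuting `x*` by `τ` and flipping signs to match those of `z` gives a point
`w ∈ K` supported on `T` with `(w_i - z_i)² = (|x*_{τ⁻¹ i}| - |z_i|)²`. Since `τ` moves the mass of
`|x*|` only onto coordinates where `|z|` is at least as large, `‖w - z‖² ≤ ∑ (|x*_i| - |z_i|)²
≤ ‖x* - z‖²`, and minimality of `z'` concludes. -/

open RealInnerProductSpace Finset

theorem Finset.exists_perm_mapsTo_of_card_le {α : Type*} [Fintype α] [DecidableEq α]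
    {S T : Finset α} (h : S.card ≤ T.card) :
    ∃ τ : Equiv.Perm α, Set.MapsTo τ S T ∧ ∀ i ∈ S, i ∈ T → τ i = i := by
  obtain ⟨e⟩ : Nonempty (↥(S \ T) ↪ ↥(T \ S)) := Function.Embedding.nonempty_of_card_le <| by
    rw [Fintype.card_coe, Fintype.card_coe]; exact card_sdiff_le_card_sdiff_iff.mpr h
  let f (i : α) : α := if hi : i ∈ S \ T then e ⟨i, hi⟩ else i
  have hf_moved (i : α) (hi : i ∈ S \ T) : f i = e ⟨i, hi⟩ := dif_pos hi
  have hf_fixed (i : α) (hi : i ∉ S \ T) : f i = i := dif_neg hi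
  have hf_moved_mem (i : α) (hi : i ∈ S \ T) : f i ∈ T \ S := hf_moved i hi ▸ (e _).2
  have hfT : ∀ i ∈ S, f i ∈ T := by
    intro i hiS
    by_cases hi : i ∈ S \ T
    · exact (mem_sdiff.mp (hf_moved_mem i hi)).1
    · rw [hf_fixed i hi]
      simpa [hiS] using hi
  have hf : Set.InjOn f S := by
    intro i hiS j hjS hij
    by_cases hi : i ∈ S \ T <;> by_cases hj : j ∈ S \ T
    · rw [hf_moved i hi, hf_moved j hj] at hij
      exact congrArg Subtype.val (e.injective (Subtype.ext hij))
    · rw [hf_fixed j hj] at hij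
      exact absurd hjS (mem_sdiff.mp (hij ▸ hf_moved_mem i hi)).2
    · rw [hf_fixed i hi] at hij
      exact absurd hiS (mem_sdiff.mp (hij ▸ hf_moved_mem j hj)).2
    · rwa [hf_fixed i hi, hf_fixed j hj] at hij
  obtain ⟨g, hg⟩ := exists_equiv_extend_of_card_eq card_univ.symm (subset_univ _) hf
  refine ⟨g.trans (Equiv.subtypeUnivEquiv mem_univ), fun i hi => ?_, fun i hiS hiT => ?_⟩
  · simpa [hg i hi] using hfT i hi
  · simpa [hg i hiS] using hf_fixed i (by simp [hiT])

theorem exists_sign_mul_sub_sq_eq_abs_sub_abs_sq (a c : ℝ) :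
    ∃ ε : ℝ, (ε = 1 ∨ ε = -1) ∧ (ε * a - c) ^ 2 = (|a| - |c|) ^ 2 := by
  rcases le_total 0 (a * c) with h | h
  · have hac : |a| * |c| = a * c := by rw [← abs_mul, abs_of_nonneg h]
    exact ⟨1, .inl rfl, by linear_combination -(sq_abs a) - sq_abs c + 2 * hac⟩
  · have hac : |a| * |c| = -(a * c) := by rw [← abs_mul, abs_of_nonpos h]
    exact ⟨-1, .inr rfl, by linear_combination -(sq_abs a) - sq_abs c + 2 * hac⟩

theorem sum_comp_symm_sub_sq_le {ι : Type*} [Fintype ι] {u v : ι → ℝ} (σ : Equiv.Perm ι)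
    (hu : ∀ i, 0 ≤ u i) (huv : ∀ i, u i ≠ 0 → v i ≤ v (σ i)) :
    ∑ i, (u (σ.symm i) - v i) ^ 2 ≤ ∑ i, (u i - v i) ^ 2 := by
  have hterm (i : ι) : (u i - v (σ i)) ^ 2 - v (σ i) ^ 2 ≤ (u i - v i) ^ 2 - v i ^ 2 := by
    by_cases hi : u i = 0
    · simp [hi]
    · nlinarith [mul_le_mul_of_nonneg_left (huv i hi) (hu i)]
  calc ∑ i, (u (σ.symm i) - v i) ^ 2 = ∑ i, (u i - v (σ i)) ^ 2 := by
        simpa using Equiv.sum_comp σ.symm fun i => (u i - v (σ i)) ^ 2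
    _ = ∑ i, ((u i - v (σ i)) ^ 2 - v (σ i) ^ 2) + ∑ i, v i ^ 2 := by
        rw [sum_sub_distrib, Equiv.sum_comp σ fun i => v i ^ 2]; ring
    _ ≤ ∑ i, ((u i - v i) ^ 2 - v i ^ 2) + ∑ i, v i ^ 2 :=
        add_le_add_left (sum_le_sum fun i _ => hterm i) _
    _ = ∑ i, (u i - v i) ^ 2 := by rw [sum_sub_distrib]; ring

theorem stmt_14_general
    (n s : ℕ) (K : Set (EuclideanSpace ℝ (Fin n)))
    (hKperm : ∀ σ : Equiv.Perm (Fin n), ∀ x ∈ K, WithLp.toLp 2 (fun i => x (σ i)) ∈ K)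
    (hKsign : ∀ ε : Fin n → ℝ, (∀ i, ε i = 1 ∨ ε i = -1) →
      ∀ x ∈ K, WithLp.toLp 2 (fun i => ε i * x i) ∈ K)
    (xs : EuclideanSpace ℝ (Fin n)) (hxs : xs ∈ K)
    (hnnz : Set.ncard {i | xs i ≠ 0} ≤ s)
    (z : EuclideanSpace ℝ (Fin n))
    (T : Finset (Fin n)) (hTcard : T.card = s)
    (hTtop : ∀ i ∈ T, ∀ j ∉ T, |z j| ≤ |z i|)
    (z' : EuclideanSpace ℝ (Fin n))
    (hz'min : ∀ w ∈ K, (∀ j ∉ T, w j = 0) → ‖z' - z‖ ≤ ‖w - z‖) :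
    ‖z' - z‖ ≤ ‖xs - z‖ := by
  classical
  set S := univ.filter (xs · ≠ 0)
  have hST : S.card ≤ T.card := by
    rw [hTcard, ← Set.ncard_coe_finset]; simpa [S] using hnnz
  obtain ⟨τ, hτST, hτfix⟩ := exists_perm_mapsTo_of_card_le hST
  choose ε hε hεsq using fun i => exists_sign_mul_sub_sq_eq_abs_sub_abs_sq (xs (τ.symm i)) (z i)
  set w : EuclideanSpace ℝ (Fin n) := WithLp.toLp 2 fun i => ε i * xs (τ.symm i)
  have hwK : w ∈ K := hKsign ε hε _ (hKperm τ.symm xs hxs)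
  have hwT : ∀ j ∉ T, w j = 0 := by
    intro j hj
    suffices xs (τ.symm j) = 0 by simp [w, this]
    by_contra h
    exact hj (by simpa using hτST (by simpa [S] using h : τ.symm j ∈ S))
  have hτz : ∀ i, |xs i| ≠ 0 → |z i| ≤ |z (τ i)| := by
    intro i hi
    have hiS : i ∈ S := by simpa [S] using hi
    by_cases hiT : i ∈ T
    · rw [hτfix i hiS hiT]
    · exact hTtop _ (hτST hiS) i hiT
  have hdist : ‖w - z‖ ^ 2 ≤ ‖xs - z‖ ^ 2 := by
    simp only [EuclideanSpace.real_norm_sq_eq, PiLp.sub_apply]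
    calc ∑ i, (w i - z i) ^ 2 = ∑ i, (|xs (τ.symm i)| - |z i|) ^ 2 := by simp [w, hεsq]
      _ ≤ ∑ i, (|xs i| - |z i|) ^ 2 := sum_comp_symm_sub_sq_le τ (fun i => abs_nonneg _) hτz
      _ ≤ ∑ i, (xs i - z i) ^ 2 :=
        sum_le_sum fun i _ => sq_le_sq.mpr (abs_abs_sub_abs_le_abs_sub (xs i) (z i))
  exact (hz'min w hwK hwT).trans ((sq_le_sq₀ (norm_nonneg _) (norm_nonneg _)).mp hdist)

/-- greedy projection onto sparse vectors in a sign-flip- and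
permutation-invariant set, Lemma `wpoVecImp`, sign-symmetric case: the restricted
projection `z'` onto the `s` largest-in-absolute-value entries of `z` is at least as close
to `z` as the `s`-sparse point `x* ∈ K`. -/
theorem stmt_14
    (n s : ℕ) (K : Set (EuclideanSpace ℝ (Fin n)))
    (hKclosed : IsClosed K) (hKconv : Convex ℝ K)
    (hKperm : ∀ σ : Equiv.Perm (Fin n), ∀ x ∈ K, WithLp.toLp 2 (fun i => x (σ i)) ∈ K)
    (hKsign : ∀ ε : Fin n → ℝ, (∀ i, ε i = 1 ∨ ε i = -1) →
      ∀ x ∈ K, WithLp.toLp 2 (fun i => ε i * x i) ∈ K)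
    (xs : EuclideanSpace ℝ (Fin n)) (hxs : xs ∈ K)
    (hnnz : Set.ncard {i | xs i ≠ 0} ≤ s)
    (z : EuclideanSpace ℝ (Fin n))
    (T : Finset (Fin n)) (hTcard : T.card = s)
    (hTtop : ∀ i ∈ T, ∀ j ∉ T, |z j| ≤ |z i|)
    (z' : EuclideanSpace ℝ (Fin n))
    (hz'K : z' ∈ K) (hz'supp : ∀ j ∉ T, z' j = 0)
    (hz'min : ∀ w ∈ K, (∀ j ∉ T, w j = 0) → ‖z' - z‖ ≤ ‖w - z‖) :
    ‖z' - z‖ ≤ ‖xs - z‖ :=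
  stmt_14_general n s K hKperm hKsign xs hxs hnnz z T hTcard hTtop z' hz'min
end

section
/- Let m, n be positive integers, p = min{m,n}, and let K ⊆ ℝᵖ be a convex compact set contained in the nonnegative orthant and invariant under coordinate permutations. Let x* ∈ ℝ^{m×n} have a singular value decomposition x* = U* diag(σ*) V*ᵀ with U*ᵀU* = I, V*ᵀV* = I, σ* ∈ K, and σ* having at most s nonzero entries. Let z ∈ ℝ^{m×n} have a singular value decomposition z = U_z diag(σ_z) V_zᵀ with U_zᵀU_z = I, V_zᵀV_z = I and σ_z nonnegative and sorted in nonincreasing order. Let T = {1,…,s} (indices of the s largest entries of σ_z), let σ' be a minimizer of ‖τ − σ_z‖ over {τ ∈ K : τ_j = 0 for all j ∉ T}, and set z' = U_z diag(σ') V_zᵀ. Then ‖z' − z‖_F ≤ ‖x* − z‖_F, where ‖·‖_F is the Frobenius norm. -/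
open Matrix

/-- The `m × n` "diagonal" matrix with the vector `σ ∈ ℝ^{min m n}` on its main diagonal. -/
noncomputable def diagMN (m n : ℕ) (σ : Fin (min m n) → ℝ) : Matrix (Fin m) (Fin n) ℝ :=
  fun i j => if h : (i : ℕ) = (j : ℕ) ∧ (i : ℕ) < min m n then σ ⟨(i : ℕ), h.2⟩ else 0

/-- The Frobenius norm of a real `m × n` matrix. -/
noncomputable def frobNorm {m n : ℕ} (A : Matrix (Fin m) (Fin n) ℝ) : ℝ :=
  Real.sqrt (∑ i, ∑ j, (A i j) ^ 2)

/-!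
Let `τ` be `σ*` sorted nonincreasingly. Since `σ*` has at most `s` nonzero entries, `τ` is a
competitor in the restricted projection problem, so `‖σ' - σ_z‖ ≤ ‖τ - σ_z‖`, and the left side
is `‖z' - z‖_F` by orthogonal invariance. The remaining bound `‖τ - σ_z‖ ≤ ‖x* - z‖_F` is
Mirsky's inequality: after expanding both squares it is von Neumann's trace inequality
`⟨x*, z⟩ ≤ ∑ τ_k σ_z k`. With `P = U*ᵀ U_z` and `Q = V*ᵀ V_z` orthogonal,
`⟨x*, z⟩ = ∑_{l,k} σ*_l σ_z k P_lk Q_lk`, and `|P_lk Q_lk|` is doubly substochastic by AM-GM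
on the rows and columns of `P` and `Q`. Such a matrix lies below a doubly stochastic one, so by
Birkhoff's theorem the bilinear form is maximised at a permutation matrix, where the
rearrangement inequality bounds it by the pairing of the two sorted vectors.
-/

section DoublySubstochastic

variable {R n : Type*} [Field R] [LinearOrder R] [Fintype n]

structure IsDoublySubstochastic (M : Matrix n n R) : Prop where
  nonneg : ∀ i j, 0 ≤ M i j
  sum_row_le_one : ∀ i, ∑ j, M i j ≤ 1
  sum_col_le_one : ∀ j, ∑ i, M i j ≤ 1

namespace IsDoublySubstochastic

variable {M : Matrix n n R}

lemma submatrix (hM : IsDoublySubstochastic M) (e f : n ≃ n) :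
    IsDoublySubstochastic (M.submatrix e f) where
  nonneg i j := hM.nonneg (e i) (f j)
  sum_row_le_one i := (f.sum_comp (M (e i))).le.trans (hM.sum_row_le_one (e i))
  sum_col_le_one j := (e.sum_comp (M · (f j))).le.trans (hM.sum_col_le_one (f j))

/-- Adding the outer product of the row and column deficits, scaled by their common total,
fills `M` up to a doubly stochastic matrix (if that total is `0`, all deficits vanish). -/
lemma exists_mem_doublyStochastic_le [IsStrictOrderedRing R] [DecidableEq n]
    (hM : IsDoublySubstochastic M) :
    ∃ N ∈ doublyStochastic R n, ∀ i j, M i j ≤ N i j := by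
  let r : n → R := fun i => 1 - ∑ j, M i j
  let c : n → R := fun j => 1 - ∑ i, M i j
  let D := ∑ i, r i
  have hr : ∀ i, 0 ≤ r i := fun i => sub_nonneg.2 (hM.sum_row_le_one i)
  have hc : ∀ j, 0 ≤ c j := fun j => sub_nonneg.2 (hM.sum_col_le_one j)
  have hcD : ∑ j, c j = D := by
    simp only [c, D, r, Finset.sum_sub_distrib]
    rw [Finset.sum_comm]
  have cancel : ∀ {x : n → R}, (∀ i, 0 ≤ x i) → ∑ i, x i = D → ∀ i, x i * D / D = x i := by
    intro x hx hxD i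
    rcases eq_or_ne D 0 with hD | hD
    · simp [(Finset.sum_eq_zero_iff_of_nonneg fun i _ => hx i).1 (hxD.trans hD) i
        (Finset.mem_univ i)]
    · exact mul_div_cancel_right₀ _ hD
  have hE : ∀ i j, 0 ≤ r i * c j / D :=
    fun i j => div_nonneg (mul_nonneg (hr i) (hc j)) (Finset.sum_nonneg fun i _ => hr i)
  refine ⟨fun i j => M i j + r i * c j / D, mem_doublyStochastic_iff_sum.2
    ⟨fun i j => add_nonneg (hM.nonneg i j) (hE i j), fun i => ?_, fun j => ?_⟩,
    fun i j => le_add_of_nonneg_right (hE i j)⟩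
  · rw [Finset.sum_add_distrib, ← Finset.sum_div, ← Finset.mul_sum, hcD, cancel hr rfl]
    exact add_sub_cancel _ _
  · rw [Finset.sum_add_distrib, ← Finset.sum_div, ← Finset.sum_mul, mul_comm, cancel hc hcD]
    exact add_sub_cancel _ _

lemma sum_sum_mul_mul_le_of_monovary [IsStrictOrderedRing R] [DecidableEq n]
    (hM : IsDoublySubstochastic M) {f g : n → R} (hf : ∀ i, 0 ≤ f i) (hg : ∀ i, 0 ≤ g i)
    (hfg : Monovary f g) :
    ∑ i, ∑ j, f i * g j * M i j ≤ ∑ i, f i * g i := by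
  obtain ⟨N, hN, hMN⟩ := hM.exists_mem_doublyStochastic_le
  let F : Matrix n n R →ₗ[R] R :=
    { toFun := fun N => ∑ i, ∑ j, f i * g j * N i j
      map_add' := fun _ _ => by simp [mul_add, Finset.sum_add_distrib]
      map_smul' := fun _ _ => by simp [Finset.mul_sum, mul_comm, mul_left_comm] }
  rw [← SetLike.mem_coe, doublyStochastic_eq_convexHull_permMatrix] at hN
  obtain ⟨_, ⟨σ, rfl⟩, hσ⟩ := (F.convexOn convex_univ).exists_ge_of_mem_convexHull
    (Set.subset_univ _) hN
  calc ∑ i, ∑ j, f i * g j * M i j ≤ F N := Finset.sum_le_sum fun i _ => Finset.sum_le_sum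
          fun j _ => mul_le_mul_of_nonneg_left (hMN i j) (mul_nonneg (hf i) (hg j))
    _ ≤ F (σ.permMatrix R) := hσ
    _ = ∑ i, f i * g (σ i) := by simp [F]
    _ ≤ ∑ i, f i * g i := hfg.sum_mul_comp_perm_le_sum_mul

end IsDoublySubstochastic

end DoublySubstochastic

lemma sum_abs_mul_le_one {κ : Type*} [Fintype κ] {x y : κ → ℝ} (hx : ∑ k, x k ^ 2 ≤ 1)
    (hy : ∑ k, y k ^ 2 ≤ 1) : ∑ k, |x k * y k| ≤ 1 := by
  have amgm : ∀ k, |x k * y k| ≤ (x k ^ 2 + y k ^ 2) / 2 := fun k => by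
    have := two_mul_le_add_sq |x k| |y k|
    rw [sq_abs, sq_abs] at this
    rw [abs_mul]
    linarith
  calc ∑ k, |x k * y k| ≤ ∑ k, (x k ^ 2 + y k ^ 2) / 2 := Finset.sum_le_sum fun k _ => amgm k
    _ = ((∑ k, x k ^ 2) + ∑ k, y k ^ 2) / 2 := by rw [← Finset.sum_div, Finset.sum_add_distrib]
    _ ≤ 1 := by linarith

lemma sum_comp_le_sum_of_nonneg {κ α : Type*} [Fintype κ] [Fintype α] (e : κ ↪ α) {f : α → ℝ}
    (hf : ∀ i, 0 ≤ f i) :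
    ∑ k, f (e k) ≤ ∑ i, f i := by
  rw [← Finset.sum_map Finset.univ e f]
  exact Finset.sum_le_univ_sum_of_nonneg hf

section Orthogonal

variable {α : Type*} [Fintype α] [DecidableEq α] {P : Matrix α α ℝ}

lemma sum_apply_sq_col_of_mem_orthogonalGroup (hP : P ∈ orthogonalGroup α ℝ) (j : α) :
    ∑ i, P i j ^ 2 = 1 := by
  have := congrFun₂ ((mem_orthogonalGroup_iff' _ _).1 hP) j j
  simpa [mul_apply, sq] using this

lemma sum_apply_sq_row_of_mem_orthogonalGroup (hP : P ∈ orthogonalGroup α ℝ) (i : α) :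
    ∑ j, P i j ^ 2 = 1 := by
  have := congrFun₂ ((mem_orthogonalGroup_iff _ _).1 hP) i i
  simpa [mul_apply, sq] using this

lemma transpose_mul_mem_orthogonalGroup {P' : Matrix α α ℝ} (hP : P ∈ orthogonalGroup α ℝ)
    (hP' : P' ∈ orthogonalGroup α ℝ) : Pᵀ * P' ∈ orthogonalGroup α ℝ := by
  simpa [star_eq_conjTranspose] using mul_mem (Unitary.star_mem hP) hP'

variable {β κ : Type*} [Fintype β] [DecidableEq β] [Fintype κ] {Q : Matrix β β ℝ}

lemma isDoublySubstochastic_abs_hadamard_submatrix (hP : P ∈ orthogonalGroup α ℝ)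
    (hQ : Q ∈ orthogonalGroup β ℝ) (e : κ ↪ α) (e' : κ ↪ β) :
    IsDoublySubstochastic ((P.submatrix e e ⊙ Q.submatrix e' e').map abs) where
  nonneg _ _ := abs_nonneg _
  sum_row_le_one _ := sum_abs_mul_le_one
    ((sum_comp_le_sum_of_nonneg e fun _ => sq_nonneg _).trans_eq
      (sum_apply_sq_row_of_mem_orthogonalGroup hP _))
    ((sum_comp_le_sum_of_nonneg e' fun _ => sq_nonneg _).trans_eq
      (sum_apply_sq_row_of_mem_orthogonalGroup hQ _))
  sum_col_le_one _ := sum_abs_mul_le_one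
    ((sum_comp_le_sum_of_nonneg e fun _ => sq_nonneg _).trans_eq
      (sum_apply_sq_col_of_mem_orthogonalGroup hP _))
    ((sum_comp_le_sum_of_nonneg e' fun _ => sq_nonneg _).trans_eq
      (sum_apply_sq_col_of_mem_orthogonalGroup hQ _))

end Orthogonal

lemma transpose_submatrix_mul_submatrix {α κ R : Type*} [Fintype α] [AddCommMonoid R] [Mul R]
    (U U' : Matrix α α R) (e : κ → α) :
    (U.submatrix id e)ᵀ * U'.submatrix id e = (Uᵀ * U').submatrix e e := by
  rw [transpose_submatrix, submatrix_mul _ _ _ _ _ Function.bijective_id]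

section ThinProduct

variable {α β κ R : Type*} [Fintype κ] [DecidableEq κ] [CommSemiring R]

lemma mul_diagonal_mul_transpose_apply (X : Matrix α κ R) (Y : Matrix β κ R) (c : κ → R)
    (i : α) (j : β) : (X * diagonal c * Yᵀ) i j = ∑ k, c k * X i k * Y j k := by
  rw [mul_apply]
  exact Finset.sum_congr rfl fun k _ => by rw [mul_diagonal, transpose_apply]; ring

lemma sum_sum_mul_diagonal_mul_transpose [Fintype α] [Fintype β] (X X' : Matrix α κ R)
    (Y Y' : Matrix β κ R) (a b : κ → R) :
    ∑ i, ∑ j, (X * diagonal a * Yᵀ) i j * (X' * diagonal b * Y'ᵀ) i j =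
      ∑ l, ∑ k, a l * b k * ((Xᵀ * X') l k * (Yᵀ * Y') l k) := by
  simp only [mul_diagonal_mul_transpose_apply, Finset.sum_mul_sum]
  simp only [mul_apply, transpose_apply, Finset.mul_sum, Finset.sum_mul]
  rw [Finset.sum_congr rfl fun i _ => Finset.sum_comm, Finset.sum_comm]
  refine Finset.sum_congr rfl fun l _ => ?_
  rw [Finset.sum_congr rfl fun i _ => Finset.sum_comm, Finset.sum_comm]
  refine Finset.sum_congr rfl fun k _ => ?_
  rw [Finset.sum_comm]
  exact Finset.sum_congr rfl fun i _ => Finset.sum_congr rfl fun j _ => by ring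

end ThinProduct

section DiagMN

variable {m n : ℕ}

lemma diagMN_apply (a : Fin (min m n) → ℝ) (i : Fin m) (j : Fin n) :
    diagMN m n a i j = ∑ k, if Fin.castLE (min_le_left m n) k = i ∧
      Fin.castLE (min_le_right m n) k = j then a k else 0 := by
  unfold diagMN
  split_ifs with h
  · rw [Fintype.sum_eq_single ⟨i, h.2⟩ fun k hk => if_neg ?_]
    · simp [Fin.ext_iff, h.1]
    · simp only [Fin.ext_iff, Fin.val_castLE, ne_eq] at hk ⊢
      omega
  · refine (Finset.sum_eq_zero fun k _ => if_neg ?_).symm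
    simp only [Fin.ext_iff, Fin.val_castLE]
    omega

lemma diagMN_sub (a b : Fin (min m n) → ℝ) :
    diagMN m n a - diagMN m n b = diagMN m n (a - b) := by
  ext i j
  simp [diagMN_apply, ← Finset.sum_sub_distrib, apply_ite₂ (· - ·)]

lemma mul_diagMN_mul_transpose (U : Matrix (Fin m) (Fin m) ℝ) (V : Matrix (Fin n) (Fin n) ℝ)
    (a : Fin (min m n) → ℝ) :
    U * diagMN m n a * Vᵀ = U.submatrix id (Fin.castLEEmb (min_le_left m n)) * diagonal a *
      (V.submatrix id (Fin.castLEEmb (min_le_right m n)))ᵀ := by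
  ext i j
  simp only [mul_apply, diagMN_apply, submatrix_apply, transpose_apply, id, Finset.mul_sum,
    Finset.sum_mul, ite_and, mul_ite, ite_mul, mul_zero, zero_mul]
  rw [Finset.sum_congr rfl fun y _ => Finset.sum_comm, Finset.sum_comm]
  simp [diagonal_apply]

lemma sum_sum_mul_diagMN_mul_transpose (U U' : Matrix (Fin m) (Fin m) ℝ)
    (V V' : Matrix (Fin n) (Fin n) ℝ) (a b : Fin (min m n) → ℝ) :
    ∑ i, ∑ j, (U * diagMN m n a * Vᵀ) i j * (U' * diagMN m n b * V'ᵀ) i j =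
      ∑ l, ∑ k, a l * b k * ((Uᵀ * U').submatrix (Fin.castLEEmb (min_le_left m n))
        (Fin.castLEEmb (min_le_left m n)) ⊙ (Vᵀ * V').submatrix
          (Fin.castLEEmb (min_le_right m n)) (Fin.castLEEmb (min_le_right m n))) l k := by
  rw [mul_diagMN_mul_transpose, mul_diagMN_mul_transpose, sum_sum_mul_diagonal_mul_transpose,
    transpose_submatrix_mul_submatrix, transpose_submatrix_mul_submatrix]
  rfl

variable {U U' : Matrix (Fin m) (Fin m) ℝ} {V V' : Matrix (Fin n) (Fin n) ℝ}

lemma sum_sum_mul_diagMN_mul_transpose_self (hU : U ∈ orthogonalGroup (Fin m) ℝ)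
    (hV : V ∈ orthogonalGroup (Fin n) ℝ) (a b : Fin (min m n) → ℝ) :
    ∑ i, ∑ j, (U * diagMN m n a * Vᵀ) i j * (U * diagMN m n b * Vᵀ) i j = ∑ k, a k * b k := by
  rw [sum_sum_mul_diagMN_mul_transpose, (mem_orthogonalGroup_iff' _ _).1 hU,
    (mem_orthogonalGroup_iff' _ _).1 hV, submatrix_one_embedding, submatrix_one_embedding]
  simp [hadamard_apply, one_apply]

lemma frobNorm_mul_diagMN_mul_transpose (hU : U ∈ orthogonalGroup (Fin m) ℝ)
    (hV : V ∈ orthogonalGroup (Fin n) ℝ) (a : Fin (min m n) → ℝ) :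
    frobNorm (U * diagMN m n a * Vᵀ) = √(∑ k, a k ^ 2) := by
  simp only [frobNorm, sq, sum_sum_mul_diagMN_mul_transpose_self hU hV]

lemma sum_sum_mul_diagMN_mul_transpose_le (hU : U ∈ orthogonalGroup (Fin m) ℝ)
    (hU' : U' ∈ orthogonalGroup (Fin m) ℝ) (hV : V ∈ orthogonalGroup (Fin n) ℝ)
    (hV' : V' ∈ orthogonalGroup (Fin n) ℝ) {a b : Fin (min m n) → ℝ} (ha : ∀ k, 0 ≤ a k)
    (hb : ∀ k, 0 ≤ b k) (π : Equiv.Perm (Fin (min m n))) (hab : Monovary (a ∘ π) b) :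
    ∑ i, ∑ j, (U * diagMN m n a * Vᵀ) i j * (U' * diagMN m n b * V'ᵀ) i j ≤
      ∑ k, a (π k) * b k := by
  rw [sum_sum_mul_diagMN_mul_transpose]
  set C := (Uᵀ * U').submatrix (Fin.castLEEmb (min_le_left m n))
    (Fin.castLEEmb (min_le_left m n)) ⊙ (Vᵀ * V').submatrix
      (Fin.castLEEmb (min_le_right m n)) (Fin.castLEEmb (min_le_right m n))
  have hC : IsDoublySubstochastic ((C.map abs).submatrix π (Equiv.refl _)) :=
    (isDoublySubstochastic_abs_hadamard_submatrix (transpose_mul_mem_orthogonalGroup hU hU')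
      (transpose_mul_mem_orthogonalGroup hV hV') _ _).submatrix π (Equiv.refl _)
  calc ∑ l, ∑ k, a l * b k * C l k = ∑ l, ∑ k, a (π l) * b k * C (π l) k :=
        (Equiv.sum_comp π fun l => ∑ k, a l * b k * C l k).symm
    _ ≤ ∑ l, ∑ k, a (π l) * b k * |C (π l) k| := Finset.sum_le_sum fun l _ =>
        Finset.sum_le_sum fun k _ =>
          mul_le_mul_of_nonneg_left (le_abs_self _) (mul_nonneg (ha _) (hb k))
    _ ≤ ∑ k, a (π k) * b k := hC.sum_sum_mul_mul_le_of_monovary (fun l => ha _) hb hab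

lemma sqrt_sum_sq_sub_le_frobNorm_sub (hU : U ∈ orthogonalGroup (Fin m) ℝ)
    (hU' : U' ∈ orthogonalGroup (Fin m) ℝ) (hV : V ∈ orthogonalGroup (Fin n) ℝ)
    (hV' : V' ∈ orthogonalGroup (Fin n) ℝ) {a b : Fin (min m n) → ℝ} (ha : ∀ k, 0 ≤ a k)
    (hb : ∀ k, 0 ≤ b k) (π : Equiv.Perm (Fin (min m n))) (hab : Monovary (a ∘ π) b) :
    √(∑ k, (a (π k) - b k) ^ 2) ≤
      frobNorm (U * diagMN m n a * Vᵀ - U' * diagMN m n b * V'ᵀ) := by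
  refine Real.sqrt_le_sqrt ?_
  set X := U * diagMN m n a * Vᵀ
  set Z := U' * diagMN m n b * V'ᵀ
  have expand : ∑ i, ∑ j, (X - Z) i j ^ 2 =
      ∑ i, ∑ j, X i j * X i j - 2 * ∑ i, ∑ j, X i j * Z i j + ∑ i, ∑ j, Z i j * Z i j := by
    simp only [Matrix.sub_apply, Finset.mul_sum, ← Finset.sum_sub_distrib,
      ← Finset.sum_add_distrib]
    exact Finset.sum_congr rfl fun i _ => Finset.sum_congr rfl fun j _ => by ring
  have expand' : ∑ k, (a (π k) - b k) ^ 2 =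
      ∑ k, a k * a k - 2 * ∑ k, a (π k) * b k + ∑ k, b k * b k := by
    rw [← Equiv.sum_comp π fun k => a k * a k]
    simp only [Finset.mul_sum, ← Finset.sum_sub_distrib, ← Finset.sum_add_distrib]
    exact Finset.sum_congr rfl fun k _ => by ring
  rw [expand, expand', sum_sum_mul_diagMN_mul_transpose_self hU hV,
    sum_sum_mul_diagMN_mul_transpose_self hU' hV']
  linarith [sum_sum_mul_diagMN_mul_transpose_le hU hU' hV hV' ha hb π hab]

end DiagMN

lemma Antitone.apply_eq_zero_of_ncard_le {R : Type*} [Zero R] [PartialOrder R] {p s : ℕ}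
    {f : Fin p → R} (hf : Antitone f) (h0 : ∀ i, 0 ≤ f i) (hs : {i | f i ≠ 0}.ncard ≤ s)
    {j : Fin p} (hj : s ≤ j) : f j = 0 := by
  by_contra hne
  have hpos : 0 < f j := (h0 j).lt_of_ne' hne
  have hsub : Set.Iic j ⊆ {i | f i ≠ 0} := fun i hi => (hpos.trans_le (hf hi)).ne'
  have := (Set.ncard_le_ncard hsub).trans hs
  rw [← Finset.coe_Iic, Set.ncard_coe_finset, Fin.card_Iic] at this
  omega

lemma EuclideanSpace.norm_sub_eq_sqrt {ι : Type*} [Fintype ι] (x y : EuclideanSpace ℝ ι) :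
    ‖x - y‖ = √(∑ i, (x i - y i) ^ 2) := by
  simp [EuclideanSpace.norm_eq]

theorem stmt_15_general
    (m n s : ℕ)
    (K : Set (EuclideanSpace ℝ (Fin (min m n))))
    (hKpos : ∀ σ ∈ K, ∀ i, 0 ≤ σ i)
    (hKperm : ∀ π : Equiv.Perm (Fin (min m n)), ∀ σ ∈ K, WithLp.toLp 2 (fun i => σ (π i)) ∈ K)
    (xs : Matrix (Fin m) (Fin n) ℝ)
    (Us : Matrix (Fin m) (Fin m) ℝ) (Vs : Matrix (Fin n) (Fin n) ℝ)
    (σs : EuclideanSpace ℝ (Fin (min m n)))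
    (hUs : Usᵀ * Us = 1) (hVs : Vsᵀ * Vs = 1)
    (hxsSVD : xs = Us * diagMN m n σs * Vsᵀ)
    (hσsK : σs ∈ K) (hσs_nnz : Set.ncard {i | σs i ≠ 0} ≤ s)
    (z : Matrix (Fin m) (Fin n) ℝ)
    (Uz : Matrix (Fin m) (Fin m) ℝ) (Vz : Matrix (Fin n) (Fin n) ℝ)
    (σz : EuclideanSpace ℝ (Fin (min m n)))
    (hUz : Uzᵀ * Uz = 1) (hVz : Vzᵀ * Vz = 1)
    (hzSVD : z = Uz * diagMN m n σz * Vzᵀ)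
    (hσz_nonneg : ∀ i, 0 ≤ σz i)
    (hσz_sorted : ∀ i j : Fin (min m n), i ≤ j → σz j ≤ σz i)
    (σ' : EuclideanSpace ℝ (Fin (min m n)))
    (hσ'min : ∀ τ ∈ K, (∀ j : Fin (min m n), s ≤ (j : ℕ) → τ j = 0) →
      ‖σ' - σz‖ ≤ ‖τ - σz‖) :
    frobNorm (Uz * diagMN m n σ' * Vzᵀ - z) ≤ frobNorm (xs - z) := by
  have hO : ∀ {k} {U : Matrix (Fin k) (Fin k) ℝ}, Uᵀ * U = 1 → U ∈ orthogonalGroup (Fin k) ℝ :=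
    (mem_orthogonalGroup_iff' _ _).2
  set π := Tuple.sort fun i => -σs i
  have hτ_anti : Antitone (σs ∘ π) := fun _ _ hij =>
    neg_le_neg_iff.1 (Tuple.monotone_sort (fun i => -σs i) hij)
  have hσs0 := hKpos σs hσsK
  have hτ_nnz : {i | σs (π i) ≠ 0}.ncard ≤ s :=
    (Set.ncard_preimage_of_injective_subset_range π.injective (by simp)).trans_le hσs_nnz
  calc frobNorm (Uz * diagMN m n σ' * Vzᵀ - z) = ‖σ' - σz‖ := by
        rw [hzSVD, ← Matrix.sub_mul, ← Matrix.mul_sub, diagMN_sub,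
          frobNorm_mul_diagMN_mul_transpose (hO hUz) (hO hVz), EuclideanSpace.norm_sub_eq_sqrt]
        rfl
    _ ≤ ‖WithLp.toLp 2 (fun i => σs (π i)) - σz‖ := hσ'min _ (hKperm π σs hσsK)
        fun _ hj => hτ_anti.apply_eq_zero_of_ncard_le (fun _ => hσs0 _) hτ_nnz hj
    _ ≤ frobNorm (xs - z) := by
        rw [EuclideanSpace.norm_sub_eq_sqrt, hxsSVD, hzSVD]
        exact sqrt_sum_sq_sub_le_frobNorm_sub (hO hUs) (hO hUz) (hO hVs) (hO hVz) hσs0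
          hσz_nonneg π (hτ_anti.monovary hσz_sorted)

/-- Lemma `wpoMatImp`, spectral version of the greedy sparse projection:
if `x* = U* diag(σ*) V*ᵀ` with `σ* ∈ K` having at most `s` nonzeros, and `σ'` is the
restricted projection of the (sorted) singular values `σ_z` of `z` onto the top-`s`
coordinates of `K`, then `‖U_z diag(σ') V_zᵀ − z‖_F ≤ ‖x* − z‖_F`. -/
theorem stmt_15
    (m n s : ℕ) (hm : 0 < m) (hn : 0 < n)
    (K : Set (EuclideanSpace ℝ (Fin (min m n))))
    (hKconv : Convex ℝ K) (hKcomp : IsCompact K)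
    (hKpos : ∀ σ ∈ K, ∀ i, 0 ≤ σ i)
    (hKperm : ∀ π : Equiv.Perm (Fin (min m n)), ∀ σ ∈ K, WithLp.toLp 2 (fun i => σ (π i)) ∈ K)
    (xs : Matrix (Fin m) (Fin n) ℝ)
    (Us : Matrix (Fin m) (Fin m) ℝ) (Vs : Matrix (Fin n) (Fin n) ℝ)
    (σs : EuclideanSpace ℝ (Fin (min m n)))
    (hUs : Usᵀ * Us = 1) (hVs : Vsᵀ * Vs = 1)
    (hxsSVD : xs = Us * diagMN m n σs * Vsᵀ)
    (hσsK : σs ∈ K) (hσs_nnz : Set.ncard {i | σs i ≠ 0} ≤ s)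
    (z : Matrix (Fin m) (Fin n) ℝ)
    (Uz : Matrix (Fin m) (Fin m) ℝ) (Vz : Matrix (Fin n) (Fin n) ℝ)
    (σz : EuclideanSpace ℝ (Fin (min m n)))
    (hUz : Uzᵀ * Uz = 1) (hVz : Vzᵀ * Vz = 1)
    (hzSVD : z = Uz * diagMN m n σz * Vzᵀ)
    (hσz_nonneg : ∀ i, 0 ≤ σz i)
    (hσz_sorted : ∀ i j : Fin (min m n), i ≤ j → σz j ≤ σz i)
    (σ' : EuclideanSpace ℝ (Fin (min m n)))
    (hσ'K : σ' ∈ K) (hσ'supp : ∀ j : Fin (min m n), s ≤ (j : ℕ) → σ' j = 0)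
    (hσ'min : ∀ τ ∈ K, (∀ j : Fin (min m n), s ≤ (j : ℕ) → τ j = 0) →
      ‖σ' - σz‖ ≤ ‖τ - σz‖) :
    frobNorm (Uz * diagMN m n σ' * Vzᵀ - z) ≤ frobNorm (xs - z) :=
  stmt_15_general m n s K hKpos hKperm xs Us Vs σs hUs hVs hxsSVD hσsK hσs_nnz z Uz Vz σz hUz hVz
    hzSVD hσz_nonneg hσz_sorted σ' hσ'min
end

section
/- Let m, n be positive integers, p = min{m,n}. Let σ* ∈ ℝᵖ be nonnegative and sorted in nonincreasing order, and let z ∈ ℝ^{m×n} have singular value decomposition z = U_z diag(σ_z) V_zᵀ with U_zᵀU_z = I, V_zᵀV_z = I and σ_z nonnegative sorted in nonincreasing order. Then for any U*, V* with U*ᵀU* = I and V*ᵀV* = I, one has ⟨U* diag(σ*) V*ᵀ, z⟩ ≤ Σ_{i=1}^{p} σ*(i)·σ_z(i) = ⟨U_z diag(σ*) V_zᵀ, z⟩, and consequently ‖U_z diag(σ*) V_zᵀ − z‖_F ≤ ‖U* diag(σ*) V*ᵀ − z‖_F. -/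
open Matrix

/-- The trace inner product `⟨A, B⟩ = tr(AᵀB) = ∑ᵢⱼ Aᵢⱼ Bᵢⱼ` on real `m × n` matrices. -/
noncomputable def minner {m n : ℕ} (A B : Matrix (Fin m) (Fin n) ℝ) : ℝ :=
  ∑ i, ∑ j, A i j * B i j

section Aux
open Finset

lemma key_sum (p : ℕ) (a b : ℕ → ℝ) (W : ℕ → ℕ → ℝ)
    (haA : ∀ i, a (i+1) ≤ a i) (hbA : ∀ i, b (i+1) ≤ b i)
    (hap : a p = 0) (hbp : b p = 0)
    (hrow : ∀ i, ∑ j ∈ range p, |W i j| ≤ 1)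
    (hcol : ∀ j, ∑ i ∈ range p, |W i j| ≤ 1) :
    ∑ i ∈ range p, ∑ j ∈ range p, a i * b j * W i j ≤ ∑ i ∈ range p, a i * b i := by
  set α : ℕ → ℝ := fun k => a k - a (k+1) with hαdef
  set β : ℕ → ℝ := fun k => b k - b (k+1) with hβdef
  have hα : ∀ k, 0 ≤ α k := fun k => sub_nonneg.2 (haA k)
  have hβ : ∀ k, 0 ≤ β k := fun k => sub_nonneg.2 (hbA k)
  have tele : ∀ (c : ℕ → ℝ), c p = 0 → ∀ i < p,
      c i = ∑ k ∈ range p, if i ≤ k then c k - c (k+1) else 0 := by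
    intro c hc i hi
    rw [Finset.sum_ite, Finset.sum_const_zero, add_zero]
    have hf : (range p).filter (fun k => i ≤ k) = Ico i p := by
      ext k; simp [Finset.mem_Ico]; omega
    rw [hf, Finset.sum_Ico_eq_sub _ hi.le, Finset.sum_range_sub' c,
      Finset.sum_range_sub' c]
    rw [hc]; ring
  have hA : ∀ i < p, a i = ∑ k ∈ range p, if i ≤ k then α k else 0 := tele a hap
  have hB : ∀ i < p, b i = ∑ k ∈ range p, if i ≤ k then β k else 0 := tele b hbp
  -- T k l
  set T : ℕ → ℕ → ℝ := fun k l =>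
    ∑ i ∈ range p, ∑ j ∈ range p, if i ≤ k ∧ j ≤ l then W i j else 0 with hTdef
  have hLHS : ∑ i ∈ range p, ∑ j ∈ range p, a i * b j * W i j
      = ∑ k ∈ range p, ∑ l ∈ range p, α k * β l * T k l := by
    have h1 : ∑ i ∈ range p, ∑ j ∈ range p, a i * b j * W i j
        = ∑ i ∈ range p, ∑ j ∈ range p, ∑ k ∈ range p, ∑ l ∈ range p,
            ((if i ≤ k then α k else 0) * ((if j ≤ l then β l else 0) * W i j)) := by
      refine Finset.sum_congr rfl fun i hi => Finset.sum_congr rfl fun j hj => ?_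
      rw [mem_range] at hi hj
      rw [hA i hi, hB j hj, Finset.sum_mul, Finset.sum_mul]
      refine Finset.sum_congr rfl fun k _ => ?_
      rw [Finset.mul_sum, Finset.sum_mul]
      refine Finset.sum_congr rfl fun l _ => ?_
      ring
    rw [h1]
    have c1 : ∀ (g : ℕ → ℕ → ℝ), ∑ i ∈ range p, ∑ j ∈ range p, g i j
        = ∑ j ∈ range p, ∑ i ∈ range p, g i j := fun g => Finset.sum_comm
    calc (∑ i ∈ range p, ∑ j ∈ range p, ∑ k ∈ range p, ∑ l ∈ range p,
            ((if i ≤ k then α k else 0) * ((if j ≤ l then β l else 0) * W i j)))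
        = ∑ i ∈ range p, ∑ k ∈ range p, ∑ j ∈ range p, ∑ l ∈ range p,
            ((if i ≤ k then α k else 0) * ((if j ≤ l then β l else 0) * W i j)) :=
          Finset.sum_congr rfl fun i _ => c1 _
      _ = ∑ k ∈ range p, ∑ i ∈ range p, ∑ j ∈ range p, ∑ l ∈ range p,
            ((if i ≤ k then α k else 0) * ((if j ≤ l then β l else 0) * W i j)) := c1 _
      _ = ∑ k ∈ range p, ∑ i ∈ range p, ∑ l ∈ range p, ∑ j ∈ range p,
            ((if i ≤ k then α k else 0) * ((if j ≤ l then β l else 0) * W i j)) :=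
          Finset.sum_congr rfl fun k _ => Finset.sum_congr rfl fun i _ => c1 _
      _ = ∑ k ∈ range p, ∑ l ∈ range p, ∑ i ∈ range p, ∑ j ∈ range p,
            ((if i ≤ k then α k else 0) * ((if j ≤ l then β l else 0) * W i j)) :=
          Finset.sum_congr rfl fun k _ => c1 _
      _ = ∑ k ∈ range p, ∑ l ∈ range p, α k * β l * T k l := ?_
    refine Finset.sum_congr rfl fun k _ => Finset.sum_congr rfl fun l _ => ?_
    rw [hTdef]
    simp only [Finset.mul_sum]
    refine Finset.sum_congr rfl fun i _ => Finset.sum_congr rfl fun j _ => ?_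
    by_cases h1 : i ≤ k <;> by_cases h2 : j ≤ l <;> simp [h1, h2, mul_assoc]
  have hRHS : ∑ i ∈ range p, a i * b i
      = ∑ k ∈ range p, ∑ l ∈ range p, α k * β l * ((min k l : ℕ) + 1 : ℝ) := by
    have h1 : ∑ i ∈ range p, a i * b i
        = ∑ i ∈ range p, ∑ k ∈ range p, ∑ l ∈ range p,
            ((if i ≤ k then α k else 0) * (if i ≤ l then β l else 0)) := by
      refine Finset.sum_congr rfl fun i hi => ?_
      rw [mem_range] at hi
      rw [hA i hi, hB i hi, Finset.sum_mul]
      exact Finset.sum_congr rfl fun k _ => Finset.mul_sum _ _ _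
    have c1 : ∀ (g : ℕ → ℕ → ℝ), ∑ i ∈ range p, ∑ j ∈ range p, g i j
        = ∑ j ∈ range p, ∑ i ∈ range p, g i j := fun g => Finset.sum_comm
    rw [h1]
    calc (∑ i ∈ range p, ∑ k ∈ range p, ∑ l ∈ range p,
            ((if i ≤ k then α k else 0) * (if i ≤ l then β l else 0)))
        = ∑ k ∈ range p, ∑ i ∈ range p, ∑ l ∈ range p,
            ((if i ≤ k then α k else 0) * (if i ≤ l then β l else 0)) := c1 _
      _ = ∑ k ∈ range p, ∑ l ∈ range p, ∑ i ∈ range p,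
            ((if i ≤ k then α k else 0) * (if i ≤ l then β l else 0)) :=
          Finset.sum_congr rfl fun k _ => c1 _
      _ = ∑ k ∈ range p, ∑ l ∈ range p, α k * β l * ((min k l : ℕ) + 1 : ℝ) := ?_
    refine Finset.sum_congr rfl fun k hk => Finset.sum_congr rfl fun l hl => ?_
    rw [mem_range] at hk hl
    have h2 : ∀ i, (if i ≤ k then α k else 0) * (if i ≤ l then β l else 0)
        = if i ≤ min k l then α k * β l else 0 := by
      intro i; by_cases h1 : i ≤ k <;> by_cases h2 : i ≤ l <;>
        simp [h1, h2, le_min_iff] <;> omega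
    simp_rw [h2]
    rw [Finset.sum_ite, Finset.sum_const_zero, add_zero, Finset.sum_const]
    have hf : (range p).filter (fun i => i ≤ min k l) = range (min k l + 1) := by
      ext i; simp; omega
    rw [hf, Finset.card_range, nsmul_eq_mul]
    push_cast; ring
  rw [hLHS, hRHS]
  refine Finset.sum_le_sum fun k hk => Finset.sum_le_sum fun l hl => ?_
  rw [mem_range] at hk hl
  refine mul_le_mul_of_nonneg_left ?_ (mul_nonneg (hα k) (hβ l))
  -- T k l ≤ min k l + 1
  have hT2 : T k l = ∑ i ∈ range (k+1), ∑ j ∈ range (l+1), W i j := by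
    rw [hTdef]
    simp only
    have : ∀ i, (∑ j ∈ range p, if i ≤ k ∧ j ≤ l then W i j else 0)
        = if i ≤ k then ∑ j ∈ range (l+1), W i j else 0 := by
      intro i
      by_cases h : i ≤ k
      · simp only [h, true_and, if_true]
        rw [Finset.sum_ite, Finset.sum_const_zero, add_zero]
        congr 1
        ext j; simp; omega
      · simp [h]
    simp_rw [this]
    rw [Finset.sum_ite, Finset.sum_const_zero, add_zero]
    congr 1
    ext i; simp; omega
  have habs : T k l ≤ ∑ i ∈ range (k+1), ∑ j ∈ range (l+1), |W i j| := by
    rw [hT2]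
    refine Finset.sum_le_sum fun i _ => Finset.sum_le_sum fun j _ => le_abs_self _
  have hsub1 : ∀ i, ∑ j ∈ range (l+1), |W i j| ≤ 1 := by
    intro i
    refine le_trans (Finset.sum_le_sum_of_subset_of_nonneg
      (Finset.range_subset_range.2 (by omega)) (fun j _ _ => abs_nonneg _)) (hrow i)
  have hsub2 : ∀ j, ∑ i ∈ range (k+1), |W i j| ≤ 1 := by
    intro j
    refine le_trans (Finset.sum_le_sum_of_subset_of_nonneg
      (Finset.range_subset_range.2 (by omega)) (fun i _ _ => abs_nonneg _)) (hcol j)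
  have hb1 : T k l ≤ (k + 1 : ℝ) := by
    calc T k l ≤ ∑ i ∈ range (k+1), ∑ j ∈ range (l+1), |W i j| := habs
    _ ≤ ∑ i ∈ range (k+1), 1 := Finset.sum_le_sum fun i _ => hsub1 i
    _ = (k + 1 : ℝ) := by simp
  have hb2 : T k l ≤ (l + 1 : ℝ) := by
    calc T k l ≤ ∑ i ∈ range (k+1), ∑ j ∈ range (l+1), |W i j|:= habs
    _ = ∑ j ∈ range (l+1), ∑ i ∈ range (k+1), |W i j| := Finset.sum_comm
    _ ≤ ∑ j ∈ range (l+1), 1 := Finset.sum_le_sum fun j _ => hsub2 j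
    _ = (l + 1 : ℝ) := by simp
  rcases le_total k l with h | h
  · rw [min_eq_left h]; exact hb1
  · rw [min_eq_right h]; push_cast; exact le_trans hb2 (by norm_num)

variable {m n : ℕ}

lemma diag_col_sum (σ : Fin (min m n) → ℝ) (j : Fin n) (f : Fin m → ℝ) :
    ∑ c : Fin m, diagMN m n σ c j * f c
      = if h : (j : ℕ) < min m n then σ ⟨j, h⟩ * f (Fin.castLE (min_le_left m n) ⟨j, h⟩)
        else 0 := by
  by_cases h : (j : ℕ) < min m n
  · rw [dif_pos h]
    rw [Finset.sum_eq_single (Fin.castLE (min_le_left m n) ⟨(j:ℕ), h⟩)]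
    · show dite _ _ _ * _ = _
      rw [dif_pos (⟨rfl, h⟩ : ((Fin.castLE (min_le_left m n) ⟨(j:ℕ), h⟩ : Fin m) : ℕ) = (j:ℕ)
        ∧ ((Fin.castLE (min_le_left m n) ⟨(j:ℕ), h⟩ : Fin m) : ℕ) < min m n)]
      rfl
    · intro c _ hc
      have hnc : ¬((c : ℕ) = (j : ℕ) ∧ (c : ℕ) < min m n) := by
        rintro ⟨h1, h2⟩
        exact hc (Fin.ext (by simpa using h1))
      show dite _ _ _ * _ = _
      rw [dif_neg hnc, zero_mul]
    · simp
  · rw [dif_neg h]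
    refine Finset.sum_eq_zero fun c _ => ?_
    have hnc : ¬((c : ℕ) = (j : ℕ) ∧ (c : ℕ) < min m n) := by
      rintro ⟨h1, h2⟩; omega
    show dite _ _ _ * _ = _
    rw [dif_neg hnc, zero_mul]

lemma diag_row_sum (σ : Fin (min m n) → ℝ) (a : Fin m) (g : Fin n → ℝ) :
    ∑ b : Fin n, diagMN m n σ a b * g b
      = if h : (a : ℕ) < min m n then σ ⟨a, h⟩ * g (Fin.castLE (min_le_right m n) ⟨a, h⟩)
        else 0 := by
  by_cases h : (a : ℕ) < min m n
  · rw [dif_pos h]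
    rw [Finset.sum_eq_single (Fin.castLE (min_le_right m n) ⟨(a:ℕ), h⟩)]
    · show dite _ _ _ * _ = _
      rw [dif_pos (⟨rfl, h⟩ : ((a : ℕ) = ((Fin.castLE (min_le_right m n) ⟨(a:ℕ), h⟩ : Fin n) : ℕ))
        ∧ (a : ℕ) < min m n)]
    · intro b _ hb
      have hnb : ¬((a : ℕ) = (b : ℕ) ∧ (a : ℕ) < min m n) := by
        rintro ⟨h1, h2⟩
        exact hb (Fin.ext (by simpa using h1.symm))
      show dite _ _ _ * _ = _
      rw [dif_neg hnb, zero_mul]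
    · simp
  · rw [dif_neg h]
    refine Finset.sum_eq_zero fun b _ => ?_
    have hnb : ¬((a : ℕ) = (b : ℕ) ∧ (a : ℕ) < min m n) := by
      rintro ⟨h1, h2⟩; omega
    show dite _ _ _ * _ = _
    rw [dif_neg hnb, zero_mul]

lemma sum_fin_restrict {m p : ℕ} (hpm : p ≤ m) (f : Fin m → ℝ)
    (hf : ∀ a : Fin m, ¬((a : ℕ) < p) → f a = 0) :
    ∑ a : Fin m, f a = ∑ i : Fin p, f (Fin.castLE hpm i) := by
  have him : ∑ a ∈ Finset.univ.image (Fin.castLE hpm), f a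
      = ∑ i : Fin p, f (Fin.castLE hpm i) :=
    Finset.sum_image (fun a _ b _ h => Fin.castLE_injective hpm h)
  rw [← him]
  refine (Finset.sum_subset (Finset.subset_univ _) fun a _ ha => ?_).symm
  refine hf a fun hlt => ha ?_
  exact Finset.mem_image.2 ⟨⟨(a : ℕ), hlt⟩, Finset.mem_univ _, rfl⟩

lemma minner_eq_trace (A B : Matrix (Fin m) (Fin n) ℝ) :
    minner A B = Matrix.trace (Aᵀ * B) := by
  simp only [minner, Matrix.trace, Matrix.diag, Matrix.mul_apply, Matrix.transpose_apply]
  exact Finset.sum_comm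

lemma trace_diag_mul (σ τ : Fin (min m n) → ℝ)
    (M : Matrix (Fin m) (Fin m) ℝ) (N : Matrix (Fin n) (Fin n) ℝ) :
    Matrix.trace ((diagMN m n σ)ᵀ * M * diagMN m n τ * N)
      = ∑ k : Fin (min m n), ∑ i : Fin (min m n),
          σ k * τ i * (M (Fin.castLE (min_le_left m n) k) (Fin.castLE (min_le_left m n) i)
            * N (Fin.castLE (min_le_right m n) i) (Fin.castLE (min_le_right m n) k)) := by
  have regroup : (diagMN m n σ)ᵀ * M * diagMN m n τ * N
      = (diagMN m n σ)ᵀ * (M * (diagMN m n τ * N)) := by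
    simp only [Matrix.mul_assoc]
  rw [regroup, Matrix.trace]
  have inner : ∀ (c : Fin m) (j : Fin n),
      (M * (diagMN m n τ * N)) c j
        = ∑ i : Fin (min m n), M c (Fin.castLE (min_le_left m n) i)
            * (τ i * N (Fin.castLE (min_le_right m n) i) j) := by
    intro c j
    rw [Matrix.mul_apply]
    have h1 : ∀ a : Fin m, (diagMN m n τ * N) a j
        = if h : (a : ℕ) < min m n
          then τ ⟨(a : ℕ), h⟩ * N (Fin.castLE (min_le_right m n) ⟨(a : ℕ), h⟩) j else 0 := by
      intro a
      rw [Matrix.mul_apply]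
      exact diag_row_sum τ a (fun b => N b j)
    simp only [h1]
    rw [sum_fin_restrict (min_le_left m n)
      (f := fun a => M c a * if h : (a : ℕ) < min m n
        then τ ⟨(a : ℕ), h⟩ * N (Fin.castLE (min_le_right m n) ⟨(a : ℕ), h⟩) j else 0)
      (fun a ha => by simp only [dif_neg ha, mul_zero])]
    refine Finset.sum_congr rfl fun i _ => ?_
    have hi : ((Fin.castLE (min_le_left m n) i : Fin m) : ℕ) < min m n := i.isLt
    rw [dif_pos hi]
    rfl
  have step : ∀ j : Fin n,
      Matrix.diag ((diagMN m n σ)ᵀ * (M * (diagMN m n τ * N))) j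
        = if h : (j : ℕ) < min m n then
            σ ⟨(j : ℕ), h⟩ * (M * (diagMN m n τ * N))
              (Fin.castLE (min_le_left m n) ⟨(j : ℕ), h⟩) j else 0 := by
    intro j
    rw [Matrix.diag, Matrix.mul_apply]
    simp only [Matrix.transpose_apply]
    exact diag_col_sum σ j (fun c => (M * (diagMN m n τ * N)) c j)
  simp only [step]
  rw [sum_fin_restrict (min_le_right m n)
    (f := fun j => if h : (j : ℕ) < min m n then
        σ ⟨(j : ℕ), h⟩ * (M * (diagMN m n τ * N))
          (Fin.castLE (min_le_left m n) ⟨(j : ℕ), h⟩) j else 0)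
    (fun j hj => dif_neg hj)]
  refine Finset.sum_congr rfl fun k _ => ?_
  have hk : ((Fin.castLE (min_le_right m n) k : Fin n) : ℕ) < min m n := k.isLt
  rw [dif_pos hk, inner, Finset.mul_sum]
  have hkk : (⟨((Fin.castLE (min_le_right m n) k : Fin n) : ℕ), hk⟩ : Fin (min m n)) = k := rfl
  rw [hkk]
  refine Finset.sum_congr rfl fun i _ => ?_
  ring


variable {m n : ℕ}

lemma trace_rearrange (U U' : Matrix (Fin m) (Fin m) ℝ) (V V' : Matrix (Fin n) (Fin n) ℝ)
    (D D' : Matrix (Fin m) (Fin n) ℝ) :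
    minner (U * D * Vᵀ) (U' * D' * V'ᵀ) = Matrix.trace (Dᵀ * (Uᵀ * U') * D' * (V'ᵀ * V)) := by
  rw [minner_eq_trace]
  have h1 : (U * D * Vᵀ)ᵀ * (U' * D' * V'ᵀ) = V * (Dᵀ * (Uᵀ * (U' * (D' * V'ᵀ)))) := by
    simp only [Matrix.transpose_mul, Matrix.transpose_transpose, Matrix.mul_assoc]
  rw [h1, Matrix.trace_mul_comm]
  congr 1
  simp only [Matrix.mul_assoc]

lemma sum_ident (σ τ : Fin (min m n) → ℝ) :
    ∑ k : Fin (min m n), ∑ i : Fin (min m n),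
        σ k * τ i * ((1 : Matrix (Fin m) (Fin m) ℝ)
            (Fin.castLE (min_le_left m n) k) (Fin.castLE (min_le_left m n) i)
          * (1 : Matrix (Fin n) (Fin n) ℝ)
            (Fin.castLE (min_le_right m n) i) (Fin.castLE (min_le_right m n) k))
      = ∑ k, σ k * τ k := by
  refine Finset.sum_congr rfl fun k _ => ?_
  rw [Finset.sum_eq_single k]
  · simp [Matrix.one_apply]
  · intro i _ hik
    have h1 : Fin.castLE (min_le_left m n) k ≠ Fin.castLE (min_le_left m n) i :=
      fun h => hik (Fin.castLE_injective _ h).symm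
    rw [Matrix.one_apply_ne h1, zero_mul, mul_zero]
  · simp

lemma sq_col_sum {q : ℕ} (M : Matrix (Fin q) (Fin q) ℝ) (hM : Mᵀ * M = 1) (d : Fin q) :
    ∑ c, (M c d) ^ 2 = 1 := by
  have h : (Mᵀ * M) d d = 1 := by rw [hM, Matrix.one_apply_eq]
  rw [Matrix.mul_apply] at h
  simp only [Matrix.transpose_apply] at h
  calc ∑ c, (M c d) ^ 2 = ∑ c, M c d * M c d := by simp [pow_two]
  _ = 1 := h

lemma sq_row_sum {q : ℕ} (M : Matrix (Fin q) (Fin q) ℝ) (hM : M * Mᵀ = 1) (d : Fin q) :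
    ∑ c, (M d c) ^ 2 = 1 := by
  have h : (M * Mᵀ) d d = 1 := by rw [hM, Matrix.one_apply_eq]
  rw [Matrix.mul_apply] at h
  simp only [Matrix.transpose_apply] at h
  calc ∑ c, (M d c) ^ 2 = ∑ c, M d c * M d c := by simp [pow_two]
  _ = 1 := h

lemma sum_castLE_le {q p : ℕ} (hpm : p ≤ q) (f : Fin q → ℝ) (hf : ∀ c, 0 ≤ f c) :
    ∑ i : Fin p, f (Fin.castLE hpm i) ≤ ∑ c : Fin q, f c := by
  have him : ∑ a ∈ Finset.univ.image (Fin.castLE hpm), f a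
      = ∑ i : Fin p, f (Fin.castLE hpm i) :=
    Finset.sum_image (fun a _ b _ h => Fin.castLE_injective hpm h)
  rw [← him]
  exact Finset.sum_le_sum_of_subset_of_nonneg (Finset.subset_univ _) (fun c _ _ => hf c)

lemma abs_cs {p : ℕ} (g h : Fin p → ℝ) (hg : ∑ k, (g k) ^ 2 ≤ 1) (hh : ∑ k, (h k) ^ 2 ≤ 1) :
    ∑ k, |g k * h k| ≤ 1 := by
  have h1 : (∑ k, |g k| * |h k|) ^ 2 ≤ (∑ k, |g k| ^ 2) * ∑ k, |h k| ^ 2 :=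
    Finset.sum_mul_sq_le_sq_mul_sq _ _ _
  simp only [sq_abs] at h1
  have hg0 : (0:ℝ) ≤ ∑ k, (g k) ^ 2 := Finset.sum_nonneg fun k _ => sq_nonneg _
  have hh0 : (0:ℝ) ≤ ∑ k, (h k) ^ 2 := Finset.sum_nonneg fun k _ => sq_nonneg _
  have h3 : (0:ℝ) ≤ ∑ k, |g k| * |h k| :=
    Finset.sum_nonneg fun k _ => mul_nonneg (abs_nonneg _) (abs_nonneg _)
  have he : ∑ k, |g k * h k| = ∑ k, |g k| * |h k| := by simp [abs_mul]
  rw [he]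
  nlinarith

lemma minner_sub_expand (A B : Matrix (Fin m) (Fin n) ℝ) :
    minner (A - B) (A - B) = minner A A - 2 * minner A B + minner B B := by
  have h : ∀ i j, (A i j - B i j) * (A i j - B i j)
      = A i j * A i j - 2 * (A i j * B i j) + B i j * B i j := fun i j => by ring
  simp only [minner, Matrix.sub_apply]
  simp_rw [h, Finset.sum_add_distrib, Finset.sum_sub_distrib, Finset.mul_sum]

lemma frob_eq_sqrt_minner (A : Matrix (Fin m) (Fin n) ℝ) :
    frobNorm A = Real.sqrt (minner A A) := by
  simp [frobNorm, minner, pow_two]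

end Aux

/-- an instance of von Neumann's trace inequality and its consequence:
`⟨U* diag(σ*) V*ᵀ, z⟩ ≤ ∑ᵢ σ*(i)·σ_z(i) = ⟨U_z diag(σ*) V_zᵀ, z⟩`, and hence
`‖U_z diag(σ*) V_zᵀ − z‖_F ≤ ‖U* diag(σ*) V*ᵀ − z‖_F`. -/
theorem stmt_16
    (m n : ℕ) (hm : 0 < m) (hn : 0 < n)
    (σs : Fin (min m n) → ℝ)
    (hσs_nonneg : ∀ i, 0 ≤ σs i)
    (hσs_sorted : ∀ i j : Fin (min m n), i ≤ j → σs j ≤ σs i)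
    (z : Matrix (Fin m) (Fin n) ℝ)
    (Uz : Matrix (Fin m) (Fin m) ℝ) (Vz : Matrix (Fin n) (Fin n) ℝ)
    (σz : Fin (min m n) → ℝ)
    (hUz : Uzᵀ * Uz = 1) (hVz : Vzᵀ * Vz = 1)
    (hzSVD : z = Uz * diagMN m n σz * Vzᵀ)
    (hσz_nonneg : ∀ i, 0 ≤ σz i)
    (hσz_sorted : ∀ i j : Fin (min m n), i ≤ j → σz j ≤ σz i) :
    ∀ (Us : Matrix (Fin m) (Fin m) ℝ) (Vs : Matrix (Fin n) (Fin n) ℝ),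
      Usᵀ * Us = 1 → Vsᵀ * Vs = 1 →
      minner (Us * diagMN m n σs * Vsᵀ) z ≤ ∑ i, σs i * σz i ∧
      ∑ i, σs i * σz i = minner (Uz * diagMN m n σs * Vzᵀ) z ∧
      frobNorm (Uz * diagMN m n σs * Vzᵀ - z) ≤ frobNorm (Us * diagMN m n σs * Vsᵀ - z) := by
  intro Us Vs hUs hVs
  have hUs' : Us * Usᵀ = 1 := mul_eq_one_comm.mp hUs
  have hUz' : Uz * Uzᵀ = 1 := mul_eq_one_comm.mp hUz
  have hVs' : Vs * Vsᵀ = 1 := mul_eq_one_comm.mp hVs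
  have hVz' : Vz * Vzᵀ = 1 := mul_eq_one_comm.mp hVz
  have formula : ∀ (U : Matrix (Fin m) (Fin m) ℝ) (V : Matrix (Fin n) (Fin n) ℝ),
      minner (U * diagMN m n σs * Vᵀ) z
        = ∑ k : Fin (min m n), ∑ i : Fin (min m n), σs k * σz i *
            ((Uᵀ * Uz) (Fin.castLE (min_le_left m n) k) (Fin.castLE (min_le_left m n) i)
              * (Vzᵀ * V) (Fin.castLE (min_le_right m n) i)
                  (Fin.castLE (min_le_right m n) k)) := by
    intro U V
    rw [hzSVD, trace_rearrange, trace_diag_mul]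
  have part2 : ∑ i, σs i * σz i = minner (Uz * diagMN m n σs * Vzᵀ) z := by
    rw [formula, hUz, hVz, sum_ident]
  set P : Matrix (Fin m) (Fin m) ℝ := Usᵀ * Uz with hP
  set Q : Matrix (Fin n) (Fin n) ℝ := Vzᵀ * Vs with hQ
  have hPtP : Pᵀ * P = 1 := by
    have h1 : Pᵀ * P = Uzᵀ * (Us * Usᵀ) * Uz := by
      rw [hP]
      simp only [Matrix.transpose_mul, Matrix.transpose_transpose, Matrix.mul_assoc]
    rw [h1, hUs', Matrix.mul_one, hUz]
  have hPPt : P * Pᵀ = 1 := by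
    have h1 : P * Pᵀ = Usᵀ * (Uz * Uzᵀ) * Us := by
      rw [hP]
      simp only [Matrix.transpose_mul, Matrix.transpose_transpose, Matrix.mul_assoc]
    rw [h1, hUz', Matrix.mul_one, hUs]
  have hQtQ : Qᵀ * Q = 1 := by
    have h1 : Qᵀ * Q = Vsᵀ * (Vz * Vzᵀ) * Vs := by
      rw [hQ]
      simp only [Matrix.transpose_mul, Matrix.transpose_transpose, Matrix.mul_assoc]
    rw [h1, hVz', Matrix.mul_one, hVs]
  have hQQt : Q * Qᵀ = 1 := by
    have h1 : Q * Qᵀ = Vzᵀ * (Vs * Vsᵀ) * Vz := by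
      rw [hQ]
      simp only [Matrix.transpose_mul, Matrix.transpose_transpose, Matrix.mul_assoc]
    rw [h1, hVs', Matrix.mul_one, hVz]
  set a : ℕ → ℝ := fun i => if h : i < min m n then σz ⟨i, h⟩ else 0 with ha
  set b : ℕ → ℝ := fun i => if h : i < min m n then σs ⟨i, h⟩ else 0 with hb
  set W : ℕ → ℕ → ℝ := fun i j =>
    if h : i < min m n ∧ j < min m n then
      P (Fin.castLE (min_le_left m n) ⟨j, h.2⟩) (Fin.castLE (min_le_left m n) ⟨i, h.1⟩)
        * Q (Fin.castLE (min_le_right m n) ⟨i, h.1⟩) (Fin.castLE (min_le_right m n) ⟨j, h.2⟩)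
    else 0 with hW
  have haA : ∀ i, a (i + 1) ≤ a i := by
    intro i
    by_cases h1 : i + 1 < min m n
    · have h0 : i < min m n := by omega
      simp only [ha]
      rw [dif_pos h1, dif_pos h0]
      exact hσz_sorted ⟨i, h0⟩ ⟨i + 1, h1⟩ (by exact Fin.mk_le_mk.mpr (Nat.le_succ i))
    · by_cases h0 : i < min m n
      · simp only [ha]; rw [dif_neg h1, dif_pos h0]; exact hσz_nonneg _
      · simp only [ha]; rw [dif_neg h1, dif_neg h0]
  have hbA : ∀ i, b (i + 1) ≤ b i := by
    intro i
    by_cases h1 : i + 1 < min m n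
    · have h0 : i < min m n := by omega
      simp only [hb]
      rw [dif_pos h1, dif_pos h0]
      exact hσs_sorted ⟨i, h0⟩ ⟨i + 1, h1⟩ (by exact Fin.mk_le_mk.mpr (Nat.le_succ i))
    · by_cases h0 : i < min m n
      · simp only [hb]; rw [dif_neg h1, dif_pos h0]; exact hσs_nonneg _
      · simp only [hb]; rw [dif_neg h1, dif_neg h0]
  have hap : a (min m n) = 0 := by simp only [ha]; rw [dif_neg (lt_irrefl _)]
  have hbp : b (min m n) = 0 := by simp only [hb]; rw [dif_neg (lt_irrefl _)]
  have hrow : ∀ i, ∑ j ∈ Finset.range (min m n), |W i j| ≤ 1 := by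
    intro i
    by_cases hi : i < min m n
    · rw [← Fin.sum_univ_eq_sum_range (fun j => |W i j|)]
      have hWij : ∀ j : Fin (min m n), W i (j : ℕ)
          = P (Fin.castLE (min_le_left m n) j) (Fin.castLE (min_le_left m n) ⟨i, hi⟩)
            * Q (Fin.castLE (min_le_right m n) ⟨i, hi⟩) (Fin.castLE (min_le_right m n) j) := by
        intro j
        simp only [hW]
        rw [dif_pos ⟨hi, j.isLt⟩]
      simp only [hWij]
      apply abs_cs
      · refine le_of_le_of_eq (sum_castLE_le (min_le_left m n)
          (fun c => (P c (Fin.castLE (min_le_left m n) ⟨i, hi⟩)) ^ 2)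
          (fun c => sq_nonneg _)) ?_
        exact sq_col_sum P hPtP _
      · refine le_of_le_of_eq (sum_castLE_le (min_le_right m n)
          (fun c => (Q (Fin.castLE (min_le_right m n) ⟨i, hi⟩) c) ^ 2)
          (fun c => sq_nonneg _)) ?_
        exact sq_row_sum Q hQQt _
    · have h0 : ∀ j, W i j = 0 := by
        intro j; simp only [hW]; rw [dif_neg (fun hc => hi hc.1)]
      simp [h0]
  have hcol : ∀ j, ∑ i ∈ Finset.range (min m n), |W i j| ≤ 1 := by
    intro j
    by_cases hj : j < min m n
    · rw [← Fin.sum_univ_eq_sum_range (fun i => |W i j|)]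
      have hWij : ∀ i : Fin (min m n), W (i : ℕ) j
          = P (Fin.castLE (min_le_left m n) ⟨j, hj⟩) (Fin.castLE (min_le_left m n) i)
            * Q (Fin.castLE (min_le_right m n) i) (Fin.castLE (min_le_right m n) ⟨j, hj⟩) := by
        intro i
        simp only [hW]
        rw [dif_pos ⟨i.isLt, hj⟩]
      simp only [hWij]
      apply abs_cs
      · refine le_of_le_of_eq (sum_castLE_le (min_le_left m n)
          (fun c => (P (Fin.castLE (min_le_left m n) ⟨j, hj⟩) c) ^ 2)
          (fun c => sq_nonneg _)) ?_
        exact sq_row_sum P hPPt _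
      · refine le_of_le_of_eq (sum_castLE_le (min_le_right m n)
          (fun c => (Q c (Fin.castLE (min_le_right m n) ⟨j, hj⟩)) ^ 2)
          (fun c => sq_nonneg _)) ?_
        exact sq_col_sum Q hQtQ _
    · have h0 : ∀ i, W i j = 0 := by
        intro i; simp only [hW]; rw [dif_neg (fun hc => hj hc.2)]
      simp [h0]
  have hkey := key_sum (min m n) a b W haA hbA hap hbp hrow hcol
  have hLHSeq : ∑ i ∈ Finset.range (min m n), ∑ j ∈ Finset.range (min m n), a i * b j * W i j
      = ∑ k : Fin (min m n), ∑ i : Fin (min m n), σs k * σz i *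
          (P (Fin.castLE (min_le_left m n) k) (Fin.castLE (min_le_left m n) i)
            * Q (Fin.castLE (min_le_right m n) i) (Fin.castLE (min_le_right m n) k)) := by
    rw [← Fin.sum_univ_eq_sum_range (fun i => ∑ j ∈ Finset.range (min m n), a i * b j * W i j)]
    have h1 : ∀ i : Fin (min m n), ∑ j ∈ Finset.range (min m n), a (i : ℕ) * b j * W (i : ℕ) j
        = ∑ j : Fin (min m n), a (i : ℕ) * b (j : ℕ) * W (i : ℕ) (j : ℕ) := fun i =>
      (Fin.sum_univ_eq_sum_range (fun j => a (i : ℕ) * b j * W (i : ℕ) j) (min m n)).symm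
    simp only [h1]
    rw [Finset.sum_comm]
    refine Finset.sum_congr rfl fun k _ => Finset.sum_congr rfl fun i _ => ?_
    simp only [ha, hb, hW]
    rw [dif_pos i.isLt, dif_pos k.isLt, dif_pos (⟨i.isLt, k.isLt⟩ : (i:ℕ) < min m n ∧ (k:ℕ) < min m n)]
    simp only [Fin.eta]
    ring
  have hRHSeq : ∑ i ∈ Finset.range (min m n), a i * b i = ∑ i, σs i * σz i := by
    rw [← Fin.sum_univ_eq_sum_range (fun i => a i * b i)]
    refine Finset.sum_congr rfl fun i _ => ?_
    simp only [ha, hb]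
    rw [dif_pos i.isLt, dif_pos i.isLt]
    simp only [Fin.eta]
    ring
  have part1 : minner (Us * diagMN m n σs * Vsᵀ) z ≤ ∑ i, σs i * σz i := by
    rw [formula Us Vs]
    rw [← hRHSeq, ← hLHSeq]
    exact hkey
  refine ⟨part1, part2, ?_⟩
  have hself : ∀ (U : Matrix (Fin m) (Fin m) ℝ) (V : Matrix (Fin n) (Fin n) ℝ),
      Uᵀ * U = 1 → Vᵀ * V = 1 →
      minner (U * diagMN m n σs * Vᵀ) (U * diagMN m n σs * Vᵀ) = ∑ k, σs k * σs k := by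
    intro U V hU hV
    rw [trace_rearrange, trace_diag_mul, hU, hV, sum_ident]
  have e1 : frobNorm (Uz * diagMN m n σs * Vzᵀ - z)
      = Real.sqrt (∑ k, σs k * σs k - 2 * minner (Uz * diagMN m n σs * Vzᵀ) z + minner z z) := by
    rw [frob_eq_sqrt_minner, minner_sub_expand, hself Uz Vz hUz hVz]
  have e2 : frobNorm (Us * diagMN m n σs * Vsᵀ - z)
      = Real.sqrt (∑ k, σs k * σs k - 2 * minner (Us * diagMN m n σs * Vsᵀ) z + minner z z) := by
    rw [frob_eq_sqrt_minner, minner_sub_expand, hself Us Vs hUs hVs]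
  rw [e1, e2]
  apply Real.sqrt_le_sqrt
  have h3 : minner (Us * diagMN m n σs * Vsᵀ) z ≤ minner (Uz * diagMN m n σs * Vzᵀ) z :=
    part2 ▸ part1
  linarith
end

section
/- Let P = {x ∈ ℝⁿ : x ≥ 0, Ax = b} be a compact polytope with vertex set V(P) ⊆ {0,1}ⁿ. Let Q : ℝⁿ → ℝ be convex and differentiable, and let x*, y ∈ P. Suppose: (i) x* = Σ_{j=1}^{n*} δ_j u_j where δ is a probability vector and u₁,…,u_{n*} ∈ V(P); (ii) there exist z ∈ P and Δ_j ∈ [0, δ_j] (j = 1,…,n*) with y = Σ_j (δ_j − Δ_j)u_j + (Σ_j Δ_j)·z, Σ_j Δ_j ≤ √(n*)·‖y − x*‖, and z_k = 0 whenever y_k = 0; (iii) w⁺ minimizes w ↦ ⟨w, ∇Q(y)⟩ over V(P); (iv) w⁻ maximizes w ↦ ⟨w, ∇Q(y)⟩ over {w ∈ V(P) : w_k = 0 whenever y_k = 0}, and each u_j as well as every vertex in a convex decomposition of z lies in the domain of this maximization as appropriate; (v) ‖y − x*‖² ≤ (2/α)·(F(y) − F*) for some α > 0 and a function F with minimum value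 F* = F(x*); (vi) F(y) − F* ≤ (Q(y) − Q(x*)) + (β₂/3)·‖x̄ − x*‖³ for some β₂ ≥ 0 and x̄ ∈ ℝⁿ; and (vii) Q(y) − Q(x*) ≥ (β₂/3)·‖x̄ − x*‖³. Then ⟨w⁻ − w⁺, ∇Q(y)⟩ ≥ √((α/(4n*))·(Q(y) − Q(x*))). -/
/-!
By the first-order convexity inequality the gap `Q y - Q x*` is at most `⟪∇Q(y), y - x*⟫`.
The decomposition of `y` moves mass `Δ_j` from each vertex `u_j` of `x*` onto `z`, so
`y - x* = ∑ Δ_j (z - u_j)`, and each `⟪z - u_j, ∇Q(y)⟫` is at most `⟪w⁻ - w⁺, ∇Q(y)⟫` because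
`z` lies in the hull of the vertices over which `w⁻` maximizes, while `w⁺` minimizes over all
vertices. Hence
`gap ≤ (∑ Δ_j) ⟪w⁻ - w⁺, ∇Q(y)⟫ ≤ √n* ‖y - x*‖ ⟪w⁻ - w⁺, ∇Q(y)⟫`, while quadratic growth and
the two cubic bounds give `(α/4) ‖y - x*‖² ≤ gap`; squaring and dividing by the gap concludes.
-/

open RealInnerProductSpace

theorem ConvexOn.apply_sub_le_of_hasFDerivAt {E : Type*} [NormedAddCommGroup E] [NormedSpace ℝ E]
    {s : Set E} {f : E → ℝ} {f' : E →L[ℝ] ℝ} {x y : E} (hf : ConvexOn ℝ s f) (hx : x ∈ s)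
    (hy : y ∈ s) (hf' : HasFDerivAt f f' x) :
    f' (y - x) ≤ f y - f x := by
  let ℓ : ℝ →ᵃ[ℝ] E := AffineMap.lineMap x y
  have hℓ : HasDerivAt ℓ (y - x) 0 := AffineMap.hasDerivAt_lineMap
  have hconv : ConvexOn ℝ (ℓ ⁻¹' s) (f ∘ ℓ) := hf.comp_affineMap ℓ
  have h := hconv.le_slope_of_hasDerivAt (x := 0) (y := 1) (by simpa [ℓ] using hx)
    (by simpa [ℓ] using hy) one_pos
    (HasFDerivAt.comp_hasDerivAt (0 : ℝ) (by simpa [ℓ] using hf') hℓ)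
  simpa [ℓ, slope_def_field] using h

section InnerProductSpace

variable {E : Type*} [NormedAddCommGroup E] [InnerProductSpace ℝ E]

theorem ConvexOn.sub_le_inner_gradient [CompleteSpace E] {f : E → ℝ} {x y : E}
    (hf : ConvexOn ℝ Set.univ f) (hfx : DifferentiableAt ℝ f x) :
    f x - f y ≤ ⟪gradient f x, x - y⟫ := by
  have := hf.apply_sub_le_of_hasFDerivAt (Set.mem_univ x) (Set.mem_univ y)
    (hasGradientAt_iff_hasFDerivAt.mp hfx.hasGradientAt)
  rw [← neg_sub x y, map_neg] at this
  simp only [InnerProductSpace.toDual_apply_apply] at this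
  linarith

theorem inner_le_of_mem_convexHull {s : Set E} {z g : E} {c : ℝ} (hz : z ∈ convexHull ℝ s)
    (hs : ∀ w ∈ s, ⟪w, g⟫ ≤ c) :
    ⟪z, g⟫ ≤ c :=
  convexHull_min hs (convex_halfSpace_le ⟨fun _ _ => inner_add_left _ _ _,
    fun _ _ => real_inner_smul_left _ _ _⟩ c) hz

theorem inner_sub_sum_smul_le {ι : Type*} (s : Finset ι) {δ Δ : ι → ℝ} {u : ι → E}
    {z wp wm g : E} (hΔ : ∀ j ∈ s, 0 ≤ Δ j)
    (hu : ∀ j ∈ s, ⟪wp, g⟫ ≤ ⟪u j, g⟫) (hz : ⟪z, g⟫ ≤ ⟪wm, g⟫) :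
    ⟪(∑ j ∈ s, (δ j - Δ j) • u j + (∑ j ∈ s, Δ j) • z) - ∑ j ∈ s, δ j • u j, g⟫
      ≤ (∑ j ∈ s, Δ j) * ⟪wm - wp, g⟫ := by
  have hdiff : (∑ j ∈ s, (δ j - Δ j) • u j + (∑ j ∈ s, Δ j) • z) - ∑ j ∈ s, δ j • u j
      = ∑ j ∈ s, Δ j • (z - u j) := by
    simp only [sub_smul, smul_sub, Finset.sum_sub_distrib, Finset.sum_smul]
    abel
  rw [hdiff, sum_inner, Finset.sum_mul]
  refine Finset.sum_le_sum fun j hj => ?_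
  rw [real_inner_smul_left]
  refine mul_le_mul_of_nonneg_left ?_ (hΔ j hj)
  rw [inner_sub_left, inner_sub_left]
  linarith [hu j hj]

end InnerProductSpace

theorem Real.sqrt_mul_le_of_le_mul {c g S G : ℝ} (hc : 0 ≤ c) (hG : 0 ≤ G) (hg : 0 ≤ g)
    (hgS : g ≤ S * G) (hcS : c * S ^ 2 ≤ g) :
    √(c * g) ≤ G := by
  rw [Real.sqrt_le_left hG]
  rcases hg.eq_or_lt with rfl | hg
  · simpa using sq_nonneg G
  have hsq : g ^ 2 ≤ (S * G) ^ 2 := pow_le_pow_left₀ hg.le hgS 2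
  refine le_of_mul_le_mul_right ?_ hg
  nlinarith [mul_le_mul_of_nonneg_right hcS (sq_nonneg G)]

theorem stmt_17_general
    (n nstar : ℕ)
    (V : Set (EuclideanSpace ℝ (Fin n)))
    (Q : EuclideanSpace ℝ (Fin n) → ℝ)
    (hQconv : ConvexOn ℝ Set.univ Q) (hQdiff : Differentiable ℝ Q)
    (xs y : EuclideanSpace ℝ (Fin n))
    -- (i) convex decomposition of x* into n* vertices
    (δ : Fin nstar → ℝ) (u : Fin nstar → EuclideanSpace ℝ (Fin n))
    (hδsum : ∑ j, δ j = 1) (huV : ∀ j, u j ∈ V)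
    (hxs_dec : xs = ∑ j, δ j • u j)
    -- (ii) decomposition of y relative to x*
    (z : EuclideanSpace ℝ (Fin n))
    (Δ : Fin nstar → ℝ) (hΔ : ∀ j, 0 ≤ Δ j ∧ Δ j ≤ δ j)
    (hy_dec : y = (∑ j, (δ j - Δ j) • u j) + (∑ j, Δ j) • z)
    (hΔsum : ∑ j, Δ j ≤ Real.sqrt (nstar : ℝ) * ‖y - xs‖)
    -- (iii) Frank-Wolfe direction
    (wp : EuclideanSpace ℝ (Fin n))
    (hwp : ∀ w ∈ V, ⟪wp, gradient Q y⟫ ≤ ⟪w, gradient Q y⟫)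
    -- (iv) away direction over vertices vanishing wherever y vanishes
    (wm : EuclideanSpace ℝ (Fin n)) (hwmV : wm ∈ V)
    (hwm : ∀ w ∈ V, (∀ k, y k = 0 → w k = 0) → ⟪w, gradient Q y⟫ ≤ ⟪wm, gradient Q y⟫)
    (hz_hull : z ∈ convexHull ℝ {w | w ∈ V ∧ ∀ k, y k = 0 → w k = 0})
    -- (v) quadratic growth for F, with minimum value F* = F(x*)
    (F : EuclideanSpace ℝ (Fin n) → ℝ) (α : ℝ) (hα : 0 < α)
    (hQG : ‖y - xs‖ ^ 2 ≤ (2 / α) * (F y - F xs))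
    -- (vi), (vii)
    (β₂ : ℝ) (xb : EuclideanSpace ℝ (Fin n))
    (hFQ : F y - F xs ≤ (Q y - Q xs) + (β₂ / 3) * ‖xb - xs‖ ^ 3)
    (hgap : (β₂ / 3) * ‖xb - xs‖ ^ 3 ≤ Q y - Q xs) :
    Real.sqrt ((α / (4 * (nstar : ℝ))) * (Q y - Q xs)) ≤ ⟪wm - wp, gradient Q y⟫ := by
  set g := gradient Q y
  set S := ∑ j, Δ j
  have hn : (0 : ℝ) < nstar := Nat.cast_pos.mpr <| Nat.pos_of_ne_zero <| by
    rintro rfl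
    simp at hδsum
  have hG : 0 ≤ ⟪wm - wp, g⟫ := by
    rw [inner_sub_left, sub_nonneg]
    exact hwp wm hwmV
  have hz : ⟪z, g⟫ ≤ ⟪wm, g⟫ :=
    inner_le_of_mem_convexHull hz_hull fun w hw => hwm w hw.1 hw.2
  have hgap_le : Q y - Q xs ≤ S * ⟪wm - wp, g⟫ :=
    calc Q y - Q xs ≤ ⟪g, y - xs⟫ := hQconv.sub_le_inner_gradient (hQdiff y)
      _ = ⟪(∑ j, (δ j - Δ j) • u j + S • z) - ∑ j, δ j • u j, g⟫ := by
          rw [real_inner_comm, ← hy_dec, ← hxs_dec]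
      _ ≤ S * ⟪wm - wp, g⟫ :=
          inner_sub_sum_smul_le _ (fun j _ => (hΔ j).1) (fun j _ => hwp (u j) (huV j)) hz
  have hdist : α / 4 * ‖y - xs‖ ^ 2 ≤ Q y - Q xs :=
    calc α / 4 * ‖y - xs‖ ^ 2 ≤ α / 4 * ((2 / α) * (F y - F xs)) := by gcongr
      _ = (F y - F xs) / 2 := by field_simp; ring
      _ ≤ Q y - Q xs := by linarith
  have hS2 : S ^ 2 ≤ nstar * ‖y - xs‖ ^ 2 :=
    calc S ^ 2 ≤ (Real.sqrt nstar * ‖y - xs‖) ^ 2 :=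
          pow_le_pow_left₀ (Finset.sum_nonneg fun j _ => (hΔ j).1) hΔsum 2
      _ = nstar * ‖y - xs‖ ^ 2 := by rw [mul_pow, Real.sq_sqrt hn.le]
  refine Real.sqrt_mul_le_of_le_mul (by positivity) hG (le_trans (by positivity) hdist) hgap_le ?_
  calc α / (4 * nstar) * S ^ 2 ≤ α / (4 * nstar) * (nstar * ‖y - xs‖ ^ 2) := by gcongr
    _ = α / 4 * ‖y - xs‖ ^ 2 := by field_simp
    _ ≤ Q y - Q xs := hdist

/-- Lemma `dicg:ie`, key inner-product bound for the
decomposition-invariant conditional gradient step: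
`⟨w⁻ − w⁺, ∇Q(y)⟩ ≥ √((α/(4n*))·(Q(y) − Q(x*)))`. -/
theorem stmt_17
    (n m nstar : ℕ) (A : Matrix (Fin m) (Fin n) ℝ) (b : Fin m → ℝ)
    (P : Set (EuclideanSpace ℝ (Fin n)))
    (hP : P = {x : EuclideanSpace ℝ (Fin n) | (∀ i, 0 ≤ x i) ∧ A.mulVec x = b})
    (hPcomp : IsCompact P)
    (V : Set (EuclideanSpace ℝ (Fin n)))
    (hV : V = Set.extremePoints ℝ P)
    (hV01 : ∀ w ∈ V, ∀ i, w i = 0 ∨ w i = 1)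
    (Q : EuclideanSpace ℝ (Fin n) → ℝ)
    (hQconv : ConvexOn ℝ Set.univ Q) (hQdiff : Differentiable ℝ Q)
    (xs y : EuclideanSpace ℝ (Fin n)) (hxsP : xs ∈ P) (hyP : y ∈ P)
    -- (i) convex decomposition of x* into n* vertices
    (δ : Fin nstar → ℝ) (u : Fin nstar → EuclideanSpace ℝ (Fin n))
    (hδ0 : ∀ j, 0 ≤ δ j) (hδsum : ∑ j, δ j = 1) (huV : ∀ j, u j ∈ V)
    (hxs_dec : xs = ∑ j, δ j • u j)
    -- (ii) decomposition of y relative to x*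
    (z : EuclideanSpace ℝ (Fin n)) (hzP : z ∈ P)
    (Δ : Fin nstar → ℝ) (hΔ : ∀ j, 0 ≤ Δ j ∧ Δ j ≤ δ j)
    (hy_dec : y = (∑ j, (δ j - Δ j) • u j) + (∑ j, Δ j) • z)
    (hΔsum : ∑ j, Δ j ≤ Real.sqrt (nstar : ℝ) * ‖y - xs‖)
    (hz_supp : ∀ k, y k = 0 → z k = 0)
    -- (iii) Frank-Wolfe direction
    (wp : EuclideanSpace ℝ (Fin n)) (hwpV : wp ∈ V)
    (hwp : ∀ w ∈ V, ⟪wp, gradient Q y⟫ ≤ ⟪w, gradient Q y⟫)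
    -- (iv) away direction over vertices vanishing wherever y vanishes
    (wm : EuclideanSpace ℝ (Fin n)) (hwmV : wm ∈ V)
    (hwm0 : ∀ k, y k = 0 → wm k = 0)
    (hwm : ∀ w ∈ V, (∀ k, y k = 0 → w k = 0) → ⟪w, gradient Q y⟫ ≤ ⟪wm, gradient Q y⟫)
    (hz_hull : z ∈ convexHull ℝ {w | w ∈ V ∧ ∀ k, y k = 0 → w k = 0})
    -- (v) quadratic growth for F, with minimum value F* = F(x*)
    (F : EuclideanSpace ℝ (Fin n) → ℝ) (α : ℝ) (hα : 0 < α)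
    (hFmin : ∀ v ∈ P, F xs ≤ F v)
    (hQG : ‖y - xs‖ ^ 2 ≤ (2 / α) * (F y - F xs))
    -- (vi), (vii)
    (β₂ : ℝ) (hβ₂ : 0 ≤ β₂) (xb : EuclideanSpace ℝ (Fin n))
    (hFQ : F y - F xs ≤ (Q y - Q xs) + (β₂ / 3) * ‖xb - xs‖ ^ 3)
    (hgap : (β₂ / 3) * ‖xb - xs‖ ^ 3 ≤ Q y - Q xs) :
    Real.sqrt ((α / (4 * (nstar : ℝ))) * (Q y - Q xs)) ≤ ⟪wm - wp, gradient Q y⟫ :=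
  stmt_17_general n nstar V Q hQconv hQdiff xs y δ u hδsum huV hxs_dec z Δ hΔ hy_dec hΔsum wp hwp wm
    hwmV hwm hz_hull F α hα hQG β₂ xb hFQ hgap
end

section
/- Let E be a real inner product space, P ⊆ E a nonempty set of Euclidean diameter at most D, and Q : E → ℝ convex and differentiable satisfying the smoothness inequality Q(b) ≤ Q(a) + ⟨∇Q(a), b − a⟩ + (β̃/2)‖b − a‖² for all a, b ∈ P. Let x̄ ∈ P and let y₁ ∈ P minimize w ↦ ⟨w, ∇Q(x̄)⟩ over P. Then for every u ∈ P: Q(y₁) − Q(u) ≤ β̃·D²/2. -/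
open RealInnerProductSpace

lemma ConvexOn.add_apply_sub_le_of_hasFDerivAt {E : Type*} [NormedAddCommGroup E]
    [NormedSpace ℝ E] {s : Set E} {f : E → ℝ} {f' : E →L[ℝ] ℝ} {x y : E}
    (hf : ConvexOn ℝ s f) (hx : x ∈ s) (hy : y ∈ s) (hf' : HasFDerivAt f f' x) :
    f x + f' (y - x) ≤ f y := by
  set ℓ : ℝ →ᵃ[ℝ] E := AffineMap.lineMap x y
  have hconv : ConvexOn ℝ (ℓ ⁻¹' s) (f ∘ ℓ) := hf.comp_affineMap ℓ
  have hderiv : HasDerivAt (f ∘ ℓ) (f' (y - x)) 0 := by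
    have hℓ : HasDerivAt ℓ (y - x) 0 := AffineMap.hasDerivAt_lineMap
    exact (by simpa [ℓ] using hf' : HasFDerivAt f f' (ℓ 0)).comp_hasDerivAt 0 hℓ
  have hslope := hconv.le_slope_of_hasDerivAt (x := 0) (y := 1) (by simpa [ℓ] using hx)
    (by simpa [ℓ] using hy) zero_lt_one hderiv
  simp only [slope, Function.comp_apply, sub_zero, inv_one, one_smul, vsub_eq_sub, ℓ,
    AffineMap.lineMap_apply_zero, AffineMap.lineMap_apply_one] at hslope
  linarith

theorem stmt_19_general
    {E : Type*} [NormedAddCommGroup E] [InnerProductSpace ℝ E]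
    (P : Set E)
    (D βt : ℝ) (hβt : 0 < βt)
    (hD : ∀ a ∈ P, ∀ c ∈ P, ‖a - c‖ ≤ D)
    (Q : E → ℝ)
    (hQconv : ConvexOn ℝ Set.univ Q) (hQdiff : Differentiable ℝ Q)
    (hsmooth : ∀ a ∈ P, ∀ c ∈ P,
      Q c ≤ Q a + fderiv ℝ Q a (c - a) + (βt / 2) * ‖c - a‖ ^ 2)
    (xb : E) (hxb : xb ∈ P)
    (y1 : E) (hy1P : y1 ∈ P)
    (hy1 : ∀ w ∈ P, fderiv ℝ Q xb y1 ≤ fderiv ℝ Q xb w) :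
    ∀ u ∈ P, Q y1 - Q u ≤ βt * D ^ 2 / 2 := by
  intro u hu
  have hlin : fderiv ℝ Q xb (y1 - xb) ≤ fderiv ℝ Q xb (u - xb) := by
    simpa only [map_sub] using sub_le_sub_right (hy1 u hu) _
  have hdist : ‖y1 - xb‖ ^ 2 ≤ D ^ 2 := by
    gcongr
    exact hD y1 hy1P xb hxb
  have htangent : Q xb + fderiv ℝ Q xb (u - xb) ≤ Q u :=
    hQconv.add_apply_sub_le_of_hasFDerivAt trivial trivial (hQdiff xb).hasFDerivAt
  calc Q y1 - Q u
      ≤ Q xb + fderiv ℝ Q xb (y1 - xb) + βt / 2 * ‖y1 - xb‖ ^ 2 - Q u :=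
        sub_le_sub_right (hsmooth xb hxb y1 hy1P) _
    _ ≤ Q xb + fderiv ℝ Q xb (u - xb) + βt / 2 * D ^ 2 - Q u := by gcongr
    _ ≤ βt * D ^ 2 / 2 := by linarith

/-- initial gap bound for the linear-minimization (Frank–Wolfe) start:
if `y₁` minimizes `w ↦ ⟨w, ∇Q(x̄)⟩` over a set `P` of diameter at most `D`, then
`Q(y₁) − Q(u) ≤ β̃D²/2` for every `u ∈ P`. -/
theorem stmt_19
    {E : Type*} [NormedAddCommGroup E] [InnerProductSpace ℝ E]
    (P : Set E) (hPne : P.Nonempty)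
    (D βt : ℝ) (hβt : 0 < βt)
    (hD : ∀ a ∈ P, ∀ c ∈ P, ‖a - c‖ ≤ D)
    (Q : E → ℝ)
    (hQconv : ConvexOn ℝ Set.univ Q) (hQdiff : Differentiable ℝ Q)
    (hsmooth : ∀ a ∈ P, ∀ c ∈ P,
      Q c ≤ Q a + fderiv ℝ Q a (c - a) + (βt / 2) * ‖c - a‖ ^ 2)
    (xb : E) (hxb : xb ∈ P)
    (y1 : E) (hy1P : y1 ∈ P)
    (hy1 : ∀ w ∈ P, fderiv ℝ Q xb y1 ≤ fderiv ℝ Q xb w) :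
    ∀ u ∈ P, Q y1 - Q u ≤ βt * D ^ 2 / 2 :=
  stmt_19_general P D βt hβt hD Q hQconv hQdiff hsmooth xb hxb y1 hy1P hy1
end
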